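/- arXiv:math/9904082 — 2 statements merged into one kernel-verified Lean document; each statement's English description precedes it below -/
import Mathlib

section
/- Let (H, S) be a Hopf V-face algebra over a field K. Then S is an algebra antihomomorphism (S(ab) = S(b)S(a), S(1) = 1) and a coalgebra antihomomorphism (Δ(S(a)) = Σ_{(a)} S(a_(2)) ⊗ S(a_(1)), ε∘S = ε), and S(e̊_λ e_μ) = e̊_μ e_λ for all λ, μ ∈ V. -/
open scoped TensorProduct BigOperators

/-- A `V`-face algebra over `K`: an associative unital `K`-algebra `H` which is also a
coassociative counital coalgebra, together with face idempotents `e λ`, `eo λ` (`λ ∈ V`)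
satisfying the axioms of Hayashi. -/
structure FaceAlgebra (K V H : Type*) [CommRing K] [Fintype V] [DecidableEq V]
    [Ring H] [Algebra K H] where
  comul : H →ₗ[K] H ⊗[K] H
  counit : H →ₗ[K] K
  coassoc : ∀ a : H,
    (TensorProduct.assoc K H H H) ((LinearMap.rTensor H comul) (comul a)) =
      (LinearMap.lTensor H comul) (comul a)
  counit_comul : ∀ a : H,
    (TensorProduct.lid K H) ((LinearMap.rTensor H counit) (comul a)) = a
  comul_counit : ∀ a : H,
    (TensorProduct.rid K H) ((LinearMap.lTensor H counit) (comul a)) = a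
  e : V → H
  eo : V → H
  comul_mul : ∀ a b : H, comul (a * b) = comul a * comul b
  e_mul_e : ∀ l m : V, e l * e m = if l = m then e l else 0
  eo_mul_eo : ∀ l m : V, eo l * eo m = if l = m then eo l else 0
  e_mul_eo : ∀ l m : V, e l * eo m = eo m * e l
  sum_e : ∑ n : V, e n = 1
  sum_eo : ∑ n : V, eo n = 1
  comul_eo_e : ∀ l m : V, comul (eo l * e m) = ∑ n : V, (eo l * e n) ⊗ₜ[K] (eo n * e m)
  counit_eo_e : ∀ l m : V, counit (eo l * e m) = if l = m then 1 else 0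
  counit_mul : ∀ a b : H, counit (a * b) = ∑ n : V, counit (a * e n) * counit (eo n * b)

/-- `S` is an antipode of the `V`-face algebra `F`:
`Σ_(a) S(a_(1))a_(2) = Σ_ν ε(a e_ν) e_ν`, `Σ_(a) a_(1)S(a_(2)) = Σ_ν ε(e_ν a) e̊_ν`,
and `Σ_(a) S(a_(1))a_(2)S(a_(3)) = S(a)`. -/
def FaceAlgebra.IsAntipode {K V H : Type*} [CommRing K] [Fintype V] [DecidableEq V]
    [Ring H] [Algebra K H] (F : FaceAlgebra K V H) (S : H →ₗ[K] H) : Prop :=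
  (∀ a : H, LinearMap.mul' K H ((LinearMap.rTensor H S) (F.comul a)) =
      ∑ n : V, F.counit (a * F.e n) • F.e n) ∧
  (∀ a : H, LinearMap.mul' K H ((LinearMap.lTensor H S) (F.comul a)) =
      ∑ n : V, F.counit (F.e n * a) • F.eo n) ∧
  (∀ a : H, LinearMap.mul' K H ((LinearMap.lTensor H S)
      ((LinearMap.rTensor H (LinearMap.mul' K H ∘ₗ LinearMap.rTensor H S))
        ((LinearMap.rTensor H F.comul) (F.comul a)))) = S a)

namespace FaceProof
set_option linter.unusedSectionVars false
set_option synthInstance.maxHeartbeats 1000000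
set_option maxHeartbeats 1600000

open TensorProduct LinearMap

variable {K V H : Type*} [CommRing K] [Fintype V] [DecidableEq V] [Ring H] [Algebra K H]

/-- Left contraction `x ⊗ w ↦ ψ x • w`. -/
noncomputable def CLg {N : Type*} [AddCommGroup N] [Module K N] (ψ : H →ₗ[K] K) :
    H ⊗[K] N →ₗ[K] N := (TensorProduct.lid K N).toLinearMap ∘ₗ rTensor N ψ

/-- Right contraction `w ⊗ y ↦ ψ y • w`. -/
noncomputable def CRg {N : Type*} [AddCommGroup N] [Module K N] (ψ : H →ₗ[K] K) :
    N ⊗[K] H →ₗ[K] N := (TensorProduct.rid K N).toLinearMap ∘ₗ lTensor N ψ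

@[simp] lemma CLg_tmul {N : Type*} [AddCommGroup N] [Module K N] (ψ : H →ₗ[K] K)
    (x : H) (w : N) : CLg ψ (x ⊗ₜ w) = ψ x • w := by
  simp [CLg]

@[simp] lemma CRg_tmul {N : Type*} [AddCommGroup N] [Module K N] (ψ : H →ₗ[K] K)
    (w : N) (y : H) : CRg ψ (w ⊗ₜ y) = ψ y • w := by
  simp [CRg]

lemma CLg_nat {N N' : Type*} [AddCommGroup N] [Module K N] [AddCommGroup N'] [Module K N']
    (g : N →ₗ[K] N') (ψ : H →ₗ[K] K) :
    g ∘ₗ CLg ψ = CLg ψ ∘ₗ lTensor H g := by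
  apply TensorProduct.ext'; intro x w; simp

lemma CRg_nat {N N' : Type*} [AddCommGroup N] [Module K N] [AddCommGroup N'] [Module K N']
    (g : N →ₗ[K] N') (ψ : H →ₗ[K] K) :
    g ∘ₗ CRg ψ = CRg ψ ∘ₗ rTensor H g := by
  apply TensorProduct.ext'; intro w y; simp

/-- `CLg` on `H ⊗ (N₁ ⊗ N₂)` in terms of `CLg` on `H ⊗ N₁`. -/
lemma CLg_assoc {N₁ N₂ : Type*} [AddCommGroup N₁] [Module K N₁] [AddCommGroup N₂] [Module K N₂]
    (ψ : H →ₗ[K] K) :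
    (CLg ψ : H ⊗[K] (N₁ ⊗[K] N₂) →ₗ[K] N₁ ⊗[K] N₂)
      = rTensor N₂ (CLg ψ) ∘ₗ (TensorProduct.assoc K H N₁ N₂).symm.toLinearMap := by
  apply TensorProduct.ext'; intro x w
  induction w using TensorProduct.induction_on with
  | zero => simp
  | tmul y z => simp [TensorProduct.assoc_symm_tmul, smul_tmul']
  | add u v hu hv => simp only [tmul_add, map_add, smul_add] at *; rw [hu, hv]

/-- `CRg` on `(N₁ ⊗ N₂) ⊗ H` in terms of `CRg` on `N₂ ⊗ H`. -/
lemma CRg_assoc {N₁ N₂ : Type*} [AddCommGroup N₁] [Module K N₁] [AddCommGroup N₂] [Module K N₂]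
    (ψ : H →ₗ[K] K) :
    (CRg ψ : (N₁ ⊗[K] N₂) ⊗[K] H →ₗ[K] N₁ ⊗[K] N₂)
      = lTensor N₁ (CRg ψ) ∘ₗ (TensorProduct.assoc K N₁ N₂ H).toLinearMap := by
  apply TensorProduct.ext_threefold; intro x y z
  simp [TensorProduct.assoc_tmul, tmul_smul]

variable (F : FaceAlgebra K V H)

lemma e_eq_sum (n : V) : F.e n = ∑ l, F.eo l * F.e n := by
  rw [← Finset.sum_mul, F.sum_eo, one_mul]

lemma eo_eq_sum (n : V) : F.eo n = ∑ m, F.eo n * F.e m := by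
  rw [← Finset.mul_sum, F.sum_e, mul_one]

lemma counit_e (n : V) : F.counit (F.e n) = 1 := by
  rw [e_eq_sum, map_sum]
  simp [F.counit_eo_e]

lemma counit_eo (n : V) : F.counit (F.eo n) = 1 := by
  rw [eo_eq_sum, map_sum]
  simp [F.counit_eo_e]

lemma counit_mul_eoe (a : H) (l m : V) :
    F.counit (a * (F.eo l * F.e m)) = if l = m then F.counit (a * F.e m) else 0 := by
  rw [F.counit_mul]
  have h : ∀ n : V, F.counit (F.eo n * (F.eo l * F.e m))
      = if n = l then (if l = m then 1 else 0) else 0 := by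
    intro n
    rw [← mul_assoc, F.eo_mul_eo]
    split_ifs with h1 h2
    · subst h1; rw [F.counit_eo_e, if_pos h2]
    · subst h1; rw [F.counit_eo_e, if_neg h2]
    · simp
  simp only [h, mul_ite, mul_one, mul_zero]
  rw [Finset.sum_ite_eq' Finset.univ l]
  simp only [Finset.mem_univ, if_true, mul_ite, mul_one, mul_zero]
  split_ifs with h1
  · subst h1; rfl
  · rfl

lemma counit_eoe_mul (l m : V) (a : H) :
    F.counit ((F.eo l * F.e m) * a) = if l = m then F.counit (F.eo m * a) else 0 := by
  rw [F.counit_mul]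
  have h : ∀ n : V, F.counit ((F.eo l * F.e m) * F.e n)
      = if m = n then (if l = m then 1 else 0) else 0 := by
    intro n
    rw [mul_assoc, F.e_mul_e]
    split_ifs with h1 h2
    · subst h1; rw [F.counit_eo_e, if_pos h2]
    · subst h1; rw [F.counit_eo_e, if_neg h2]
    · rw [mul_zero, map_zero]
  simp only [h, ite_mul, one_mul, zero_mul]
  rw [Finset.sum_ite_eq Finset.univ m]
  simp only [Finset.mem_univ, if_true, ite_mul, one_mul, zero_mul]

lemma counit_mul_eo (a : H) (n : V) : F.counit (a * F.eo n) = F.counit (a * F.e n) := by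
  conv_lhs => rw [eo_eq_sum F n, Finset.mul_sum, map_sum]
  simp only [counit_mul_eoe F]
  rw [Finset.sum_ite_eq Finset.univ n]
  simp

lemma counit_e_mul (n : V) (a : H) : F.counit (F.e n * a) = F.counit (F.eo n * a) := by
  conv_lhs => rw [e_eq_sum F n, Finset.sum_mul, map_sum]
  simp only [counit_eoe_mul F]
  rw [Finset.sum_ite_eq' Finset.univ n]
  simp

lemma counit_expand_r (a : H) : F.counit a = ∑ n, F.counit (a * F.e n) := by
  conv_lhs => rw [← mul_one a, ← F.sum_e, Finset.mul_sum, map_sum]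

lemma counit_expand_l (a : H) : F.counit a = ∑ n, F.counit (F.e n * a) := by
  conv_lhs => rw [← one_mul a, ← F.sum_e, Finset.sum_mul, map_sum]

lemma counit_expand_lo (a : H) : F.counit a = ∑ n, F.counit (F.eo n * a) := by
  conv_lhs => rw [← one_mul a, ← F.sum_eo, Finset.sum_mul, map_sum]


lemma sum_comm₃ {β : Type*} [AddCommMonoid β] (T : V → V → V → β) :
    ∑ l : V, ∑ m : V, ∑ ν : V, T l m ν = ∑ ν : V, ∑ l : V, ∑ m : V, T l m ν := by
  calc ∑ l : V, ∑ m : V, ∑ ν : V, T l m ν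
      = ∑ l : V, ∑ ν : V, ∑ m : V, T l m ν := Finset.sum_congr rfl fun l _ => Finset.sum_comm
    _ = ∑ ν : V, ∑ l : V, ∑ m : V, T l m ν := Finset.sum_comm

lemma one_eq_double_sum : (1 : H) = ∑ l, ∑ m, F.eo l * F.e m := by
  have h : (1 : H) = (∑ l, F.eo l) * (∑ m, F.e m) := by rw [F.sum_eo, F.sum_e, one_mul]
  rw [h, Finset.sum_mul]
  simp_rw [Finset.mul_sum]

lemma comul_one' : F.comul 1 = ∑ n, F.e n ⊗ₜ[K] F.eo n := by
  conv_lhs => rw [one_eq_double_sum F]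
  rw [map_sum]
  simp_rw [map_sum, F.comul_eo_e]
  rw [sum_comm₃ (fun l m ν => (F.eo l * F.e ν) ⊗ₜ[K] (F.eo ν * F.e m))]
  refine Finset.sum_congr rfl fun ν _ => ?_
  have h1 : ∀ l : V, ∑ m, (F.eo l * F.e ν) ⊗ₜ[K] (F.eo ν * F.e m)
      = (F.eo l * F.e ν) ⊗ₜ[K] F.eo ν := by
    intro l; rw [← tmul_sum, ← eo_eq_sum]
  rw [Finset.sum_congr rfl fun l _ => h1 l, ← sum_tmul, ← e_eq_sum]

lemma comul_e (n : V) : F.comul (F.e n) = ∑ ν, F.e ν ⊗ₜ[K] (F.eo ν * F.e n) := by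
  conv_lhs => rw [e_eq_sum F n]
  rw [map_sum]
  simp_rw [F.comul_eo_e]
  rw [Finset.sum_comm]
  refine Finset.sum_congr rfl fun ν _ => ?_
  rw [← sum_tmul, ← e_eq_sum]

lemma comul_eo (n : V) : F.comul (F.eo n) = ∑ ν, (F.eo n * F.e ν) ⊗ₜ[K] F.eo ν := by
  conv_lhs => rw [eo_eq_sum F n]
  rw [map_sum]
  simp_rw [F.comul_eo_e]
  rw [Finset.sum_comm]
  refine Finset.sum_congr rfl fun ν _ => ?_
  rw [← tmul_sum, ← eo_eq_sum]

lemma mul_tmul_right (z : H ⊗[K] H) (c d : H) :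
    z * (c ⊗ₜ[K] d) = map (mulRight K c) (mulRight K d) z := by
  have h : (mulRight K (c ⊗ₜ[K] d) : H ⊗[K] H →ₗ[K] H ⊗[K] H)
      = map (mulRight K c) (mulRight K d) := by
    apply TensorProduct.ext'; intro x y
    simp [Algebra.TensorProduct.tmul_mul_tmul]
  simpa using DFunLike.congr_fun h z

lemma mul_tmul_left (c d : H) (z : H ⊗[K] H) :
    (c ⊗ₜ[K] d) * z = map (mulLeft K c) (mulLeft K d) z := by
  have h : (mulLeft K (c ⊗ₜ[K] d) : H ⊗[K] H →ₗ[K] H ⊗[K] H)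
      = map (mulLeft K c) (mulLeft K d) := by
    apply TensorProduct.ext'; intro x y
    simp [Algebra.TensorProduct.tmul_mul_tmul]
  simpa using DFunLike.congr_fun h z

lemma comul_mul_e (a : H) (n : V) : F.comul (a * F.e n)
    = ∑ ν, map (mulRight K (F.e ν)) (mulRight K (F.eo ν * F.e n)) (F.comul a) := by
  rw [F.comul_mul, comul_e, Finset.mul_sum]
  simp_rw [mul_tmul_right]

lemma comul_mul_eo (a : H) (n : V) : F.comul (a * F.eo n)
    = ∑ ν, map (mulRight K (F.eo n * F.e ν)) (mulRight K (F.eo ν)) (F.comul a) := by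
  rw [F.comul_mul, comul_eo, Finset.mul_sum]
  simp_rw [mul_tmul_right]

lemma comul_e_mul (n : V) (a : H) : F.comul (F.e n * a)
    = ∑ ν, map (mulLeft K (F.e ν)) (mulLeft K (F.eo ν * F.e n)) (F.comul a) := by
  rw [F.comul_mul, comul_e, Finset.sum_mul]
  simp_rw [mul_tmul_left]

lemma comul_eo_mul (n : V) (a : H) : F.comul (F.eo n * a)
    = ∑ ν, map (mulLeft K (F.eo n * F.e ν)) (mulLeft K (F.eo ν)) (F.comul a) := by
  rw [F.comul_mul, comul_eo, Finset.sum_mul]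
  simp_rw [mul_tmul_left]

lemma comul_id_r (a : H) : F.comul a
    = ∑ ν, map (mulRight K (F.e ν)) (mulRight K (F.eo ν)) (F.comul a) := by
  conv_lhs => rw [show a = a * 1 from (mul_one a).symm]
  rw [F.comul_mul, comul_one', Finset.mul_sum]
  simp_rw [mul_tmul_right]

lemma comul_id_l (a : H) : F.comul a
    = ∑ ν, map (mulLeft K (F.e ν)) (mulLeft K (F.eo ν)) (F.comul a) := by
  conv_lhs => rw [show a = 1 * a from (one_mul a).symm]
  rw [F.comul_mul, comul_one', Finset.sum_mul]
  simp_rw [mul_tmul_left]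


noncomputable def eR (n : V) : H →ₗ[K] K := F.counit ∘ₗ mulRight K (F.e n)
noncomputable def eL (n : V) : H →ₗ[K] K := F.counit ∘ₗ mulLeft K (F.e n)
noncomputable def eLR (m n : V) : H →ₗ[K] K :=
  F.counit ∘ₗ mulLeft K (F.e m) ∘ₗ mulRight K (F.e n)

@[simp] lemma eR_apply (n : V) (x : H) : eR F n x = F.counit (x * F.e n) := rfl
@[simp] lemma eL_apply (n : V) (x : H) : eL F n x = F.counit (F.e n * x) := rfl
@[simp] lemma eLR_apply (m n : V) (x : H) :
    eLR F m n x = F.counit (F.e m * (x * F.e n)) := rfl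

lemma CLg_zero : (CLg (0 : H →ₗ[K] K) : H ⊗[K] H →ₗ[K] H) = 0 := by
  apply TensorProduct.ext'; intro x y; simp

lemma CRg_zero : (CRg (0 : H →ₗ[K] K) : H ⊗[K] H →ₗ[K] H) = 0 := by
  apply TensorProduct.ext'; intro x y; simp

lemma CLg_map_apply (ψ : H →ₗ[K] K) (f g : H →ₗ[K] H) (z : H ⊗[K] H) :
    CLg ψ (map f g z) = g (CLg (ψ ∘ₗ f) z) := by
  have h : (CLg ψ : H ⊗[K] H →ₗ[K] H) ∘ₗ map f g = g ∘ₗ CLg (ψ ∘ₗ f) := by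
    apply TensorProduct.ext'; intro x y; simp
  exact DFunLike.congr_fun h z

lemma CRg_map_apply (ψ : H →ₗ[K] K) (f g : H →ₗ[K] H) (z : H ⊗[K] H) :
    CRg ψ (map f g z) = f (CRg (ψ ∘ₗ g) z) := by
  have h : (CRg ψ : H ⊗[K] H →ₗ[K] H) ∘ₗ map f g = f ∘ₗ CRg (ψ ∘ₗ g) := by
    apply TensorProduct.ext'; intro x y; simp
  exact DFunLike.congr_fun h z

lemma CLg_counit (a : H) : CLg F.counit (F.comul a) = a := by
  have := F.counit_comul a
  simpa [CLg] using this

lemma CRg_counit (a : H) : CRg F.counit (F.comul a) = a := by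
  have := F.comul_counit a
  simpa [CRg] using this

/-! Key composition computations. -/

lemma keyR_eo (n ν : V) :
    eR F n ∘ₗ mulRight K (F.eo ν) = if ν = n then eR F n else 0 := by
  ext x
  simp only [comp_apply, mulRight_apply, eR_apply, mul_assoc]
  rw [counit_mul_eoe]
  split_ifs with h <;> simp

lemma keyR_eoe (n ν : V) :
    F.counit ∘ₗ mulRight K (F.eo ν * F.e n) = if ν = n then eR F n else 0 := by
  ext x
  simp only [comp_apply, mulRight_apply]
  rw [counit_mul_eoe]
  split_ifs with h <;> simp

lemma keyR_e (n ν : V) :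
    eR F n ∘ₗ mulRight K (F.e ν) = if ν = n then eR F n else 0 := by
  ext x
  simp only [comp_apply, mulRight_apply, eR_apply, mul_assoc, F.e_mul_e]
  split_ifs with h <;> simp [h]

lemma keyR_eoe' (n ν : V) :
    F.counit ∘ₗ mulRight K (F.eo n * F.e ν) = if n = ν then eR F n else 0 := by
  ext x
  simp only [comp_apply, mulRight_apply]
  rw [counit_mul_eoe]
  split_ifs with h <;> simp [h]

lemma keyL_eo (n ν : V) :
    eL F n ∘ₗ mulLeft K (F.eo ν) = if ν = n then eL F n else 0 := by
  ext x
  simp only [comp_apply, mulLeft_apply, eL_apply]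
  rw [← mul_assoc, F.e_mul_eo, counit_eoe_mul]
  split_ifs with h <;> simp [counit_e_mul]

lemma keyL_eoe (n ν : V) :
    F.counit ∘ₗ mulLeft K (F.eo ν * F.e n) = if ν = n then eL F n else 0 := by
  ext x
  simp only [comp_apply, mulLeft_apply]
  rw [counit_eoe_mul]
  split_ifs with h <;> simp [counit_e_mul]

lemma keyL_e (n ν : V) :
    eL F n ∘ₗ mulLeft K (F.e ν) = if n = ν then eL F n else 0 := by
  ext x
  simp only [comp_apply, mulLeft_apply, eL_apply]
  rw [← mul_assoc, F.e_mul_e]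
  split_ifs with h <;> simp [h]

lemma keyL_eoe' (n ν : V) :
    F.counit ∘ₗ mulLeft K (F.eo n * F.e ν) = if n = ν then eL F ν else 0 := by
  ext x
  simp only [comp_apply, mulLeft_apply]
  rw [counit_eoe_mul]
  split_ifs with h <;> simp [counit_e_mul]

lemma keyLR_L (m n ν : V) :
    eLR F m n ∘ₗ mulLeft K (F.e ν) = if m = ν then eLR F m n else 0 := by
  ext x
  simp only [comp_apply, mulLeft_apply, eLR_apply]
  rw [mul_assoc (F.e ν) x (F.e n), ← mul_assoc (F.e m) (F.e ν), F.e_mul_e]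
  split_ifs with h <;> simp

lemma keyLR_Leo (m n ν : V) :
    eR F n ∘ₗ mulLeft K (F.eo m * F.e ν) = if m = ν then eLR F ν n else 0 := by
  ext x
  simp only [comp_apply, mulLeft_apply, eR_apply]
  rw [mul_assoc, counit_eoe_mul]
  split_ifs with h <;> simp [counit_e_mul]

lemma keyLR_R (m n ν : V) :
    eLR F m n ∘ₗ mulRight K (F.eo ν) = if ν = n then eLR F m n else 0 := by
  ext x
  simp only [comp_apply, mulRight_apply, eLR_apply]
  rw [mul_assoc x (F.eo ν) (F.e n), ← mul_assoc (F.e m) x, counit_mul_eoe]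
  split_ifs with h <;> simp [mul_assoc]

lemma keyLR_R' (m n ν : V) :
    eL F m ∘ₗ mulRight K (F.eo ν * F.e n) = if ν = n then eLR F m n else 0 := by
  ext x
  simp only [comp_apply, mulRight_apply, eL_apply]
  rw [← mul_assoc (F.e m) x, counit_mul_eoe]
  split_ifs with h <;> simp [mul_assoc]

/-! The four (plus two) fundamental "R-identities". -/

lemma R1 (n : V) (a : H) : CRg (eR F n) (F.comul a) = a * F.e n := by
  have step1 : CRg (eR F n) (F.comul a) = CRg (eR F n) (F.comul a) * F.e n := by
    conv_lhs => rw [comul_id_r F a, map_sum]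
    have hterm : ∀ ν : V, CRg (eR F n)
        (map (mulRight K (F.e ν)) (mulRight K (F.eo ν)) (F.comul a))
        = if ν = n then CRg (eR F n) (F.comul a) * F.e n else 0 := by
      intro ν
      rw [CRg_map_apply, keyR_eo]
      split_ifs with h
      · subst h; simp
      · simp [CRg_zero]
    rw [Finset.sum_congr rfl fun ν _ => hterm ν, Finset.sum_ite_eq' Finset.univ n]
    simp
  have step2 : a * F.e n = CRg (eR F n) (F.comul a) * F.e n := by
    conv_lhs => rw [← CRg_counit F (a * F.e n)]
    rw [comul_mul_e, map_sum]
    have hterm : ∀ ν : V, CRg F.counit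
        (map (mulRight K (F.e ν)) (mulRight K (F.eo ν * F.e n)) (F.comul a))
        = if ν = n then CRg (eR F n) (F.comul a) * F.e n else 0 := by
      intro ν
      rw [CRg_map_apply, keyR_eoe]
      split_ifs with h
      · subst h; simp
      · simp [CRg_zero]
    rw [Finset.sum_congr rfl fun ν _ => hterm ν, Finset.sum_ite_eq' Finset.univ n]
    simp
  rw [step1, ← step2]

lemma R2 (n : V) (a : H) : CLg (eR F n) (F.comul a) = a * F.eo n := by
  have step1 : CLg (eR F n) (F.comul a) = CLg (eR F n) (F.comul a) * F.eo n := by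
    conv_lhs => rw [comul_id_r F a, map_sum]
    have hterm : ∀ ν : V, CLg (eR F n)
        (map (mulRight K (F.e ν)) (mulRight K (F.eo ν)) (F.comul a))
        = if ν = n then CLg (eR F n) (F.comul a) * F.eo n else 0 := by
      intro ν
      rw [CLg_map_apply, keyR_e]
      split_ifs with h
      · subst h; simp
      · simp [CLg_zero]
    rw [Finset.sum_congr rfl fun ν _ => hterm ν, Finset.sum_ite_eq' Finset.univ n]
    simp
  have step2 : a * F.eo n = CLg (eR F n) (F.comul a) * F.eo n := by
    conv_lhs => rw [← CLg_counit F (a * F.eo n)]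
    rw [comul_mul_eo, map_sum]
    have hterm : ∀ ν : V, CLg F.counit
        (map (mulRight K (F.eo n * F.e ν)) (mulRight K (F.eo ν)) (F.comul a))
        = if n = ν then CLg (eR F n) (F.comul a) * F.eo n else 0 := by
      intro ν
      rw [CLg_map_apply, keyR_eoe']
      split_ifs with h
      · subst h; simp
      · simp [CLg_zero]
    rw [Finset.sum_congr rfl fun ν _ => hterm ν, Finset.sum_ite_eq Finset.univ n]
    simp
  rw [step1, ← step2]

lemma R3 (n : V) (a : H) : CRg (eL F n) (F.comul a) = F.e n * a := by
  have step1 : CRg (eL F n) (F.comul a) = F.e n * CRg (eL F n) (F.comul a) := by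
    conv_lhs => rw [comul_id_l F a, map_sum]
    have hterm : ∀ ν : V, CRg (eL F n)
        (map (mulLeft K (F.e ν)) (mulLeft K (F.eo ν)) (F.comul a))
        = if ν = n then F.e n * CRg (eL F n) (F.comul a) else 0 := by
      intro ν
      rw [CRg_map_apply, keyL_eo]
      split_ifs with h
      · subst h; simp
      · simp [CRg_zero]
    rw [Finset.sum_congr rfl fun ν _ => hterm ν, Finset.sum_ite_eq' Finset.univ n]
    simp
  have step2 : F.e n * a = F.e n * CRg (eL F n) (F.comul a) := by
    conv_lhs => rw [← CRg_counit F (F.e n * a)]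
    rw [comul_e_mul, map_sum]
    have hterm : ∀ ν : V, CRg F.counit
        (map (mulLeft K (F.e ν)) (mulLeft K (F.eo ν * F.e n)) (F.comul a))
        = if ν = n then F.e n * CRg (eL F n) (F.comul a) else 0 := by
      intro ν
      rw [CRg_map_apply, keyL_eoe]
      split_ifs with h
      · subst h; simp
      · simp [CRg_zero]
    rw [Finset.sum_congr rfl fun ν _ => hterm ν, Finset.sum_ite_eq' Finset.univ n]
    simp
  rw [step1, ← step2]

lemma R4 (n : V) (a : H) : CLg (eL F n) (F.comul a) = F.eo n * a := by
  have step1 : CLg (eL F n) (F.comul a) = F.eo n * CLg (eL F n) (F.comul a) := by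
    conv_lhs => rw [comul_id_l F a, map_sum]
    have hterm : ∀ ν : V, CLg (eL F n)
        (map (mulLeft K (F.e ν)) (mulLeft K (F.eo ν)) (F.comul a))
        = if n = ν then F.eo n * CLg (eL F n) (F.comul a) else 0 := by
      intro ν
      rw [CLg_map_apply, keyL_e]
      split_ifs with h
      · subst h; simp
      · simp [CLg_zero]
    rw [Finset.sum_congr rfl fun ν _ => hterm ν, Finset.sum_ite_eq Finset.univ n]
    simp
  have step2 : F.eo n * a = F.eo n * CLg (eL F n) (F.comul a) := by
    conv_lhs => rw [← CLg_counit F (F.eo n * a)]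
    rw [comul_eo_mul, map_sum]
    have hterm : ∀ ν : V, CLg F.counit
        (map (mulLeft K (F.eo n * F.e ν)) (mulLeft K (F.eo ν)) (F.comul a))
        = if n = ν then F.eo n * CLg (eL F n) (F.comul a) else 0 := by
      intro ν
      rw [CLg_map_apply, keyL_eoe']
      split_ifs with h
      · subst h; simp
      · simp [CLg_zero]
    rw [Finset.sum_congr rfl fun ν _ => hterm ν, Finset.sum_ite_eq Finset.univ n]
    simp
  rw [step1, ← step2]

lemma R5 (m n : V) (a : H) : CLg (eLR F m n) (F.comul a) = F.eo m * a * F.eo n := by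
  have step1 : CLg (eLR F m n) (F.comul a) = F.eo m * CLg (eLR F m n) (F.comul a) := by
    conv_lhs => rw [comul_id_l F a, map_sum]
    have hterm : ∀ ν : V, CLg (eLR F m n)
        (map (mulLeft K (F.e ν)) (mulLeft K (F.eo ν)) (F.comul a))
        = if m = ν then F.eo m * CLg (eLR F m n) (F.comul a) else 0 := by
      intro ν
      rw [CLg_map_apply, keyLR_L]
      split_ifs with h
      · subst h; simp
      · simp [CLg_zero]
    rw [Finset.sum_congr rfl fun ν _ => hterm ν, Finset.sum_ite_eq Finset.univ m]
    simp
  have step2 : F.eo m * a * F.eo n = F.eo m * CLg (eLR F m n) (F.comul a) := by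
    rw [mul_assoc, ← mul_assoc]
    conv_lhs => rw [← R2 F n (F.eo m * a)]
    rw [comul_eo_mul, map_sum]
    have hterm : ∀ ν : V, CLg (eR F n)
        (map (mulLeft K (F.eo m * F.e ν)) (mulLeft K (F.eo ν)) (F.comul a))
        = if m = ν then F.eo m * CLg (eLR F m n) (F.comul a) else 0 := by
      intro ν
      rw [CLg_map_apply, keyLR_Leo]
      split_ifs with h
      · subst h; simp
      · simp [CLg_zero]
    rw [Finset.sum_congr rfl fun ν _ => hterm ν, Finset.sum_ite_eq Finset.univ m]
    simp
  rw [step1]; exact step2.symm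

lemma R5' (m n : V) (a : H) : CRg (eLR F m n) (F.comul a) = F.e m * (a * F.e n) := by
  have step1 : CRg (eLR F m n) (F.comul a) = CRg (eLR F m n) (F.comul a) * F.e n := by
    conv_lhs => rw [comul_id_r F a, map_sum]
    have hterm : ∀ ν : V, CRg (eLR F m n)
        (map (mulRight K (F.e ν)) (mulRight K (F.eo ν)) (F.comul a))
        = if ν = n then CRg (eLR F m n) (F.comul a) * F.e n else 0 := by
      intro ν
      rw [CRg_map_apply, keyLR_R]
      split_ifs with h
      · subst h; simp
      · simp [CRg_zero]
    rw [Finset.sum_congr rfl fun ν _ => hterm ν, Finset.sum_ite_eq' Finset.univ n]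
    simp
  have step2 : F.e m * (a * F.e n) = CRg (eLR F m n) (F.comul a) * F.e n := by
    conv_lhs => rw [← R3 F m (a * F.e n)]
    rw [comul_mul_e, map_sum]
    have hterm : ∀ ν : V, CRg (eL F m)
        (map (mulRight K (F.e ν)) (mulRight K (F.eo ν * F.e n)) (F.comul a))
        = if ν = n then CRg (eLR F m n) (F.comul a) * F.e n else 0 := by
      intro ν
      rw [CRg_map_apply, keyLR_R']
      split_ifs with h
      · subst h; simp
      · simp [CRg_zero]
    rw [Finset.sum_congr rfl fun ν _ => hterm ν, Finset.sum_ite_eq' Finset.univ n]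
    simp
  rw [step1]; exact step2.symm


/-! Generic composition-rearrangement lemmas. -/

lemma map_eq_lr (f g : H →ₗ[K] H) :
    (map f g : H ⊗[K] H →ₗ[K] H ⊗[K] H) = map LinearMap.id g ∘ₗ rTensor H f := by
  apply TensorProduct.ext'; intro x y; simp

lemma map_eq_rl (f g : H →ₗ[K] H) :
    (map f g : H ⊗[K] H →ₗ[K] H ⊗[K] H) = map f LinearMap.id ∘ₗ lTensor H g := by
  apply TensorProduct.ext'; intro x y; simp

lemma map_id_right (g : H →ₗ[K] H) : (map LinearMap.id g : H ⊗[K] H →ₗ[K] H ⊗[K] H)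
    = lTensor H g := rfl

lemma map_id_left (f : H →ₗ[K] H) : (map f LinearMap.id : H ⊗[K] H →ₗ[K] H ⊗[K] H)
    = rTensor H f := rfl

lemma hco_symm (a : H) : rTensor H F.comul (F.comul a)
    = (TensorProduct.assoc K H H H).symm (lTensor H F.comul (F.comul a)) := by
  rw [← F.coassoc a]; simp

/-- Contraction of the first leg of `Δ²`. -/
lemma G2 (ψ : H →ₗ[K] K) (a : H) :
    rTensor H (CLg ψ ∘ₗ F.comul) (F.comul a)
      = CLg ψ (lTensor H F.comul (F.comul a)) := by
  rw [rTensor_comp, comp_apply, hco_symm]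
  rw [CLg_assoc (K := K) (N₁ := H) (N₂ := H) ψ]
  rfl

/-- Contraction of the last leg of `Δ²`. -/
lemma G3 (ψ : H →ₗ[K] K) (a : H) :
    lTensor H (CRg ψ ∘ₗ F.comul) (F.comul a)
      = CRg ψ (rTensor H F.comul (F.comul a)) := by
  rw [lTensor_comp, comp_apply, ← F.coassoc a]
  rw [CRg_assoc (K := K) (N₁ := H) (N₂ := H) ψ]
  rfl

/-- Contraction of the middle leg of `Δ²`, two ways. -/
lemma G1 (ψ : H →ₗ[K] K) (a : H) :
    lTensor H (CLg ψ ∘ₗ F.comul) (F.comul a)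
      = rTensor H (CRg ψ ∘ₗ F.comul) (F.comul a) := by
  rw [lTensor_comp, comp_apply, ← F.coassoc a, rTensor_comp, comp_apply]
  have h : (lTensor H (CLg ψ) ∘ₗ (TensorProduct.assoc K H H H).toLinearMap :
      (H ⊗[K] H) ⊗[K] H →ₗ[K] H ⊗[K] H) = rTensor H (CRg ψ) := by
    apply TensorProduct.ext_threefold; intro x y z
    simp only [comp_apply, LinearEquiv.coe_coe, TensorProduct.assoc_tmul, lTensor_tmul,
      rTensor_tmul, CLg_tmul, CRg_tmul, tmul_smul, smul_tmul']
  exact DFunLike.congr_fun h _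


/-! The source and target counital maps, and convolution. -/

noncomputable def eps_s : H →ₗ[K] H := ∑ n, (eR F n).smulRight (F.e n)
noncomputable def eps_t : H →ₗ[K] H := ∑ n, (eL F n).smulRight (F.eo n)

lemma eps_s_apply (x : H) : eps_s F x = ∑ n, F.counit (x * F.e n) • F.e n := by
  simp [eps_s]

lemma eps_t_apply (x : H) : eps_t F x = ∑ n, F.counit (F.e n * x) • F.eo n := by
  simp [eps_t]

noncomputable def cnv {A : Type*} [Ring A] [Algebra K A] (f g : H →ₗ[K] A) : H →ₗ[K] A :=
  mul' K A ∘ₗ map f g ∘ₗ F.comul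

lemma cnv_apply {A : Type*} [Ring A] [Algebra K A] (f g : H →ₗ[K] A) (a : H) :
    cnv F f g a = mul' K A (map f g (F.comul a)) := rfl

variable (S : H →ₗ[K] H)

lemma hS1c (hS : F.IsAntipode S) :
    (mul' K H ∘ₗ map S LinearMap.id) ∘ₗ F.comul = eps_s F := by
  apply LinearMap.ext; intro a
  rw [comp_apply, comp_apply, map_id_left, eps_s_apply]
  exact hS.1 a

lemma hS2c (hS : F.IsAntipode S) :
    (mul' K H ∘ₗ map LinearMap.id S) ∘ₗ F.comul = eps_t F := by
  apply LinearMap.ext; intro a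
  rw [comp_apply, comp_apply, map_id_right, eps_t_apply]
  exact hS.2.1 a

lemma cnv_S_id (hS : F.IsAntipode S) : cnv F S LinearMap.id = eps_s F := by
  rw [cnv, ← LinearMap.comp_assoc]; exact hS1c F S hS

lemma cnv_id_S (hS : F.IsAntipode S) : cnv F LinearMap.id S = eps_t F := by
  rw [cnv, ← LinearMap.comp_assoc]; exact hS2c F S hS

/-- The third antipode axiom in convolution form: `ε_s ⋆ S = S`. -/
lemma cnv_eps_s_S (hS : F.IsAntipode S) : cnv F (eps_s F) S = S := by
  apply LinearMap.ext; intro a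
  have h := hS.2.2 a
  have h1 : rTensor H (mul' K H ∘ₗ rTensor H S) (rTensor H F.comul (F.comul a))
      = rTensor H (eps_s F) (F.comul a) := by
    rw [← comp_apply, ← rTensor_comp]
    have : (mul' K H ∘ₗ rTensor H S) ∘ₗ F.comul = eps_s F := by
      rw [← map_id_left]; exact hS1c F S hS
    rw [this]
  rw [h1] at h
  rw [cnv_apply, map_eq_lr, comp_apply, map_id_right]
  exact h

/-- Convolution associativity, generically. -/
lemma conv_assoc_of {C A : Type*} [AddCommGroup C] [Module K C] [Ring A] [Algebra K A]
    (δ : C →ₗ[K] C ⊗[K] C)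
    (hδ : ∀ z, (TensorProduct.assoc K C C C) (rTensor C δ (δ z)) = lTensor C δ (δ z))
    (f g h : C →ₗ[K] A) :
    mul' K A ∘ₗ map (mul' K A ∘ₗ map f g ∘ₗ δ) h ∘ₗ δ
      = mul' K A ∘ₗ map f (mul' K A ∘ₗ map g h ∘ₗ δ) ∘ₗ δ := by
  have key : mul' K A ∘ₗ map (mul' K A ∘ₗ map f g) h
      = (mul' K A ∘ₗ map f (mul' K A ∘ₗ map g h)) ∘ₗ (TensorProduct.assoc K C C C).toLinearMap := by
    apply TensorProduct.ext_threefold; intro x y z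
    simp [mul_assoc]
  have e1 : map (mul' K A ∘ₗ map f g ∘ₗ δ) h
      = map (mul' K A ∘ₗ map f g) h ∘ₗ rTensor C δ := by
    calc map (mul' K A ∘ₗ map f g ∘ₗ δ) h
        = map ((mul' K A ∘ₗ map f g) ∘ₗ δ) (h ∘ₗ LinearMap.id) := by
          rw [LinearMap.comp_id, LinearMap.comp_assoc]
      _ = map (mul' K A ∘ₗ map f g) h ∘ₗ map δ LinearMap.id := TensorProduct.map_comp ..
      _ = _ := rfl
  have e2 : map f (mul' K A ∘ₗ map g h ∘ₗ δ)
      = map f (mul' K A ∘ₗ map g h) ∘ₗ lTensor C δ := by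
    calc map f (mul' K A ∘ₗ map g h ∘ₗ δ)
        = map (f ∘ₗ LinearMap.id) ((mul' K A ∘ₗ map g h) ∘ₗ δ) := by
          rw [LinearMap.comp_id, LinearMap.comp_assoc]
      _ = map f (mul' K A ∘ₗ map g h) ∘ₗ map LinearMap.id δ := TensorProduct.map_comp ..
      _ = _ := rfl
  apply LinearMap.ext; intro c
  simp only [comp_apply, e1, e2]
  rw [← hδ c]
  exact DFunLike.congr_fun key (rTensor C δ (δ c))

lemma cnv_assoc {A : Type*} [Ring A] [Algebra K A] (f g h : H →ₗ[K] A) :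
    cnv F (cnv F f g) h = cnv F f (cnv F g h) :=
  conv_assoc_of F.comul F.coassoc f g h

/-- `S ⋆ ε_t = S` (regrouping of the third antipode axiom). -/
lemma cnv_S_eps_t (hS : F.IsAntipode S) : cnv F S (eps_t F) = S := by
  have h := cnv_assoc F S LinearMap.id S
  rw [cnv_S_id F S hS, cnv_id_S F S hS, cnv_eps_s_S F S hS] at h
  exact h.symm

/-! Sums and `smulRight` through convolution. -/

lemma cnv_sum_left {A : Type*} [Ring A] [Algebra K A] {ι : Type*} (s : Finset ι)
    (f : ι → (H →ₗ[K] A)) (g : H →ₗ[K] A) :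
    cnv F (∑ i ∈ s, f i) g = ∑ i ∈ s, cnv F (f i) g := by
  have hmap : map (∑ i ∈ s, f i) g = ∑ i ∈ s, map (f i) g := by
    apply TensorProduct.ext'; intro x y
    simp [LinearMap.sum_apply, sum_tmul]
  apply LinearMap.ext; intro a
  simp [cnv_apply, hmap, LinearMap.sum_apply, map_sum]

lemma cnv_sum_right {A : Type*} [Ring A] [Algebra K A] {ι : Type*} (s : Finset ι)
    (f : H →ₗ[K] A) (g : ι → (H →ₗ[K] A)) :
    cnv F f (∑ i ∈ s, g i) = ∑ i ∈ s, cnv F f (g i) := by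
  have hmap : map f (∑ i ∈ s, g i) = ∑ i ∈ s, map f (g i) := by
    apply TensorProduct.ext'; intro x y
    simp [LinearMap.sum_apply, tmul_sum]
  apply LinearMap.ext; intro a
  simp [cnv_apply, hmap, LinearMap.sum_apply, map_sum]

lemma cnv_smulRight_left {A : Type*} [Ring A] [Algebra K A] (ψ : H →ₗ[K] K) (c : A)
    (g : H →ₗ[K] A) (a : H) :
    cnv F (ψ.smulRight c) g a = c * g (CLg ψ (F.comul a)) := by
  rw [cnv_apply]
  have key : mul' K A ∘ₗ map (ψ.smulRight c) g = mulLeft K c ∘ₗ g ∘ₗ CLg ψ := by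
    apply TensorProduct.ext'; intro x y
    simp [smul_mul_assoc, mul_smul_comm]
  exact DFunLike.congr_fun key (F.comul a)

lemma cnv_smulRight_right {A : Type*} [Ring A] [Algebra K A] (ψ : H →ₗ[K] K) (c : A)
    (f : H →ₗ[K] A) (a : H) :
    cnv F f (ψ.smulRight c) a = f (CRg ψ (F.comul a)) * c := by
  rw [cnv_apply]
  have key : mul' K A ∘ₗ map f (ψ.smulRight c) = mulRight K c ∘ₗ f ∘ₗ CRg ψ := by
    apply TensorProduct.ext'; intro x y
    simp [smul_mul_assoc, mul_smul_comm]
  exact DFunLike.congr_fun key (F.comul a)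

/-- `S x = ∑ₘ e m * S (x * e̊ m)`. -/
lemma K3 (hS : F.IsAntipode S) (x : H) :
    S x = ∑ m, F.e m * S (x * F.eo m) := by
  conv_lhs => rw [← cnv_eps_s_S F S hS]
  rw [show (eps_s F : H →ₗ[K] H) = ∑ n, (eR F n).smulRight (F.e n) from rfl]
  rw [cnv_sum_left, LinearMap.sum_apply]
  refine Finset.sum_congr rfl fun m _ => ?_
  rw [cnv_smulRight_left, R2]

/-- `S x = ∑ₘ S (e m * x) * e̊ m`. -/
lemma K4 (hS : F.IsAntipode S) (x : H) :
    S x = ∑ m, S (F.e m * x) * F.eo m := by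
  conv_lhs => rw [← cnv_S_eps_t F S hS]
  rw [show (eps_t F : H →ₗ[K] H) = ∑ n, (eL F n).smulRight (F.eo n) from rfl]
  rw [cnv_sum_right, LinearMap.sum_apply]
  refine Finset.sum_congr rfl fun m _ => ?_
  rw [cnv_smulRight_right, R3]


/-! Map-level forms of the R-identities. -/

lemma R1map (n : V) : (CRg (eR F n) : H ⊗[K] H →ₗ[K] H) ∘ₗ F.comul = mulRight K (F.e n) := by
  apply LinearMap.ext; intro a; rw [comp_apply, R1]; rfl

lemma R2map (n : V) : (CLg (eR F n) : H ⊗[K] H →ₗ[K] H) ∘ₗ F.comul = mulRight K (F.eo n) := by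
  apply LinearMap.ext; intro a; rw [comp_apply, R2]; rfl

lemma R3map (n : V) : (CRg (eL F n) : H ⊗[K] H →ₗ[K] H) ∘ₗ F.comul = mulLeft K (F.e n) := by
  apply LinearMap.ext; intro a; rw [comp_apply, R3]; rfl

lemma R4map (n : V) : (CLg (eL F n) : H ⊗[K] H →ₗ[K] H) ∘ₗ F.comul = mulLeft K (F.eo n) := by
  apply LinearMap.ext; intro a; rw [comp_apply, R4]; rfl

/-! More composition-rearrangement lemmas. -/

lemma map_precomp_left (f₁ f₂ g : H →ₗ[K] H) :
    (map (f₁ ∘ₗ f₂) g : H ⊗[K] H →ₗ[K] H ⊗[K] H) = map f₁ g ∘ₗ rTensor H f₂ := by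
  apply TensorProduct.ext'; intro x y; simp

lemma map_precomp_right (f g₁ g₂ : H →ₗ[K] H) :
    (map f (g₁ ∘ₗ g₂) : H ⊗[K] H →ₗ[K] H ⊗[K] H) = map f g₁ ∘ₗ lTensor H g₂ := by
  apply TensorProduct.ext'; intro x y; simp

lemma move_Lc (c : H) (f g : H →ₗ[K] H) :
    mul' K H ∘ₗ map (mulLeft K c ∘ₗ f) g = mulLeft K c ∘ₗ mul' K H ∘ₗ map f g := by
  apply TensorProduct.ext'; intro x y; simp [mul_assoc]

lemma move_Rc (c : H) (f g : H →ₗ[K] H) :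
    mul' K H ∘ₗ map f (mulRight K c ∘ₗ g) = mulRight K c ∘ₗ mul' K H ∘ₗ map f g := by
  apply TensorProduct.ext'; intro x y; simp [mul_assoc]

lemma move_LR (c : H) (f g : H →ₗ[K] H) :
    mul' K H ∘ₗ map f (mulLeft K c ∘ₗ g) = mul' K H ∘ₗ map (mulRight K c ∘ₗ f) g := by
  apply TensorProduct.ext'; intro x y; simp [mul_assoc]

/-! Commutations with the ranges of `ε_s`, `ε_t`. -/

lemma eps_t_comm_e (m : V) (x : H) : F.e m * eps_t F x = eps_t F x * F.e m := by
  rw [eps_t_apply, Finset.mul_sum, Finset.sum_mul]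
  refine Finset.sum_congr rfl fun n _ => ?_
  rw [mul_smul_comm, smul_mul_assoc, F.e_mul_eo]

lemma eps_s_comm_eo (m : V) (x : H) : F.eo m * eps_s F x = eps_s F x * F.eo m := by
  rw [eps_s_apply, Finset.mul_sum, Finset.sum_mul]
  refine Finset.sum_congr rfl fun n _ => ?_
  rw [mul_smul_comm, smul_mul_assoc, ← F.e_mul_eo]

/-! The `W`-identities: `Σ S(a₁) e_m a₂ = ε_s(e_m a)` and `Σ a₁ e̊_n S(a₂) = ε_t(a e̊_n)`. -/

lemma W5 (hS : F.IsAntipode S) (n : V) (a : H) :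
    mul' K H (map (mulRight K (F.eo n)) S (F.comul a)) = eps_t F (a * F.eo n) := by
  have e1 : map (mulRight K (F.eo n)) S (F.comul a)
      = map LinearMap.id S (rTensor H (mulRight K (F.eo n)) (F.comul a)) :=
    DFunLike.congr_fun (map_eq_lr _ _) _
  rw [e1, ← R2map F n, G2]
  have e2 := DFunLike.congr_fun (CLg_nat (mul' K H ∘ₗ map LinearMap.id S) (eR F n))
      (lTensor H F.comul (F.comul a))
  simp only [comp_apply] at e2
  rw [e2, ← comp_apply (lTensor H (mul' K H ∘ₗ map LinearMap.id S)) (lTensor H F.comul),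
    ← lTensor_comp, hS2c F S hS]
  have e3 := DFunLike.congr_fun (CLg_nat (eps_t F) (eR F n)) (F.comul a)
  simp only [comp_apply] at e3
  rw [← e3, R2]

lemma W3 (hS : F.IsAntipode S) (m : V) (a : H) :
    mul' K H (map (mulRight K (F.e m) ∘ₗ S) LinearMap.id (F.comul a))
      = eps_s F (F.e m * a) := by
  have e0 : mul' K H ∘ₗ map (mulRight K (F.e m) ∘ₗ S) LinearMap.id
      = mul' K H ∘ₗ map S (mulLeft K (F.e m)) := by
    apply TensorProduct.ext'; intro x y; simp [mul_assoc]
  have e0' := DFunLike.congr_fun e0 (F.comul a)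
  simp only [comp_apply] at e0'
  rw [e0']
  have e1 : map S (mulLeft K (F.e m)) (F.comul a)
      = map S LinearMap.id (lTensor H (mulLeft K (F.e m)) (F.comul a)) := by
    have := map_precomp_right (K := K) (H := H) S LinearMap.id (mulLeft K (F.e m))
    rw [LinearMap.id_comp] at this
    exact DFunLike.congr_fun this _
  rw [e1, ← R3map F m, G3]
  have e2 := DFunLike.congr_fun (CRg_nat (mul' K H ∘ₗ map S LinearMap.id) (eL F m))
      (rTensor H F.comul (F.comul a))
  simp only [comp_apply] at e2
  rw [e2, ← comp_apply (rTensor H (mul' K H ∘ₗ map S LinearMap.id)) (rTensor H F.comul),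
    ← rTensor_comp, hS1c F S hS]
  have e3 := DFunLike.congr_fun (CRg_nat (eps_s F) (eL F m)) (F.comul a)
  simp only [comp_apply] at e3
  rw [← e3, R3]

/-! The `K`-lemmas towards `S(e̊ₘ x) = S(x) eₘ` and `S(x eₘ) = e̊ₘ S(x)`. -/

lemma Ka (hS : F.IsAntipode S) (m : V) (a : H) :
    mul' K H (map (S ∘ₗ mulLeft K (F.eo m)) LinearMap.id (F.comul a))
      = eps_s F (F.eo m * a) := by
  have e1 : map (S ∘ₗ mulLeft K (F.eo m)) LinearMap.id (F.comul a)
      = map S LinearMap.id (rTensor H (mulLeft K (F.eo m)) (F.comul a)) :=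
    DFunLike.congr_fun (map_precomp_left S (mulLeft K (F.eo m)) LinearMap.id) _
  rw [e1, ← R4map F m, G2]
  have e2 := DFunLike.congr_fun (CLg_nat (mul' K H ∘ₗ map S LinearMap.id) (eL F m))
      (lTensor H F.comul (F.comul a))
  simp only [comp_apply] at e2
  rw [e2, ← comp_apply (lTensor H (mul' K H ∘ₗ map S LinearMap.id)) (lTensor H F.comul),
    ← lTensor_comp, hS1c F S hS]
  have e3 := DFunLike.congr_fun (CLg_nat (eps_s F) (eL F m)) (F.comul a)
  simp only [comp_apply] at e3
  rw [← e3, R4]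

lemma Kc (hS : F.IsAntipode S) (m : V) (a : H) :
    mul' K H (map LinearMap.id (S ∘ₗ mulLeft K (F.eo m)) (F.comul a))
      = F.e m * eps_t F a := by
  have e1 : map LinearMap.id (S ∘ₗ mulLeft K (F.eo m)) (F.comul a)
      = map LinearMap.id S (lTensor H (mulLeft K (F.eo m)) (F.comul a)) :=
    DFunLike.congr_fun (map_precomp_right LinearMap.id S (mulLeft K (F.eo m))) _
  rw [e1, ← R4map F m, G1, R3map]
  have e2 : map LinearMap.id S (rTensor H (mulLeft K (F.e m)) (F.comul a))
      = map (mulLeft K (F.e m)) S (F.comul a) := by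
    have := map_precomp_left (K := K) (H := H) LinearMap.id (mulLeft K (F.e m)) S
    rw [LinearMap.id_comp] at this
    exact (DFunLike.congr_fun this _).symm
  rw [e2]
  have e3 : mul' K H ∘ₗ map (mulLeft K (F.e m)) S
      = mulLeft K (F.e m) ∘ₗ mul' K H ∘ₗ map LinearMap.id S := by
    have := move_Lc (K := K) (H := H) (F.e m) LinearMap.id S
    rwa [LinearMap.comp_id] at this
  have e3' := DFunLike.congr_fun e3 (F.comul a)
  simp only [comp_apply] at e3'
  rw [e3']
  have := DFunLike.congr_fun (hS2c F S hS) a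
  simp only [comp_apply] at this
  rw [this]; rfl

lemma Kd (hS : F.IsAntipode S) (m : V) (a : H) :
    mul' K H (map LinearMap.id (mulRight K (F.e m) ∘ₗ S) (F.comul a))
      = eps_t F a * F.e m := by
  have e3' := DFunLike.congr_fun (move_Rc (K := K) (H := H) (F.e m) LinearMap.id S) (F.comul a)
  simp only [comp_apply] at e3'
  rw [e3']
  have := DFunLike.congr_fun (hS2c F S hS) a
  simp only [comp_apply] at this
  rw [this]; rfl


lemma hmatch1 (m : V) :
    eps_s F ∘ₗ mulLeft K (F.eo m) = eps_s F ∘ₗ mulLeft K (F.e m) := by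
  apply LinearMap.ext; intro x
  simp only [comp_apply, mulLeft_apply, eps_s_apply]
  refine Finset.sum_congr rfl fun k _ => ?_
  rw [mul_assoc, ← counit_e_mul, ← mul_assoc]

lemma eps_s_comp_eoL (m : V) :
    eps_s F ∘ₗ mulLeft K (F.eo m) = ∑ k, (eLR F m k).smulRight (F.e k) := by
  apply LinearMap.ext; intro x
  simp only [comp_apply, mulLeft_apply, eps_s_apply, LinearMap.sum_apply,
    LinearMap.smulRight_apply, eLR_apply]
  refine Finset.sum_congr rfl fun k _ => ?_
  rw [mul_assoc, ← counit_e_mul]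

lemma eps_t_comp_eR (m : V) :
    eps_t F ∘ₗ mulRight K (F.e m) = ∑ k, (eLR F k m).smulRight (F.eo k) := by
  apply LinearMap.ext; intro x
  simp only [comp_apply, mulRight_apply, eps_t_apply, LinearMap.sum_apply,
    LinearMap.smulRight_apply, eLR_apply]

lemma Ke (hS : F.IsAntipode S) (m : V) :
    cnv F (eps_s F ∘ₗ mulLeft K (F.eo m)) (S ∘ₗ mulLeft K (F.eo m))
      = S ∘ₗ mulLeft K (F.eo m) := by
  apply LinearMap.ext; intro a
  rw [eps_s_comp_eoL, cnv_sum_left, LinearMap.sum_apply]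
  have hterm : ∀ k, cnv F ((eLR F m k).smulRight (F.e k)) (S ∘ₗ mulLeft K (F.eo m)) a
      = F.e k * S ((F.eo m * a) * F.eo k) := by
    intro k
    rw [cnv_smulRight_left, R5]
    simp only [comp_apply, mulLeft_apply]
    congr 2
    rw [← mul_assoc (F.eo m) (F.eo m * a) (F.eo k), ← mul_assoc (F.eo m) (F.eo m) a,
      F.eo_mul_eo, if_pos rfl]
  rw [Finset.sum_congr rfl fun k _ => hterm k]
  rw [comp_apply, mulLeft_apply]
  exact (K3 F S hS (F.eo m * a)).symm

lemma Kf (hS : F.IsAntipode S) (m : V) :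
    cnv F (mulRight K (F.e m) ∘ₗ S) (mulLeft K (F.e m) ∘ₗ eps_t F)
      = mulRight K (F.e m) ∘ₗ S := by
  have key : mul' K H ∘ₗ map (mulRight K (F.e m) ∘ₗ S) (mulLeft K (F.e m) ∘ₗ eps_t F)
      = mulRight K (F.e m) ∘ₗ mul' K H ∘ₗ map S (eps_t F) := by
    apply TensorProduct.ext'; intro x y
    simp only [comp_apply, map_tmul, mul'_apply, mulRight_apply, mulLeft_apply]
    rw [mul_assoc (S x) (F.e m) (F.e m * eps_t F y), ← mul_assoc (F.e m) (F.e m) (eps_t F y),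
      F.e_mul_e, if_pos rfl, eps_t_comm_e, ← mul_assoc]
  apply LinearMap.ext; intro a
  have hk := DFunLike.congr_fun key (F.comul a)
  simp only [comp_apply] at hk
  rw [cnv_apply, hk]
  have := DFunLike.congr_fun (cnv_S_eps_t F S hS) a
  rw [cnv_apply] at this
  rw [this]; rfl

lemma K5 (hS : F.IsAntipode S) (m : V) :
    S ∘ₗ mulLeft K (F.eo m) = mulRight K (F.e m) ∘ₗ S := by
  have hW3m : cnv F (mulRight K (F.e m) ∘ₗ S) LinearMap.id
      = eps_s F ∘ₗ mulLeft K (F.e m) := by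
    apply LinearMap.ext; intro a
    rw [cnv_apply, W3 F S hS]; rfl
  have hKcm : cnv F LinearMap.id (S ∘ₗ mulLeft K (F.eo m))
      = mulLeft K (F.e m) ∘ₗ eps_t F := by
    apply LinearMap.ext; intro a
    rw [cnv_apply, Kc F S hS]; rfl
  calc S ∘ₗ mulLeft K (F.eo m)
      = cnv F (eps_s F ∘ₗ mulLeft K (F.eo m)) (S ∘ₗ mulLeft K (F.eo m)) := (Ke F S hS m).symm
    _ = cnv F (eps_s F ∘ₗ mulLeft K (F.e m)) (S ∘ₗ mulLeft K (F.eo m)) := by rw [hmatch1]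
    _ = cnv F (cnv F (mulRight K (F.e m) ∘ₗ S) LinearMap.id) (S ∘ₗ mulLeft K (F.eo m)) := by
        rw [hW3m]
    _ = cnv F (mulRight K (F.e m) ∘ₗ S) (cnv F LinearMap.id (S ∘ₗ mulLeft K (F.eo m))) :=
        cnv_assoc ..
    _ = cnv F (mulRight K (F.e m) ∘ₗ S) (mulLeft K (F.e m) ∘ₗ eps_t F) := by rw [hKcm]
    _ = mulRight K (F.e m) ∘ₗ S := Kf F S hS m

/-! Mirror lemmas towards `K6`. -/

lemma eps_t_Reo_eq (m : V) (x : H) : eps_t F (x * F.eo m) = eps_t F (x * F.e m) := by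
  rw [eps_t_apply, eps_t_apply]
  refine Finset.sum_congr rfl fun k _ => ?_
  rw [← mul_assoc, counit_mul_eo, mul_assoc]

lemma b'map (hS : F.IsAntipode S) (m : V) :
    cnv F LinearMap.id (mulLeft K (F.eo m) ∘ₗ S) = eps_t F ∘ₗ mulRight K (F.e m) := by
  apply LinearMap.ext; intro a
  rw [cnv_apply]
  have hmv := DFunLike.congr_fun (move_LR (F.eo m) LinearMap.id S) (F.comul a)
  simp only [comp_apply] at hmv
  rw [hmv]
  have : mulRight K (F.eo m) ∘ₗ LinearMap.id = mulRight K (F.eo m) := LinearMap.comp_id _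
  rw [this, W5 F S hS, eps_t_Reo_eq]; rfl

lemma a'map (hS : F.IsAntipode S) (m : V) :
    cnv F LinearMap.id (S ∘ₗ mulRight K (F.e m)) = eps_t F ∘ₗ mulRight K (F.e m) := by
  apply LinearMap.ext; intro a
  rw [cnv_apply]
  have e1 : map LinearMap.id (S ∘ₗ mulRight K (F.e m)) (F.comul a)
      = map LinearMap.id S (lTensor H (mulRight K (F.e m)) (F.comul a)) :=
    DFunLike.congr_fun (map_precomp_right LinearMap.id S (mulRight K (F.e m))) _
  rw [e1, ← R1map F m, G3]
  have e2 := DFunLike.congr_fun (CRg_nat (mul' K H ∘ₗ map LinearMap.id S) (eR F m))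
      (rTensor H F.comul (F.comul a))
  simp only [comp_apply] at e2
  rw [e2, ← comp_apply (rTensor H (mul' K H ∘ₗ map LinearMap.id S)) (rTensor H F.comul),
    ← rTensor_comp, hS2c F S hS]
  have e3 := DFunLike.congr_fun (CRg_nat (eps_t F) (eR F m)) (F.comul a)
  simp only [comp_apply] at e3
  rw [← e3, R1]
  simp only [comp_apply, R1]

lemma d'map (hS : F.IsAntipode S) (m : V) :
    cnv F (S ∘ₗ mulRight K (F.e m)) LinearMap.id = mulRight K (F.eo m) ∘ₗ eps_s F := by
  apply LinearMap.ext; intro a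
  rw [cnv_apply]
  have e1 : map (S ∘ₗ mulRight K (F.e m)) LinearMap.id (F.comul a)
      = map S LinearMap.id (rTensor H (mulRight K (F.e m)) (F.comul a)) :=
    DFunLike.congr_fun (map_precomp_left S (mulRight K (F.e m)) LinearMap.id) _
  rw [e1, ← R1map F m, ← G1, R2map]
  have e2 : map S LinearMap.id (lTensor H (mulRight K (F.eo m)) (F.comul a))
      = map S (mulRight K (F.eo m)) (F.comul a) := by
    have := map_precomp_right (K := K) (H := H) S LinearMap.id (mulRight K (F.eo m))
    rw [LinearMap.id_comp] at this
    exact (DFunLike.congr_fun this _).symm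
  rw [e2]
  have e3 : mul' K H ∘ₗ map S (mulRight K (F.eo m))
      = mulRight K (F.eo m) ∘ₗ mul' K H ∘ₗ map S LinearMap.id := by
    have := move_Rc (K := K) (H := H) (F.eo m) S LinearMap.id
    rwa [LinearMap.comp_id] at this
  have e3' := DFunLike.congr_fun e3 (F.comul a)
  simp only [comp_apply] at e3'
  rw [e3']
  have := DFunLike.congr_fun (hS1c F S hS) a
  simp only [comp_apply] at this
  rw [this]; rfl

lemma e'map (hS : F.IsAntipode S) (m : V) :
    cnv F (S ∘ₗ mulRight K (F.e m)) (eps_t F ∘ₗ mulRight K (F.e m))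
      = S ∘ₗ mulRight K (F.e m) := by
  apply LinearMap.ext; intro a
  rw [eps_t_comp_eR, cnv_sum_right, LinearMap.sum_apply]
  have hterm : ∀ k, cnv F (S ∘ₗ mulRight K (F.e m)) ((eLR F k m).smulRight (F.eo k)) a
      = S (F.e k * (a * F.e m)) * F.eo k := by
    intro k
    rw [cnv_smulRight_right, R5']
    simp only [comp_apply, mulRight_apply]
    congr 2
    rw [mul_assoc (F.e k) (a * F.e m) (F.e m), mul_assoc a (F.e m) (F.e m),
      F.e_mul_e, if_pos rfl]
  rw [Finset.sum_congr rfl fun k _ => hterm k]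
  rw [comp_apply, mulRight_apply]
  exact (K4 F S hS (a * F.e m)).symm

lemma f'map (hS : F.IsAntipode S) (m : V) :
    cnv F (mulLeft K (F.eo m) ∘ₗ eps_s F) (mulLeft K (F.eo m) ∘ₗ S)
      = mulLeft K (F.eo m) ∘ₗ S := by
  have key : mul' K H ∘ₗ map (mulLeft K (F.eo m) ∘ₗ eps_s F) (mulLeft K (F.eo m) ∘ₗ S)
      = mulLeft K (F.eo m) ∘ₗ mul' K H ∘ₗ map (eps_s F) S := by
    apply TensorProduct.ext'; intro x y
    simp only [comp_apply, map_tmul, mul'_apply, mulLeft_apply]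
    calc (F.eo m * eps_s F x) * (F.eo m * S y)
        = F.eo m * (eps_s F x * (F.eo m * S y)) := by rw [mul_assoc]
      _ = F.eo m * ((eps_s F x * F.eo m) * S y) := by rw [mul_assoc]
      _ = F.eo m * ((F.eo m * eps_s F x) * S y) := by rw [← eps_s_comm_eo]
      _ = (F.eo m * (F.eo m * eps_s F x)) * S y := by rw [← mul_assoc]
      _ = ((F.eo m * F.eo m) * eps_s F x) * S y := by rw [← mul_assoc]
      _ = (F.eo m * eps_s F x) * S y := by rw [F.eo_mul_eo, if_pos rfl]
      _ = F.eo m * (eps_s F x * S y) := by rw [mul_assoc]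
  apply LinearMap.ext; intro a
  have hk := DFunLike.congr_fun key (F.comul a)
  simp only [comp_apply] at hk
  rw [cnv_apply, hk]
  have := DFunLike.congr_fun (cnv_eps_s_S F S hS) a
  rw [cnv_apply] at this
  rw [this]; rfl

lemma match_d' (m : V) :
    mulRight K (F.eo m) ∘ₗ eps_s F = mulLeft K (F.eo m) ∘ₗ eps_s F := by
  apply LinearMap.ext; intro x
  simp only [comp_apply, mulRight_apply, mulLeft_apply]
  exact (eps_s_comm_eo F m x).symm

lemma K6 (hS : F.IsAntipode S) (m : V) :
    S ∘ₗ mulRight K (F.e m) = mulLeft K (F.eo m) ∘ₗ S := by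
  calc S ∘ₗ mulRight K (F.e m)
      = cnv F (S ∘ₗ mulRight K (F.e m)) (eps_t F ∘ₗ mulRight K (F.e m)) :=
        (e'map F S hS m).symm
    _ = cnv F (S ∘ₗ mulRight K (F.e m)) (cnv F LinearMap.id (mulLeft K (F.eo m) ∘ₗ S)) := by
        rw [b'map F S hS]
    _ = cnv F (cnv F (S ∘ₗ mulRight K (F.e m)) LinearMap.id) (mulLeft K (F.eo m) ∘ₗ S) :=
        (cnv_assoc ..).symm
    _ = cnv F (mulRight K (F.eo m) ∘ₗ eps_s F) (mulLeft K (F.eo m) ∘ₗ S) := by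
        rw [d'map F S hS]
    _ = cnv F (mulLeft K (F.eo m) ∘ₗ eps_s F) (mulLeft K (F.eo m) ∘ₗ S) := by rw [match_d']
    _ = mulLeft K (F.eo m) ∘ₗ S := f'map F S hS m

/-! `S 1 = 1` and the values of `S` on the face idempotents. -/

lemma S_one (hS : F.IsAntipode S) : S 1 = 1 := by
  have e1 : mul' K H (lTensor H S (F.comul 1)) = ∑ k, F.e k * S (F.eo k) := by
    rw [comul_one', map_sum]
    simp only [map_sum, lTensor_tmul, mul'_apply]
  have e2 : (∑ n, F.counit (F.e n * 1) • F.eo n : H) = 1 := by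
    simp only [mul_one, counit_e, one_smul]
    exact F.sum_eo
  have h := hS.2.1 1
  rw [e1, e2] at h
  rw [K3 F S hS 1]
  simpa [one_mul] using h

lemma S_eo (hS : F.IsAntipode S) (m : V) : S (F.eo m) = F.e m := by
  have := DFunLike.congr_fun (K5 F S hS m) 1
  simp only [comp_apply, mulLeft_apply, mulRight_apply, mul_one] at this
  rw [this, S_one F S hS, one_mul]

lemma S_e (hS : F.IsAntipode S) (m : V) : S (F.e m) = F.eo m := by
  have := DFunLike.congr_fun (K6 F S hS m) 1
  simp only [comp_apply, mulLeft_apply, mulRight_apply, one_mul] at this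
  rw [this, S_one F S hS, mul_one]


/-! The comultiplication of `H ⊗ H` and convolution on `Hom(H ⊗ H, H)`. -/

noncomputable def Delta2 : H ⊗[K] H →ₗ[K] (H ⊗[K] H) ⊗[K] (H ⊗[K] H) :=
  (TensorProduct.tensorTensorTensorComm K H H H H).toLinearMap ∘ₗ map F.comul F.comul

lemma Delta2_tmul (a b : H) : Delta2 F (a ⊗ₜ b)
    = (TensorProduct.tensorTensorTensorComm K H H H H) (F.comul a ⊗ₜ F.comul b) := by
  simp [Delta2]

lemma D2L1 : rTensor (H ⊗[K] H) (Delta2 F)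
      ∘ₗ (TensorProduct.tensorTensorTensorComm K H H H H).toLinearMap
    = rTensor (H ⊗[K] H) (TensorProduct.tensorTensorTensorComm K H H H H).toLinearMap
      ∘ₗ (TensorProduct.tensorTensorTensorComm K (H ⊗[K] H) H (H ⊗[K] H) H).toLinearMap
      ∘ₗ map (rTensor H F.comul) (rTensor H F.comul) := by
  apply TensorProduct.ext_fourfold'; intro x1 x2 y1 y2
  simp [Delta2, TensorProduct.tensorTensorTensorComm_tmul]

lemma D2L2 : lTensor (H ⊗[K] H) (Delta2 F)
      ∘ₗ (TensorProduct.tensorTensorTensorComm K H H H H).toLinearMap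
    = lTensor (H ⊗[K] H) (TensorProduct.tensorTensorTensorComm K H H H H).toLinearMap
      ∘ₗ (TensorProduct.tensorTensorTensorComm K H (H ⊗[K] H) H (H ⊗[K] H)).toLinearMap
      ∘ₗ map (lTensor H F.comul) (lTensor H F.comul) := by
  apply TensorProduct.ext_fourfold'; intro x1 x2 y1 y2
  simp [Delta2, TensorProduct.tensorTensorTensorComm_tmul]

lemma D2L3 : (TensorProduct.assoc K (H ⊗[K] H) (H ⊗[K] H) (H ⊗[K] H)).toLinearMap
      ∘ₗ rTensor (H ⊗[K] H) (TensorProduct.tensorTensorTensorComm K H H H H).toLinearMap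
      ∘ₗ (TensorProduct.tensorTensorTensorComm K (H ⊗[K] H) H (H ⊗[K] H) H).toLinearMap
    = lTensor (H ⊗[K] H) (TensorProduct.tensorTensorTensorComm K H H H H).toLinearMap
      ∘ₗ (TensorProduct.tensorTensorTensorComm K H (H ⊗[K] H) H (H ⊗[K] H)).toLinearMap
      ∘ₗ map (TensorProduct.assoc K H H H).toLinearMap (TensorProduct.assoc K H H H).toLinearMap := by
  apply TensorProduct.ext_fourfold'; intro w x y z
  induction w using TensorProduct.induction_on with
  | zero => simp only [zero_tmul, map_zero]
  | add p q hp hq => simp only [add_tmul, map_add] at *; rw [hp, hq]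
  | tmul w1 w2 =>
    induction y using TensorProduct.induction_on with
    | zero => simp only [zero_tmul, tmul_zero, map_zero]
    | add p q hp hq => simp only [add_tmul, tmul_add, map_add] at *; rw [hp, hq]
    | tmul y1 y2 =>
      simp [TensorProduct.tensorTensorTensorComm_tmul, TensorProduct.assoc_tmul]

lemma Delta2_coassoc : ∀ z : H ⊗[K] H,
    (TensorProduct.assoc K (H ⊗[K] H) (H ⊗[K] H) (H ⊗[K] H))
        (rTensor (H ⊗[K] H) (Delta2 F) (Delta2 F z))
      = lTensor (H ⊗[K] H) (Delta2 F) (Delta2 F z) := by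
  intro z
  induction z using TensorProduct.induction_on with
  | zero => simp
  | add p q hp hq => simp only [map_add] at *; rw [hp, hq]
  | tmul a b =>
    rw [Delta2_tmul]
    have h1 := DFunLike.congr_fun (D2L1 F) (F.comul a ⊗ₜ F.comul b)
    simp only [comp_apply, LinearEquiv.coe_coe, map_tmul] at h1
    have h2 := DFunLike.congr_fun (D2L2 F) (F.comul a ⊗ₜ F.comul b)
    simp only [comp_apply, LinearEquiv.coe_coe, map_tmul] at h2
    have h3 := DFunLike.congr_fun (D2L3 (K := K) (H := H))
      ((rTensor H F.comul (F.comul a)) ⊗ₜ (rTensor H F.comul (F.comul b)))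
    simp only [comp_apply, LinearEquiv.coe_coe, map_tmul] at h3
    rw [h1, h2, h3, F.coassoc a, F.coassoc b]

lemma Delta2_mulmap : map (mul' K H) (mul' K H) ∘ₗ Delta2 F = F.comul ∘ₗ mul' K H := by
  have key : map (mul' K H) (mul' K H)
      ∘ₗ (TensorProduct.tensorTensorTensorComm K H H H H).toLinearMap
      = mul' K (H ⊗[K] H) := by
    apply TensorProduct.ext_fourfold'; intro x1 x2 y1 y2
    simp [TensorProduct.tensorTensorTensorComm_tmul, Algebra.TensorProduct.tmul_mul_tmul]
  apply TensorProduct.ext'; intro a b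
  have hk := DFunLike.congr_fun key (F.comul a ⊗ₜ F.comul b)
  simp only [comp_apply, LinearEquiv.coe_coe] at hk ⊢
  rw [Delta2_tmul, hk, mul'_apply, mul'_apply, F.comul_mul]

noncomputable def cnv2 (f g : H ⊗[K] H →ₗ[K] H) : H ⊗[K] H →ₗ[K] H :=
  mul' K H ∘ₗ map f g ∘ₗ Delta2 F

lemma cnv2_assoc (f g h : H ⊗[K] H →ₗ[K] H) :
    cnv2 F (cnv2 F f g) h = cnv2 F f (cnv2 F g h) :=
  conv_assoc_of (Delta2 F) (Delta2_coassoc F) f g h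

lemma cnv2_pullback (f g : H →ₗ[K] H) :
    cnv2 F (f ∘ₗ mul' K H) (g ∘ₗ mul' K H) = cnv F f g ∘ₗ mul' K H := by
  apply LinearMap.ext; intro z
  have h1 : map (f ∘ₗ mul' K H) (g ∘ₗ mul' K H) (Delta2 F z)
      = map f g (map (mul' K H) (mul' K H) (Delta2 F z)) := by
    have := TensorProduct.map_comp f g (mul' K H) (mul' K H)
    rw [this]; rfl
  have h2 := DFunLike.congr_fun (Delta2_mulmap F) z
  simp only [comp_apply] at h2
  simp only [cnv2, cnv, comp_apply, h1, h2]


/-- The antihomomorphism candidate `a ⊗ b ↦ S(b) S(a)`. -/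
noncomputable def fM : H ⊗[K] H →ₗ[K] H :=
  mul' K H ∘ₗ map S S ∘ₗ (TensorProduct.comm K H H).toLinearMap

lemma fM_tmul (x y : H) : fM S (x ⊗ₜ y) = S y * S x := by
  simp [fM]

lemma A2 (u v : H ⊗[K] H) :
    mul' K H (map (mul' K H) (fM S) ((TensorProduct.tensorTensorTensorComm K H H H H) (u ⊗ₜ v)))
      = mul' K H (((1 : H) ⊗ₜ[K] (mul' K H (lTensor H S v))) * (map LinearMap.id S u)) := by
  induction u using TensorProduct.induction_on with
  | zero => simp
  | add p q hp hq =>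
      simp only [add_tmul, map_add, mul_add] at *
      rw [hp, hq]
  | tmul x1 x2 =>
    induction v using TensorProduct.induction_on with
    | zero => simp
    | add p q hp hq =>
        simp only [tmul_add, map_add, add_mul] at *
        rw [hp, hq]
    | tmul y1 y2 =>
        simp only [TensorProduct.tensorTensorTensorComm_tmul, map_tmul, mul'_apply,
          fM_tmul, lTensor_tmul, LinearMap.id_coe, id_eq,
          Algebra.TensorProduct.tmul_mul_tmul, one_mul, mul_assoc]

lemma Wn (hS : F.IsAntipode S) (n : V) (a : H) :
    mul' K H (((1 : H) ⊗ₜ[K] F.eo n) * (map LinearMap.id S (F.comul a)))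
      = eps_t F (a * F.eo n) := by
  rw [mul_tmul_left]
  have h1 : map (mulLeft K (1 : H)) (mulLeft K (F.eo n)) (map LinearMap.id S (F.comul a))
      = map LinearMap.id (mulLeft K (F.eo n) ∘ₗ S) (F.comul a) := by
    have h0 := TensorProduct.map_comp (LinearMap.id : H →ₗ[K] H) (mulLeft K (F.eo n))
      LinearMap.id S
    rw [LinearMap.comp_id] at h0
    rw [LinearMap.mulLeft_one]
    exact (DFunLike.congr_fun h0 (F.comul a)).symm
  rw [h1]
  have h2 := DFunLike.congr_fun (move_LR (F.eo n) LinearMap.id S) (F.comul a)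
  simp only [comp_apply] at h2
  rw [h2, LinearMap.comp_id, W5 F S hS]

lemma eps_t_mul (a b : H) :
    eps_t F (a * b) = ∑ n, F.counit (F.e n * b) • eps_t F (a * F.eo n) := by
  rw [eps_t_apply]
  have hL : ∀ m, F.counit (F.e m * (a * b)) • F.eo m
      = ∑ n, (F.counit ((F.e m * a) * F.e n) * F.counit (F.eo n * b)) • F.eo m := by
    intro m
    rw [← mul_assoc, F.counit_mul, Finset.sum_smul]
  rw [Finset.sum_congr rfl fun m _ => hL m, Finset.sum_comm]
  refine Finset.sum_congr rfl fun n _ => ?_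
  rw [eps_t_apply, Finset.smul_sum]
  refine Finset.sum_congr rfl fun m _ => ?_
  rw [smul_smul]
  congr 1
  have h1 : F.counit (F.e m * (a * F.eo n)) = F.counit ((F.e m * a) * F.e n) := by
    rw [← mul_assoc, counit_mul_eo]
  rw [h1, ← counit_e_mul, mul_comm]

lemma AM1 (hS : F.IsAntipode S) :
    cnv2 F (mul' K H) (fM S) = eps_t F ∘ₗ mul' K H := by
  apply TensorProduct.ext'; intro a b
  simp only [cnv2, comp_apply, mul'_apply]
  rw [Delta2_tmul, A2, hS.2.1 b]
  rw [tmul_sum]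
  have hsm : ∀ n, (1 : H) ⊗ₜ[K] (F.counit (F.e n * b) • F.eo n)
      = F.counit (F.e n * b) • ((1 : H) ⊗ₜ[K] F.eo n) := fun n => tmul_smul ..
  simp only [hsm]
  rw [Finset.sum_mul]
  simp only [smul_mul_assoc, map_sum, map_smul, Wn F S hS]
  exact (eps_t_mul F a b).symm


lemma K5' (hS : F.IsAntipode S) (m : V) (x : H) : S (F.eo m * x) = S x * F.e m := by
  have := DFunLike.congr_fun (K5 F S hS m) x
  simpa using this

lemma K6' (hS : F.IsAntipode S) (m : V) (x : H) : S (x * F.e m) = F.eo m * S x := by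
  have := DFunLike.congr_fun (K6 F S hS m) x
  simpa using this

lemma psi_eq (m n : V) :
    F.counit ∘ₗ mulLeft K (F.eo m) ∘ₗ mulRight K (F.e n) = eLR F m n := by
  apply LinearMap.ext; intro x
  simp only [comp_apply, mulLeft_apply, mulRight_apply, eLR_apply]
  rw [← counit_e_mul]

lemma A1 (u v : H ⊗[K] H) :
    mul' K H (map (eps_s F ∘ₗ mul' K H) (fM S)
      ((TensorProduct.tensorTensorTensorComm K H H H H) (u ⊗ₜ v)))
      = ∑ n, ∑ m, F.e n * S (CLg (F.counit ∘ₗ mulLeft K (F.eo m) ∘ₗ mulRight K (F.e n)) v)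
          * S (CLg (eR F m) u) := by
  induction u using TensorProduct.induction_on with
  | zero => simp
  | add p q hp hq =>
      simp only [add_tmul, map_add, mul_add, Finset.sum_add_distrib] at *
      rw [hp, hq]
  | tmul x1 x2 =>
    induction v using TensorProduct.induction_on with
    | zero => simp
    | add p q hp hq =>
        simp only [tmul_add, map_add, mul_add, add_mul, Finset.sum_add_distrib] at *
        rw [hp, hq]
    | tmul y1 y2 =>
        simp only [TensorProduct.tensorTensorTensorComm_tmul, map_tmul, comp_apply,
          mul'_apply, fM_tmul, CLg_tmul, LinearMap.map_smul, eR_apply,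
          mulLeft_apply, mulRight_apply, eps_s_apply]
        rw [Finset.sum_mul]
        refine Finset.sum_congr rfl fun n _ => ?_
        rw [smul_mul_assoc, mul_assoc x1 y1 (F.e n), F.counit_mul x1 (y1 * F.e n),
          Finset.sum_smul]
        refine Finset.sum_congr rfl fun m _ => ?_
        simp only [mul_smul_comm, smul_mul_assoc, smul_smul, mul_assoc]

lemma AM2 (hS : F.IsAntipode S) :
    cnv2 F (eps_s F ∘ₗ mul' K H) (fM S) = fM S := by
  apply TensorProduct.ext'; intro a b
  simp only [cnv2, comp_apply]
  rw [Delta2_tmul, A1, fM_tmul]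
  simp only [psi_eq, R5, R2]
  have hterm : ∀ n m : V, F.e n * S (F.eo m * b * F.eo n) * S (a * F.eo m)
      = (F.e n * S (b * F.eo n)) * (F.e m * S (a * F.eo m)) := by
    intro n m
    rw [mul_assoc (F.eo m) b (F.eo n), K5' F S hS m (b * F.eo n),
      ← mul_assoc (F.e n) (S (b * F.eo n)) (F.e m),
      mul_assoc (F.e n * S (b * F.eo n)) (F.e m) (S (a * F.eo m))]
  rw [Finset.sum_congr rfl fun n _ => Finset.sum_congr rfl fun m _ => hterm n m]
  rw [← Finset.sum_mul_sum]
  rw [← K3 F S hS b, ← K3 F S hS a]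

/-- Antimultiplicativity of the antipode. -/
lemma S_mul (hS : F.IsAntipode S) (a b : H) : S (a * b) = S b * S a := by
  have hchain : fM S = S ∘ₗ mul' K H := by
    calc fM S = cnv2 F (eps_s F ∘ₗ mul' K H) (fM S) := (AM2 F S hS).symm
      _ = cnv2 F (cnv F S LinearMap.id ∘ₗ mul' K H) (fM S) := by rw [cnv_S_id F S hS]
      _ = cnv2 F (cnv2 F (S ∘ₗ mul' K H) (LinearMap.id ∘ₗ mul' K H)) (fM S) := by
          rw [cnv2_pullback]
      _ = cnv2 F (cnv2 F (S ∘ₗ mul' K H) (mul' K H)) (fM S) := by rw [LinearMap.id_comp]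
      _ = cnv2 F (S ∘ₗ mul' K H) (cnv2 F (mul' K H) (fM S)) := cnv2_assoc ..
      _ = cnv2 F (S ∘ₗ mul' K H) (eps_t F ∘ₗ mul' K H) := by rw [AM1 F S hS]
      _ = cnv F S (eps_t F) ∘ₗ mul' K H := cnv2_pullback ..
      _ = S ∘ₗ mul' K H := by rw [cnv_S_eps_t F S hS]
  have := DFunLike.congr_fun hchain (a ⊗ₜ[K] b)
  rw [fM_tmul] at this
  simpa using this.symm


/-! Anticomultiplicativity. -/

lemma S_e_mul (hS : F.IsAntipode S) (m : V) (x : H) : S (F.e m * x) = S x * F.eo m := by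
  rw [S_mul F S hS, S_e F S hS]

lemma S_mul_eo (hS : F.IsAntipode S) (m : V) (x : H) : S (x * F.eo m) = F.e m * S x := by
  rw [S_mul F S hS, S_eo F S hS]

/-- The anticomultiplicativity candidate `a ↦ Σ S(a₂) ⊗ S(a₁)`. -/
noncomputable def Dop : H →ₗ[K] H ⊗[K] H :=
  ((TensorProduct.comm K H H).toLinearMap ∘ₗ map S S) ∘ₗ F.comul

lemma Dop_apply (a : H) : Dop F S a
    = (TensorProduct.comm K H H) (map S S (F.comul a)) := rfl

lemma hco_map : rTensor H F.comul ∘ₗ F.comul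
    = (TensorProduct.assoc K H H H).symm.toLinearMap ∘ₗ lTensor H F.comul ∘ₗ F.comul := by
  apply LinearMap.ext; intro a
  simpa using hco_symm F a

/-- shuffle `x ⊗ (w ⊗ z) ↦ (x ⊗ z) ⊗ w`. -/
noncomputable def sig2 : H ⊗[K] ((H ⊗[K] H) ⊗[K] H) →ₗ[K] (H ⊗[K] H) ⊗[K] (H ⊗[K] H) :=
  (TensorProduct.assoc K H H (H ⊗[K] H)).symm.toLinearMap
    ∘ₗ lTensor H (TensorProduct.comm K (H ⊗[K] H) H).toLinearMap

/-- shuffle `x ⊗ (y ⊗ z) ↦ (x ⊗ z) ⊗ y`. -/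
noncomputable def sig20 : H ⊗[K] (H ⊗[K] H) →ₗ[K] (H ⊗[K] H) ⊗[K] H :=
  (TensorProduct.assoc K H H H).symm.toLinearMap
    ∘ₗ lTensor H (TensorProduct.comm K H H).toLinearMap

lemma sig2_tmul (x : H) (w : H ⊗[K] H) (z : H) :
    sig2 (x ⊗ₜ (w ⊗ₜ z)) = (x ⊗ₜ z) ⊗ₜ w := by
  simp [sig2, TensorProduct.assoc_symm_tmul]

lemma sig20_tmul (x y z : H) : sig20 (x ⊗ₜ (y ⊗ₜ z)) = (x ⊗ₜ[K] z) ⊗ₜ y := by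
  simp [sig20, TensorProduct.assoc_symm_tmul]

/-- `Φmid`. -/
noncomputable def Phimid : H ⊗[K] ((H ⊗[K] H) ⊗[K] H) →ₗ[K] H ⊗[K] H :=
  map (mul' K H ∘ₗ map LinearMap.id S) (mul' K H ∘ₗ map LinearMap.id S) ∘ₗ sig2

/-- The key shuffle identity (C2-i). -/
lemma C2i : mul' K (H ⊗[K] H) ∘ₗ lTensor (H ⊗[K] H)
        (((TensorProduct.comm K H H).toLinearMap ∘ₗ map S S))
      ∘ₗ (TensorProduct.assoc K H H (H ⊗[K] H)).symm.toLinearMap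
    = Phimid S ∘ₗ lTensor H (TensorProduct.assoc K H H H).symm.toLinearMap := by
  apply TensorProduct.ext'; intro x w2
  induction w2 using TensorProduct.induction_on with
  | zero => simp only [tmul_zero, map_zero]
  | add p q hp hq => simp only [tmul_add, map_add] at *; rw [hp, hq]
  | tmul y w =>
    induction w using TensorProduct.induction_on with
    | zero => simp only [tmul_zero, map_zero]
    | add p q hp hq => simp only [tmul_add, map_add] at *; rw [hp, hq]
    | tmul u v =>
      simp only [comp_apply, LinearEquiv.coe_coe, TensorProduct.assoc_symm_tmul,
        lTensor_tmul, map_tmul, TensorProduct.comm_tmul, mul'_apply,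
        Algebra.TensorProduct.tmul_mul_tmul, Phimid, sig2_tmul,
        LinearMap.id_coe, id_eq]

/-- `assoc ∘ lTensor Δ ∘ assoc.symm = lTensor (lTensor Δ)` (generic shuffle). -/
lemma C2ii (D : H →ₗ[K] H ⊗[K] H) :
    (TensorProduct.assoc K H H (H ⊗[K] H)).toLinearMap ∘ₗ lTensor (H ⊗[K] H) D
        ∘ₗ (TensorProduct.assoc K H H H).symm.toLinearMap
      = lTensor H (lTensor H D) := by
  apply TensorProduct.ext'; intro x w
  induction w using TensorProduct.induction_on with
  | zero => simp only [tmul_zero, map_zero]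
  | add p q hp hq => simp only [tmul_add, map_add] at *; rw [hp, hq]
  | tmul y z =>
    simp only [comp_apply, LinearEquiv.coe_coe, TensorProduct.assoc_symm_tmul,
      lTensor_tmul, TensorProduct.assoc_tmul]

/-- `σ₂ ∘ lTensor (rTensor D) = lTensor D ∘ σ₂0` (generic shuffle). -/
lemma C2iii (D : H →ₗ[K] H ⊗[K] H) :
    sig2 ∘ₗ lTensor H (rTensor H D) = lTensor (H ⊗[K] H) D ∘ₗ (sig20 (K := K) (H := H)) := by
  apply TensorProduct.ext'; intro x w
  induction w using TensorProduct.induction_on with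
  | zero => simp only [tmul_zero, map_zero]
  | add p q hp hq => simp only [tmul_add, map_add] at *; rw [hp, hq]
  | tmul y z =>
    simp only [comp_apply, lTensor_tmul, rTensor_tmul, sig2_tmul, sig20_tmul]

lemma map_sum_right {ι : Type*} (s : Finset ι) (f : H →ₗ[K] H) (g : ι → (H →ₗ[K] H)) :
    (map f (∑ i ∈ s, g i) : H ⊗[K] H →ₗ[K] H ⊗[K] H) = ∑ i ∈ s, map f (g i) := by
  apply TensorProduct.ext'; intro x y
  simp [LinearMap.sum_apply, tmul_sum]

lemma map_smulRight_right (f : H →ₗ[K] H) (ψ : H →ₗ[K] K) (c : H) :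
    (map f (ψ.smulRight c) : H ⊗[K] H →ₗ[K] H ⊗[K] H)
      = (TensorProduct.mk K H H).flip c ∘ₗ f ∘ₗ CRg ψ := by
  apply TensorProduct.ext'; intro x y
  simp [smul_tmul', tmul_smul]

lemma CRg_sig20 (ψ : H →ₗ[K] K) :
    (CRg ψ : (H ⊗[K] H) ⊗[K] H →ₗ[K] H ⊗[K] H) ∘ₗ (sig20 (K := K) (H := H))
      = lTensor H (CLg ψ) := by
  apply TensorProduct.ext'; intro x w
  induction w using TensorProduct.induction_on with
  | zero => simp only [tmul_zero, map_zero]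
  | add p q hp hq => simp only [tmul_add, map_add] at *; rw [hp, hq]
  | tmul y z =>
    simp only [comp_apply, sig20_tmul, CRg_tmul, lTensor_tmul, CLg_tmul, tmul_smul]

lemma map_sum_gen {M : Type*} [AddCommGroup M] [Module K M] {ι : Type*} (s : Finset ι)
    (f : M →ₗ[K] H) (g : ι → (H →ₗ[K] H)) :
    (map f (∑ i ∈ s, g i) : M ⊗[K] H →ₗ[K] H ⊗[K] H) = ∑ i ∈ s, map f (g i) := by
  apply TensorProduct.ext'; intro x y
  simp [LinearMap.sum_apply, tmul_sum]

lemma map_smulRight_gen {M : Type*} [AddCommGroup M] [Module K M]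
    (f : M →ₗ[K] H) (ψ : H →ₗ[K] K) (c : H) :
    (map f (ψ.smulRight c) : M ⊗[K] H →ₗ[K] H ⊗[K] H)
      = (TensorProduct.mk K H H).flip c ∘ₗ f ∘ₗ CRg ψ := by
  apply TensorProduct.ext'; intro x y
  simp [smul_tmul', tmul_smul]

lemma comul_eps_t (a : H) :
    F.comul (eps_t F a) = ∑ n, (F.e n * eps_t F a) ⊗ₜ[K] F.eo n := by
  conv_lhs => rw [eps_t_apply]
  rw [map_sum]
  simp only [map_smul, comul_eo]
  simp only [Finset.smul_sum]
  rw [Finset.sum_comm]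
  refine Finset.sum_congr rfl fun ν _ => ?_
  conv_rhs => rw [eps_t_apply, Finset.mul_sum]
  have h1 : ∀ m, F.e ν * (F.counit (F.e m * a) • F.eo m)
      = F.counit (F.e m * a) • (F.eo m * F.e ν) := by
    intro m; rw [mul_smul_comm, F.e_mul_eo]
  simp only [h1]
  rw [sum_tmul]
  refine Finset.sum_congr rfl fun m _ => ?_
  rw [smul_tmul']

lemma C2 (hS : F.IsAntipode S) :
    cnv F F.comul (Dop F S) = F.comul ∘ₗ eps_t F := by
  apply LinearMap.ext; intro a
  rw [cnv_apply, comp_apply]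
  set Q : H ⊗[K] H →ₗ[K] H ⊗[K] H :=
    (TensorProduct.comm K H H).toLinearMap ∘ₗ map S S with hQ
  -- Step 0 : expand the second `Δ`.
  have h0 : map F.comul (Dop F S) (F.comul a)
      = map F.comul Q (lTensor H F.comul (F.comul a)) := by
    have := TensorProduct.map_comp F.comul Q LinearMap.id F.comul
    rw [LinearMap.comp_id] at this
    rw [show Dop F S = Q ∘ₗ F.comul from rfl, this]; rfl
  rw [h0]
  -- Step 1 : `map Δ Q = lTensor Q ∘ rTensor Δ`.
  have h1 : map F.comul Q (lTensor H F.comul (F.comul a))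
      = lTensor (H ⊗[K] H) Q (rTensor (H ⊗[K] H) F.comul (lTensor H F.comul (F.comul a))) := by
    have hsplit : (map F.comul Q : H ⊗[K] (H ⊗[K] H) →ₗ[K] _)
        = lTensor (H ⊗[K] H) Q ∘ₗ rTensor (H ⊗[K] H) F.comul := by
      apply TensorProduct.ext'; intro x w; simp
    rw [hsplit]; rfl
  rw [h1]
  set u : H ⊗[K] (H ⊗[K] H) := lTensor H F.comul (F.comul a) with hu
  set w1 : (H ⊗[K] H) ⊗[K] (H ⊗[K] H) := rTensor (H ⊗[K] H) F.comul u with hw1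
  -- Step 2 : apply the shuffle identity C2i.
  have h2 : mul' K (H ⊗[K] H) (lTensor (H ⊗[K] H) Q w1)
      = Phimid S (lTensor H (TensorProduct.assoc K H H H).symm.toLinearMap
          ((TensorProduct.assoc K H H (H ⊗[K] H)) w1)) := by
    have hc := DFunLike.congr_fun (C2i S) ((TensorProduct.assoc K H H (H ⊗[K] H)) w1)
    simp only [comp_apply, LinearEquiv.coe_coe, LinearEquiv.symm_apply_apply] at hc
    exact hc
  rw [h2]
  -- Step 3 : identify the element with the middle-expanded `Δ²`.
  have hswap : rTensor (H ⊗[K] H) F.comul ∘ₗ lTensor H F.comul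
      = lTensor (H ⊗[K] H) F.comul ∘ₗ rTensor H F.comul := by
    apply TensorProduct.ext'; intro x y; simp
  have e_w1 : w1 = lTensor (H ⊗[K] H) F.comul
      ((TensorProduct.assoc K H H H).symm (lTensor H F.comul (F.comul a))) := by
    rw [hw1, hu, ← comp_apply, hswap, comp_apply, hco_symm F a]
  have e_assoc : ((TensorProduct.assoc K H H (H ⊗[K] H)) w1)
      = lTensor H (lTensor H F.comul) u := by
    rw [e_w1]
    have hc := DFunLike.congr_fun (C2ii F.comul) (lTensor H F.comul (F.comul a))
    simp only [comp_apply, LinearEquiv.coe_coe] at hc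
    rw [hu]
    exact hc
  rw [e_assoc]
  have hcompA : (TensorProduct.assoc K H H H).symm.toLinearMap
      ∘ₗ (lTensor H F.comul ∘ₗ F.comul) = rTensor H F.comul ∘ₗ F.comul := (hco_map F).symm
  have e_N : lTensor H (TensorProduct.assoc K H H H).symm.toLinearMap
      (lTensor H (lTensor H F.comul) u) = lTensor H (rTensor H F.comul) u := by
    rw [hu, ← comp_apply, ← lTensor_comp, ← comp_apply, ← lTensor_comp]
    rw [← comp_apply (lTensor H (rTensor H F.comul)) (lTensor H F.comul), ← lTensor_comp]
    congr 1
    rw [LinearMap.comp_assoc, hcompA]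
  rw [e_N]
  -- Step 4 : contract the middle pair via `hS2c`.
  set g : H ⊗[K] H →ₗ[K] H := mul' K H ∘ₗ map LinearMap.id S with hg
  have h5 : Phimid S (lTensor H (rTensor H F.comul) u)
      = map g (eps_t F) (sig20 u) := by
    have hsig := DFunLike.congr_fun (C2iii F.comul) u
    simp only [comp_apply] at hsig
    have hmc := TensorProduct.map_comp g g LinearMap.id F.comul
    rw [LinearMap.comp_id] at hmc
    have hmc2 : map g (g ∘ₗ F.comul) = map g g ∘ₗ lTensor (H ⊗[K] H) F.comul := hmc
    have hPh : Phimid S (lTensor H (rTensor H F.comul) u)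
        = map g g (lTensor (H ⊗[K] H) F.comul (sig20 u)) := by
      simp only [Phimid, comp_apply, hsig, hg]
    rw [hPh, ← comp_apply (map g g) (lTensor (H ⊗[K] H) F.comul), ← hmc2, hg,
      hS2c F S hS]
  rw [h5]
  -- Step 5 : evaluate.
  have h6 : map g (eps_t F) (sig20 u) = ∑ n, (F.e n * eps_t F a) ⊗ₜ[K] F.eo n := by
    rw [show eps_t F = ∑ n, (eL F n).smulRight (F.eo n) from rfl]
    rw [map_sum_gen, LinearMap.sum_apply]
    refine Finset.sum_congr rfl fun n _ => ?_
    rw [map_smulRight_gen]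
    simp only [comp_apply]
    have hc := DFunLike.congr_fun (CRg_sig20 (eL F n)) u
    simp only [comp_apply] at hc
    rw [hc, hu, ← comp_apply (lTensor H (CLg (eL F n))) (lTensor H F.comul),
      ← lTensor_comp, R4map]
    have hpre := map_precomp_right (K := K) (H := H) LinearMap.id S (mulLeft K (F.eo n))
    have hpre' := DFunLike.congr_fun hpre (F.comul a)
    simp only [comp_apply] at hpre'
    rw [hg]
    simp only [comp_apply]
    rw [← hpre', Kc F S hS n a]
    rfl
  rw [h6, comul_eps_t]


lemma S_eo_e (hS : F.IsAntipode S) (l m : V) :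
    S (F.eo l * F.e m) = F.eo m * F.e l := by
  rw [S_mul F S hS, S_e F S hS, S_eo F S hS]

lemma S_comp_mulRight (hS : F.IsAntipode S) (c : H) :
    S ∘ₗ mulRight K c = mulLeft K (S c) ∘ₗ S := by
  apply LinearMap.ext; intro x
  simp [S_mul F S hS]

lemma comm_mul (z w : H ⊗[K] H) : (TensorProduct.comm K H H) (z * w)
    = (TensorProduct.comm K H H) z * (TensorProduct.comm K H H) w := by
  induction z using TensorProduct.induction_on with
  | zero => simp
  | add p q hp hq => simp only [add_mul, map_add, hp, hq]
  | tmul x y =>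
    induction w using TensorProduct.induction_on with
    | zero => simp
    | add p q hp hq => simp only [mul_add, map_add, hp, hq]
    | tmul x' y' => simp [Algebra.TensorProduct.tmul_mul_tmul]

lemma comul_eps_s : F.comul ∘ₗ eps_s F = ∑ n, (eR F n).smulRight (F.comul (F.e n)) := by
  apply LinearMap.ext; intro x
  simp [eps_s_apply, LinearMap.sum_apply, map_sum]

lemma DeltaOne_mul_Dop (hS : F.IsAntipode S) (a : H) :
    F.comul 1 * Dop F S a = Dop F S a := by
  rw [comul_one', Finset.sum_mul]
  have h1 : ∀ μ, (F.e μ ⊗ₜ[K] F.eo μ) * Dop F S a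
      = (TensorProduct.comm K H H) ((F.eo μ ⊗ₜ[K] F.e μ) * map S S (F.comul a)) := by
    intro μ
    rw [comm_mul, TensorProduct.comm_tmul]
    rfl
  simp only [h1]
  rw [← map_sum]
  have h2 : (∑ μ, (F.eo μ ⊗ₜ[K] F.e μ) * map S S (F.comul a)) = map S S (F.comul a) := by
    have h3 : ∀ μ, (F.eo μ ⊗ₜ[K] F.e μ) * map S S (F.comul a)
        = map S S (map (mulRight K (F.e μ)) (mulRight K (F.eo μ)) (F.comul a)) := by
      intro μ
      rw [mul_tmul_left]
      have hc := TensorProduct.map_comp S S (mulRight K (F.e μ)) (mulRight K (F.eo μ))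
      rw [S_comp_mulRight F S hS (F.e μ), S_comp_mulRight F S hS (F.eo μ),
        S_e F S hS μ, S_eo F S hS μ] at hc
      have hc2 := TensorProduct.map_comp (mulLeft K (F.eo μ)) (mulLeft K (F.e μ)) S S
      rw [hc2] at hc
      have := DFunLike.congr_fun hc (F.comul a)
      simp only [comp_apply] at this
      exact this
    simp only [h3]
    rw [← map_sum, ← comul_id_r]
  rw [h2]
  rfl

lemma C1 (hS : F.IsAntipode S) :
    cnv F (F.comul ∘ₗ eps_s F) (Dop F S) = Dop F S := by
  apply LinearMap.ext; intro a
  rw [comul_eps_s, cnv_sum_left, LinearMap.sum_apply]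
  have hterm1 : ∀ n, cnv F ((eR F n).smulRight (F.comul (F.e n))) (Dop F S) a
      = F.comul (F.e n) * Dop F S (a * F.eo n) := by
    intro n; rw [cnv_smulRight_left, R2]
  rw [Finset.sum_congr rfl fun n _ => hterm1 n]
  have hD : ∀ n, Dop F S (a * F.eo n)
      = ∑ μ, (F.e μ ⊗ₜ[K] (F.eo μ * F.e n)) * Dop F S a := by
    intro n
    rw [Dop_apply, comul_mul_eo, map_sum]
    have h1 : ∀ μ, map S S (map (mulRight K (F.eo n * F.e μ)) (mulRight K (F.eo μ)) (F.comul a))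
        = ((F.eo μ * F.e n) ⊗ₜ[K] F.e μ) * map S S (F.comul a) := by
      intro μ
      have hc := TensorProduct.map_comp S S (mulRight K (F.eo n * F.e μ)) (mulRight K (F.eo μ))
      rw [S_comp_mulRight F S hS (F.eo n * F.e μ), S_comp_mulRight F S hS (F.eo μ),
        S_eo_e F S hS n μ, S_eo F S hS μ] at hc
      have hc2 := TensorProduct.map_comp (mulLeft K (F.eo μ * F.e n)) (mulLeft K (F.e μ)) S S
      rw [hc2] at hc
      have := DFunLike.congr_fun hc.symm (F.comul a)
      simp only [comp_apply] at this
      rw [this, ← mul_tmul_left]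
    simp only [h1]
    rw [map_sum]
    refine Finset.sum_congr rfl fun μ _ => ?_
    rw [comm_mul, TensorProduct.comm_tmul]
    rfl
  rw [Finset.sum_congr rfl fun n _ => by rw [hD n]]
  have hprodidem : ∀ n ν : V, (F.eo ν * F.e n) * (F.eo ν * F.e n) = F.eo ν * F.e n := by
    intro n ν
    rw [mul_assoc (F.eo ν) (F.e n) (F.eo ν * F.e n), ← mul_assoc (F.e n) (F.eo ν) (F.e n),
      F.e_mul_eo, mul_assoc (F.eo ν) (F.e n) (F.e n), F.e_mul_e, if_pos rfl,
      ← mul_assoc, F.eo_mul_eo, if_pos rfl]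
  have hn : ∀ n, F.comul (F.e n) * (∑ μ, (F.e μ ⊗ₜ[K] (F.eo μ * F.e n)) * Dop F S a)
      = ∑ μ, (F.e μ ⊗ₜ[K] (F.eo μ * F.e n)) * Dop F S a := by
    intro n
    rw [Finset.mul_sum]
    refine Finset.sum_congr rfl fun μ _ => ?_
    rw [← mul_assoc, comul_e, Finset.sum_mul]
    have hterm : ∀ ν, (F.e ν ⊗ₜ[K] (F.eo ν * F.e n)) * (F.e μ ⊗ₜ[K] (F.eo μ * F.e n))
        = if ν = μ then F.e μ ⊗ₜ[K] (F.eo μ * F.e n) else 0 := by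
      intro ν
      rw [Algebra.TensorProduct.tmul_mul_tmul, F.e_mul_e]
      split_ifs with h
      · subst h; rw [hprodidem]
      · rw [zero_tmul]
    rw [Finset.sum_congr rfl fun ν _ => hterm ν, Finset.sum_ite_eq' Finset.univ μ]
    simp
  rw [Finset.sum_congr rfl fun n _ => hn n, Finset.sum_comm]
  have hcol : ∀ μ, (∑ n, (F.e μ ⊗ₜ[K] (F.eo μ * F.e n)) * Dop F S a)
      = (F.e μ ⊗ₜ[K] F.eo μ) * Dop F S a := by
    intro μ
    rw [← Finset.sum_mul]
    congr 1
    rw [← tmul_sum, ← eo_eq_sum]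
  rw [Finset.sum_congr rfl fun μ _ => hcol μ, ← Finset.sum_mul, ← comul_one']
  exact DeltaOne_mul_Dop F S hS a

lemma comul_pushforward (f g : H →ₗ[K] H) :
    F.comul ∘ₗ cnv F f g = cnv F (F.comul ∘ₗ f) (F.comul ∘ₗ g) := by
  have key : F.comul ∘ₗ mul' K H = mul' K (H ⊗[K] H) ∘ₗ map F.comul F.comul := by
    apply TensorProduct.ext'; intro x y
    simp [F.comul_mul]
  apply LinearMap.ext; intro a
  simp only [cnv, comp_apply]
  have h1 := DFunLike.congr_fun key (map f g (F.comul a))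
  simp only [comp_apply] at h1
  rw [h1]
  have h2 := TensorProduct.map_comp F.comul F.comul f g
  exact congrArg (mul' K (H ⊗[K] H)) (DFunLike.congr_fun h2.symm (F.comul a))

lemma S_comul (hS : F.IsAntipode S) : F.comul ∘ₗ S = Dop F S := by
  have chain : Dop F S = F.comul ∘ₗ S := by
    calc Dop F S = cnv F (F.comul ∘ₗ eps_s F) (Dop F S) := (C1 F S hS).symm
      _ = cnv F (F.comul ∘ₗ cnv F S LinearMap.id) (Dop F S) := by rw [cnv_S_id F S hS]
      _ = cnv F (cnv F (F.comul ∘ₗ S) (F.comul ∘ₗ LinearMap.id)) (Dop F S) := by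
          rw [comul_pushforward]
      _ = cnv F (cnv F (F.comul ∘ₗ S) F.comul) (Dop F S) := by rw [LinearMap.comp_id]
      _ = cnv F (F.comul ∘ₗ S) (cnv F F.comul (Dop F S)) := cnv_assoc ..
      _ = cnv F (F.comul ∘ₗ S) (F.comul ∘ₗ eps_t F) := by rw [C2 F S hS]
      _ = F.comul ∘ₗ cnv F S (eps_t F) := (comul_pushforward ..).symm
      _ = F.comul ∘ₗ S := by rw [cnv_S_eps_t F S hS]
  exact chain.symm

lemma counit_mul_map : F.counit ∘ₗ mul' K H
    = ∑ n, (F.counit ∘ₗ mulLeft K (F.eo n)) ∘ₗ (CLg (eR F n) : H ⊗[K] H →ₗ[K] H) := by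
  apply TensorProduct.ext'; intro x y
  simp only [comp_apply, mul'_apply, LinearMap.sum_apply, CLg_tmul, map_smul,
    mulLeft_apply, eR_apply, smul_eq_mul]
  exact F.counit_mul x y

lemma S_counit (hS : F.IsAntipode S) (a : H) : F.counit (S a) = F.counit a := by
  have h0 : F.counit (eps_t F a) = F.counit a := by
    rw [eps_t_apply, map_sum]
    simp only [map_smul, counit_eo, smul_eq_mul, mul_one]
    exact (counit_expand_l F a).symm
  have h1 : F.counit a = ∑ n, F.counit (F.eo n * S (a * F.eo n)) := by
    rw [← h0]
    have := hS.2.1 a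
    rw [← eps_t_apply] at this
    rw [← this]
    have h2 := DFunLike.congr_fun (counit_mul_map F) (lTensor H S (F.comul a))
    simp only [comp_apply, LinearMap.sum_apply] at h2
    rw [h2]
    refine Finset.sum_congr rfl fun n _ => ?_
    have h3 := DFunLike.congr_fun (CLg_nat S (eR F n)) (F.comul a)
    simp only [comp_apply] at h3
    rw [← h3, R2]
    rfl
  rw [h1]
  have h4 : ∀ n, F.counit (F.eo n * S (a * F.eo n)) = F.counit (F.eo n * S a) := by
    intro n
    rw [S_mul_eo F S hS, ← mul_assoc, counit_eoe_mul, if_pos rfl]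
  rw [Finset.sum_congr rfl fun n _ => h4 n]
  exact counit_expand_lo F (S a)

end FaceProof

/-- Let `(H, S)` be a Hopf `V`-face algebra over a field `K`.  Then `S` is an
algebra antihomomorphism (`S(ab) = S(b)S(a)`, `S(1) = 1`), a coalgebra antihomomorphism
(`Δ(S(a)) = Σ S(a_(2)) ⊗ S(a_(1))`, `ε ∘ S = ε`), and `S(e̊_λ e_μ) = e̊_μ e_λ`. -/
theorem faceAlgebra_antipode_antihom
    {K V H : Type*} [Field K] [Fintype V] [DecidableEq V] [Nonempty V]
    [Ring H] [Algebra K H] (F : FaceAlgebra K V H) (S : H →ₗ[K] H)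
    (hS : F.IsAntipode S) :
    (∀ a b : H, S (a * b) = S b * S a) ∧
    S 1 = 1 ∧
    (∀ a : H, F.comul (S a) =
      (TensorProduct.comm K H H) ((TensorProduct.map S S) (F.comul a))) ∧
    (∀ a : H, F.counit (S a) = F.counit a) ∧
    (∀ l m : V, S (F.eo l * F.e m) = F.eo m * F.e l) := by
  refine ⟨FaceProof.S_mul F S hS, FaceProof.S_one F S hS, fun a => ?_,
    FaceProof.S_counit F S hS, FaceProof.S_eo_e F S hS⟩
  have := DFunLike.congr_fun (FaceProof.S_comul F S hS) a
  simpa [FaceProof.Dop] using this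
end

section
/- Let N ≥ 2, L ≥ 2 be integers, ε ∈ {1,−1}, and let Ω = Ω_{N,L,ε} be the face analogue of the exterior algebra attached to the graph 𝒢 = 𝒢_{N,L}. For every m ≥ 0 and every pair (λ, μ) ∈ BΩ^m: (a) the set 𝒢^m_{λμ} of paths of length m from λ to μ is nonempty; (b) the element ω_m(λ,μ) := (−ε)^{𝓛(p)} ω(p) of Ω is independent of the choice of the path p ∈ 𝒢^m_{λμ}; and (c) the family {ω_m(λ,μ) : (λ,μ) ∈ BΩ^m} is a ℂ-basis of Ω^m. In particular, Ω^m = 0 for every m > N. -/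
noncomputable section
open scoped Classical BigOperators

/-- We encode a weight `λ = λ_1 1̂ + ⋯ + λ_N N̂` (with `λ_N = 0`) by the function
`ℕ → ℤ`, `k ↦ λ_k`, vanishing outside `{1, …, N}`. -/
abbrev SOSVtx : Type := ℕ → ℤ

namespace SOS

/-- Membership in the vertex set `V_{N,L}` :
`L ≥ λ_1 ≥ λ_2 ≥ ⋯ ≥ λ_N = 0`, normalized to vanish outside `{1, …, N}`. -/
def InV (N L : ℕ) (x : SOSVtx) : Prop :=
  (∀ k, k = 0 ∨ N < k → x k = 0) ∧ x N = 0 ∧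
    (∀ k, 1 ≤ k → k < N → x (k + 1) ≤ x k) ∧ x 1 ≤ (L : ℤ)

/-- Adding `î` to a weight (in normalized coordinates, with `λ_N = 0`). -/
def addHat (N i : ℕ) (x : SOSVtx) : SOSVtx := fun k =>
  if 1 ≤ k ∧ k ≤ N then x k + (if k = i then 1 else 0) - (if i = N then 1 else 0) else 0

/-- `d(λ|i,j) = λ_i − λ_j + j − i`. -/
def dZ (x : SOSVtx) (i j : ℕ) : ℤ := x i - x j + (j : ℤ) - (i : ℤ)

/-- The zero weight (the vertex `0 ∈ V_{N,L}`). -/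
def zeroV : SOSVtx := fun _ => 0

/-- The quantum integer `[n] = (tⁿ − t⁻ⁿ)/(t − t⁻¹)`. -/
def qint (t : ℂ) (n : ℤ) : ℂ := (t ^ n - t ^ (-n)) / (t - t⁻¹)

/-- The quantum factorial `[n]! = [n][n−1]⋯[1]`. -/
def qfact (t : ℂ) : ℕ → ℂ
  | 0 => 1
  | n + 1 => qint t (n + 1) * qfact t n

/-- `y = λ + î` is obtained from `x = λ` by adding the `i`-th hat vector, and both are
vertices (an edge of the graph `𝒢_{N,L}`, labelled by `i ∈ {1, …, N}`). -/
def IsEdgeI (N L : ℕ) (x y : SOSVtx) (i : ℕ) : Prop :=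
  InV N L x ∧ InV N L y ∧ 1 ≤ i ∧ i ≤ N ∧ y = addHat N i x

/-- There is an edge `x → y` in `𝒢_{N,L}`. -/
def IsEdgeV (N L : ℕ) (x y : SOSVtx) : Prop := ∃ i, IsEdgeI N L x y i

/-- `(A, B; C, D)` (top-left, top-right, bottom-left, bottom-right) are the corners of a
face of `𝒢_{N,L}`. -/
def IsFace (N L : ℕ) (A B C D : SOSVtx) : Prop :=
  IsEdgeV N L A B ∧ IsEdgeV N L A C ∧ IsEdgeV N L B D ∧ IsEdgeV N L C D

/-- The hat index of an edge `A → B` (well defined since `𝒢_{N,L}` has no multiple edges). -/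
def hatIdx (N L : ℕ) (A B : SOSVtx) : ℕ :=
  if h : IsEdgeV N L A B then h.choose else 0

/-- The Boltzmann weight `w_{N,t,ε,ζ}` of the `SU(N)_L`-SOS model, as a function of the
four corner vertices (top-left, top-right, bottom-left, bottom-right) of a face;
it vanishes on non-faces. -/
def wFace (N L : ℕ) (t ζ ε : ℂ) (A B C D : SOSVtx) : ℂ :=
  if IsFace N L A B C D then
    if B = C then
      (if hatIdx N L A B = hatIdx N L B D then ζ⁻¹ * t
       else -ζ⁻¹ * t ^ (-(dZ A (hatIdx N L A B) (hatIdx N L B D))) /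
          qint t (dZ A (hatIdx N L A B) (hatIdx N L B D)))
    else ζ⁻¹ * ε * qint t (dZ A (hatIdx N L A B) (hatIdx N L B D) - 1) /
        qint t (dZ A (hatIdx N L A B) (hatIdx N L B D))
  else 0

/-- `pathOK N L x l` : the list of hat indices `l` is a path of `𝒢_{N,L}` starting at `x`. -/
def pathOK (N L : ℕ) : SOSVtx → List ℕ → Prop
  | x, [] => InV N L x
  | x, i :: is => InV N L x ∧ 1 ≤ i ∧ i ≤ N ∧ pathOK N L (addHat N i x) is

/-- The end vertex of the path starting at `x` with hat indices `l`. -/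
def pEnd (N : ℕ) : SOSVtx → List ℕ → SOSVtx
  | x, [] => x
  | x, i :: is => pEnd N (addHat N i x) is

/-- The inversion statistic `𝓛(λ|i_1,…,i_m) = #{(k,l) : k < l, i_k < i_l}`. -/
def Lstat : List ℕ → ℕ
  | [] => 0
  | i :: is => (is.filter fun j => i < j).length + Lstat is

/-- The fundamental weight `Λ_m = 1̂ + ⋯ + m̂` in normalized coordinates. -/
def LamV (N m : ℕ) : SOSVtx := fun k =>
  if 1 ≤ k ∧ k ≤ N ∧ k ≤ m then (if m = N then 0 else 1) else 0

/-- The vertex set `V_{N,L}` as a finite set of normalized coordinate functions. -/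
def VF (N L : ℕ) : Finset SOSVtx :=
  (Finset.univ.image fun f : Fin N → Fin (L + 1) =>
    (fun k => if h : 1 ≤ k ∧ k ≤ N then ((f ⟨k - 1, by omega⟩ : ℕ) : ℤ) else 0 : SOSVtx)).filter
    (InV N L)

end SOS

namespace SOS

/-- Generators of the face-analogue `Ω` of the exterior algebra: raw paths of `𝒢_{N,L}`
(a start vertex together with a list of hat indices). -/
abbrev OGen : Type := SOSVtx × List ℕ

/-- The defining relations of `Ω = Ω_{N,L,ε}` (together with killing the generators
attached to invalid raw paths). -/
inductive OmegaRel (N L : ℕ) (ε : ℂ) : FreeAlgebra ℂ OGen → FreeAlgebra ℂ OGen → Prop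
  | invalid (p : OGen) (h : ¬ pathOK N L p.1 p.2) :
      OmegaRel N L ε (FreeAlgebra.ι ℂ p) 0
  | unit :
      OmegaRel N L ε (∑ x ∈ VF N L, FreeAlgebra.ι ℂ ((x, []) : OGen)) 1
  | mul (p q : OGen) :
      OmegaRel N L ε (FreeAlgebra.ι ℂ p * FreeAlgebra.ι ℂ q)
        (if pEnd N p.1 p.2 = q.1 then FreeAlgebra.ι ℂ ((p.1, p.2 ++ q.2) : OGen) else 0)
  | swap (x : SOSVtx) (i j : ℕ) (hij : i ≠ j)
      (h1 : pathOK N L x [i, j]) (h2 : pathOK N L x [j, i]) :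
      OmegaRel N L ε (FreeAlgebra.ι ℂ ((x, [i, j]) : OGen))
        ((-ε) • FreeAlgebra.ι ℂ ((x, [j, i]) : OGen))
  | diag (x : SOSVtx) (i : ℕ) (h : pathOK N L x [i, i]) :
      OmegaRel N L ε (FreeAlgebra.ι ℂ ((x, [i, i]) : OGen)) 0

/-- The algebra `Ω = Ω_{N,L,ε}`, the face analogue of the exterior algebra. -/
abbrev Omega (N L : ℕ) (ε : ℂ) : Type := RingQuot (OmegaRel N L ε)

/-- The generator `ω(p)` of `Ω`. -/
def ω (N L : ℕ) (ε : ℂ) (p : OGen) : Omega N L ε :=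
  RingQuot.mkAlgHom ℂ (OmegaRel N L ε) (FreeAlgebra.ι ℂ p)

/-- The homogeneous component `Ω^m` : the span of the `ω(p)` with `p ∈ 𝒢^m`. -/
def OmegaM (N L : ℕ) (ε : ℂ) (m : ℕ) : Submodule ℂ (Omega N L ε) :=
  Submodule.span ℂ
    {z | ∃ p : OGen, pathOK N L p.1 p.2 ∧ p.2.length = m ∧ z = ω N L ε p}

/-- `(λ, μ) ∈ BΩ^m` : `μ = λ + Σ_{i ∈ I} î` for some `I ⊆ {1,…,N}` of cardinality `m`,
and both `λ` and `μ` are vertices. -/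
def BOm (N L m : ℕ) (lam mu : SOSVtx) : Prop :=
  InV N L lam ∧ InV N L mu ∧
    ∃ I : Finset ℕ, I ⊆ Finset.Icc 1 N ∧ I.card = m ∧
      mu = fun k =>
        if 1 ≤ k ∧ k ≤ N then
          lam k + (if k ∈ I then 1 else 0) - (if N ∈ I then 1 else 0)
        else 0

end SOS

namespace SOS

variable {N L : ℕ}

/-! ### Basic vertex lemmas -/

lemma InV.anti {x : SOSVtx} (hx : InV N L x) :
    ∀ a b, 1 ≤ a → a ≤ b → b ≤ N → x b ≤ x a := by
  intro a b ha hab hbN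
  induction b with
  | zero => omega
  | succ n ih =>
    rcases Nat.eq_or_lt_of_le hab with h | h
    · rw [h]
    · exact le_trans (hx.2.2.1 n (by omega) (by omega)) (ih (by omega) (by omega))

lemma InV.nonneg {x : SOSVtx} (hx : InV N L x) {k : ℕ} (h1 : 1 ≤ k) (h2 : k ≤ N) :
    0 ≤ x k := by
  have := hx.anti k N h1 h2 le_rfl
  have h0 := hx.2.1
  omega

lemma addHat_eval {x : SOSVtx} {i k : ℕ} (h1 : 1 ≤ k) (h2 : k ≤ N) :
    addHat N i x k = x k + (if k = i then 1 else 0) - (if i = N then 1 else 0) := by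
  simp [addHat, h1, h2]

lemma addHat_comm (i j : ℕ) (x : SOSVtx) :
    addHat N j (addHat N i x) = addHat N i (addHat N j x) := by
  funext k
  by_cases h : 1 ≤ k ∧ k ≤ N
  · rw [addHat_eval h.1 h.2, addHat_eval h.1 h.2, addHat_eval h.1 h.2,
      addHat_eval h.1 h.2]
    ring
  · simp [addHat, h]

lemma addHat_mem_iff (hN : 2 ≤ N) {x : SOSVtx} (hx : InV N L x) {a : ℕ}
    (ha1 : 1 ≤ a) (haN : a ≤ N) :
    InV N L (addHat N a x) ↔
      (2 ≤ a → x a + 1 ≤ x (a - 1)) ∧ (a = 1 → x 1 + 1 ≤ (L : ℤ)) := by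
  constructor
  · intro hy
    constructor
    · intro h2
      have hc := hy.2.2.1 (a - 1) (by omega) (by omega)
      rw [show a - 1 + 1 = a by omega] at hc
      rw [addHat_eval (by omega) haN, addHat_eval (by omega) (by omega)] at hc
      split_ifs at hc <;> omega
    · intro h1
      subst h1
      have hc := hy.2.2.2
      rw [addHat_eval le_rfl haN] at hc
      split_ifs at hc <;> omega
  · intro H
    refine ⟨?_, ?_, ?_, ?_⟩
    · intro k hk
      simp only [addHat]
      rw [if_neg (by omega)]
    · rw [addHat_eval (by omega) le_rfl]
      have h0 := hx.2.1
      split_ifs <;> omega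
    · intro k hk1 hkN
      rw [addHat_eval (by omega) (by omega), addHat_eval hk1 (by omega)]
      have hch := hx.2.2.1 k hk1 hkN
      by_cases hka : k + 1 = a
      · have hH := H.1 (by omega)
        rw [show a - 1 = k by omega] at hH
        rw [if_pos hka, if_neg (show ¬ k = a by omega), hka]
        split_ifs <;> omega
      · rw [if_neg hka]
        split_ifs <;> omega
    · rw [addHat_eval le_rfl (by omega)]
      have htop := hx.2.2.2
      by_cases h1 : (1:ℕ) = a
      · have := H.2 h1.symm
        rw [if_pos h1, if_neg (by omega)]
        omega
      · rw [if_neg h1]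
        split_ifs <;> omega

/-- The endpoint `λ + Σ_{i ∈ I} î` in normalized coordinates. -/
def shiftF (N : ℕ) (x : SOSVtx) (I : Finset ℕ) : SOSVtx := fun k =>
  if 1 ≤ k ∧ k ≤ N then
    x k + (if k ∈ I then 1 else 0) - (if N ∈ I then 1 else 0)
  else 0

lemma shiftF_eval {x : SOSVtx} {I : Finset ℕ} {k : ℕ} (h1 : 1 ≤ k) (h2 : k ≤ N) :
    shiftF N x I k = x k + (if k ∈ I then 1 else 0) - (if N ∈ I then 1 else 0) := by
  simp [shiftF, h1, h2]

lemma shiftF_empty {x : SOSVtx} (hx : InV N L x) : shiftF N x ∅ = x := by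
  funext k
  by_cases h : 1 ≤ k ∧ k ≤ N
  · simp [shiftF, h]
  · simp only [shiftF, if_neg h]
    exact (hx.1 k (by omega)).symm

lemma shiftF_addHat {x : SOSVtx} {I : Finset ℕ} {i : ℕ} (hi : i ∉ I) :
    shiftF N (addHat N i x) I = shiftF N x (insert i I) := by
  funext k
  by_cases h : 1 ≤ k ∧ k ≤ N
  · rw [shiftF_eval h.1 h.2, shiftF_eval h.1 h.2, addHat_eval h.1 h.2]
    have e1 : (if k ∈ insert i I then (1:ℤ) else 0)
        = (if k = i then 1 else 0) + (if k ∈ I then 1 else 0) := by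
      by_cases hk : k = i
      · subst hk; simp [hi]
      · by_cases hkI : k ∈ I <;> simp [hk, hkI]
    have e2 : (if N ∈ insert i I then (1:ℤ) else 0)
        = (if i = N then 1 else 0) + (if N ∈ I then 1 else 0) := by
      by_cases hk : i = N
      · subst hk; simp [hi]
      · have hNi : ¬ N = i := fun h => hk h.symm
        by_cases hkI : N ∈ I <;> simp [Finset.mem_insert, hk, hkI, hNi]
    rw [e1, e2]; ring
  · simp [shiftF, h]

lemma diamond (hN : 2 ≤ N) {x : SOSVtx} (hx : InV N L x) {i j : ℕ}
    (hj1 : 1 ≤ j) (hjN : j ≤ N) (hij : i ≠ j)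
    (hxi : InV N L (addHat N i x)) (hxj : InV N L (addHat N j x)) :
    InV N L (addHat N j (addHat N i x)) := by
  rw [addHat_mem_iff hN hxi hj1 hjN]
  have h2 := (addHat_mem_iff hN hx hj1 hjN).mp hxj
  have hji : ¬(j = i) := fun h => hij h.symm
  constructor
  · intro h2j
    have hg := h2.1 h2j
    rw [addHat_eval hj1 hjN, addHat_eval (by omega) (by omega)]
    rw [if_neg hji]
    by_cases hj1i : j - 1 = i
    · rw [if_pos hj1i]; split_ifs <;> omega
    · rw [if_neg hj1i]; split_ifs <;> omega
  · intro h1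
    subst h1
    have hg := h2.2 rfl
    rw [addHat_eval le_rfl hjN]
    rw [if_neg hji]
    split_ifs <;> omega

lemma blocked (hN : 2 ≤ N) {x : SOSVtx} (hx : InV N L x) {i j : ℕ}
    (hj1 : 1 ≤ j) (hjN : j ≤ N) (hij : i ≠ j)
    (hxi : InV N L (addHat N i x))
    (hvj : InV N L (addHat N j (addHat N i x)))
    (hxj : ¬ InV N L (addHat N j x)) :
    j = i + 1 ∨ (i = N ∧ j = 1) := by
  by_contra hcon
  push_neg at hcon
  have hb := (addHat_mem_iff hN hx hj1 hjN).not.mp hxj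
  have hgood := (addHat_mem_iff hN hxi hj1 hjN).mp hvj
  have hji : ¬(j = i) := fun h => hij h.symm
  rcases not_and_or.mp hb with h' | h'
  · push_neg at h'
    obtain ⟨h2j, hle⟩ := h'
    have hg := hgood.1 h2j
    rw [addHat_eval hj1 hjN, addHat_eval (by omega) (by omega)] at hg
    rw [if_neg hji] at hg
    by_cases hj1i : j - 1 = i
    · omega
    · rw [if_neg hj1i] at hg
      split_ifs at hg <;> omega
  · push_neg at h'
    obtain ⟨hj1', hLx⟩ := h'
    subst hj1'
    have hg := hgood.2 rfl
    rw [addHat_eval le_rfl hjN] at hg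
    rw [if_neg hji] at hg
    have htop := hx.2.2.2
    by_cases hiN : i = N
    · exact hcon.2 hiN rfl
    · rw [if_neg hiN] at hg; omega

lemma down_mem' {J : Finset ℕ} (lo : ℕ) :
    ∀ b, b ∈ J → (∀ a ∈ J, lo + 2 ≤ a → a ≤ b → a - 1 ∈ J) →
      ∀ a, lo + 1 ≤ a → a ≤ b → a ∈ J := by
  intro b
  induction b with
  | zero => intro _ _ a h1 h2; omega
  | succ n ih =>
    intro hb H a h1 h2
    rcases Nat.eq_or_lt_of_le h2 with h | h
    · rwa [h]
    · have hn : n ∈ J := by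
        have := H (n + 1) hb (by omega) le_rfl
        simpa using this
      exact ih hn (fun a' ha' h2' hb' => H a' ha' h2' (by omega)) a h1 (by omega)

lemma chain_eq (f : ℕ → ℤ) (lo : ℕ) :
    ∀ b, lo ≤ b → (∀ a, lo < a → a ≤ b → f a = f (a - 1)) → f b = f lo := by
  intro b
  induction b with
  | zero => intro h _; rw [show lo = 0 by omega]
  | succ n ih =>
    intro h H
    rcases Nat.eq_or_lt_of_le h with h' | h'
    · rw [← h']
    · have e := H (n + 1) (by omega) le_rfl
      simp only [Nat.add_sub_cancel] at e
      rw [e]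
      exact ih (by omega) (fun a ha hab => H a ha (by omega))

end SOS

namespace SOS

variable {N L : ℕ}

lemma exists_addable (hN : 2 ≤ N) (hL : 2 ≤ L) {x : SOSVtx} (hx : InV N L x)
    {J : Finset ℕ} (hJ : J ⊆ Finset.Icc 1 N) (hne : J.Nonempty)
    (hmu : InV N L (shiftF N x J)) : ∃ a ∈ J, InV N L (addHat N a x) := by
  by_contra hcon
  push_neg at hcon
  have hrange : ∀ a ∈ J, 1 ≤ a ∧ a ≤ N := by
    intro a ha
    have := hJ ha
    rw [Finset.mem_Icc] at this
    exact this
  have hblock : ∀ a ∈ J, (2 ≤ a ∧ x (a - 1) ≤ x a) ∨ (a = 1 ∧ (L : ℤ) ≤ x 1) := by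
    intro a ha
    obtain ⟨h1, h2⟩ := hrange a ha
    have hb := (addHat_mem_iff hN hx h1 h2).not.mp (hcon a ha)
    rcases not_and_or.mp hb with h' | h'
    · push_neg at h'
      exact Or.inl ⟨h'.1, by omega⟩
    · push_neg at h'
      exact Or.inr ⟨h'.1, by omega⟩
  have hdown : ∀ a ∈ J, 2 ≤ a → a - 1 ∈ J := by
    intro a ha h2
    obtain ⟨_, haN⟩ := hrange a ha
    rcases hblock a ha with ⟨_, heq⟩ | ⟨h1, _⟩
    · have hchain := hmu.2.2.1 (a - 1) (by omega) (by omega)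
      rw [show a - 1 + 1 = a by omega] at hchain
      rw [shiftF_eval (by omega) haN, shiftF_eval (by omega) (by omega)] at hchain
      rw [if_pos ha] at hchain
      by_contra hmem
      rw [if_neg hmem] at hchain
      split_ifs at hchain <;> omega
    · omega
  have h1mem : (1 : ℕ) ∈ J := by
    obtain ⟨b, hb⟩ := hne
    exact down_mem' 0 b hb (fun a ha h2 _ => hdown a ha h2) 1 le_rfl (hrange b hb).1
  have hx1 : x 1 = (L : ℤ) := by
    rcases hblock 1 h1mem with ⟨h2, _⟩ | ⟨_, hL1⟩
    · omega
    · have := hx.2.2.2; omega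
  have hNmem : N ∈ J := by
    have htop := hmu.2.2.2
    rw [shiftF_eval le_rfl (by omega), if_pos h1mem] at htop
    by_contra hmem
    rw [if_neg hmem] at htop
    omega
  have hall : ∀ k, 1 ≤ k → k ≤ N → k ∈ J :=
    down_mem' 0 N hNmem (fun a ha h2 _ => hdown a ha h2)
  have heqs : ∀ a, 1 < a → a ≤ N → x a = x (a - 1) := by
    intro a h1 h2
    rcases hblock a (hall a (by omega) h2) with ⟨_, hle⟩ | ⟨he, _⟩
    · have := hx.2.2.1 (a - 1) (by omega) (by omega)
      rw [show a - 1 + 1 = a by omega] at this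
      omega
    · omega
  have := chain_eq x 1 N (by omega) heqs
  have h0 := hx.2.1
  omega

lemma no_stuck (hN : 2 ≤ N) (hL : 2 ≤ L) {x : SOSVtx} (hx : InV N L x) {i : ℕ}
    (hi1 : 1 ≤ i) (hiN : i ≤ N)
    (hv : InV N L (addHat N i x)) {J : Finset ℕ} (hJ : J ⊆ Finset.Icc 1 N) (hiJ : i ∈ J)
    (hmu : InV N L (shiftF N (addHat N i x) J)) :
    InV N L (addHat N i (addHat N i x)) ∨
      ∃ a ∈ J, a ≠ i ∧ InV N L (addHat N a (addHat N i x)) ∧ InV N L (addHat N a x) := by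
  by_contra hcon
  push_neg at hcon
  obtain ⟨H1, H2⟩ := hcon
  set ν : SOSVtx := addHat N i x with hν
  have hrange : ∀ a ∈ J, 1 ≤ a ∧ a ≤ N := by
    intro a ha
    have := hJ ha
    rw [Finset.mem_Icc] at this
    exact this
  set s : ℕ := if i = N then 1 else i + 1 with hs
  -- Step A : every a ∈ J other than s is non-addable at ν
  have hA : ∀ a ∈ J, a ≠ s → ¬ InV N L (addHat N a ν) := by
    intro a ha hasne hIn
    obtain ⟨ha1, haN⟩ := hrange a ha
    by_cases hai : a = i
    · exact H1 (hai ▸ hIn)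
    · have hnot := H2 a ha hai hIn
      rcases blocked hN hx ha1 haN (fun h => hai h.symm) hv hIn hnot with h | ⟨h1, h2⟩
      · rw [hs] at hasne
        have : ¬ i = N := by omega
        rw [if_neg this] at hasne
        omega
      · rw [hs] at hasne
        rw [if_pos h1] at hasne
        omega
  -- blocked characterization at ν
  have hblock : ∀ a ∈ J, a ≠ s → (2 ≤ a ∧ ν (a - 1) ≤ ν a) ∨ (a = 1 ∧ (L : ℤ) ≤ ν 1) := by
    intro a ha hasne
    obtain ⟨h1, h2⟩ := hrange a ha
    have hb := (addHat_mem_iff hN hv h1 h2).not.mp (hA a ha hasne)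
    rcases not_and_or.mp hb with h' | h'
    · push_neg at h'
      exact Or.inl ⟨h'.1, by omega⟩
    · push_neg at h'
      exact Or.inr ⟨h'.1, by omega⟩
  -- downward closure away from s
  have hdown : ∀ a ∈ J, 2 ≤ a → a ≠ s → a - 1 ∈ J := by
    intro a ha h2 hasne
    obtain ⟨_, haN⟩ := hrange a ha
    rcases hblock a ha hasne with ⟨_, heq⟩ | ⟨h1, _⟩
    · have hchain := hmu.2.2.1 (a - 1) (by omega) (by omega)
      rw [show a - 1 + 1 = a by omega] at hchain
      rw [shiftF_eval (by omega) haN, shiftF_eval (by omega) (by omega)] at hchain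
      rw [if_pos ha] at hchain
      by_contra hmem
      rw [if_neg hmem] at hchain
      split_ifs at hchain <;> omega
    · omega
  have hνN : ν N = 0 := hv.2.1
  -- the addable element given by exists_addable must be s
  have haddable : s ∈ J ∧ InV N L (addHat N s ν) → False := by
    rintro ⟨hsJ, hsadd⟩
    rcases Nat.eq_or_lt_of_le hiN with hiNe | hilt
    · -- i = N, s = 1
      rw [hs, if_pos hiNe] at hsadd hsJ
      have hii : (1:ℕ) ≠ i := by omega
      have h1x := H2 1 hsJ hii hsadd
      have hb := (addHat_mem_iff hN hx le_rfl (by omega)).not.mp h1x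
      have hx1 : x 1 = (L : ℤ) := by
        rcases not_and_or.mp hb with h' | h'
        · push_neg at h'; omega
        · push_neg at h'
          have := hx.2.2.2; omega
      -- all of [1,N] ⊆ J and ν constant there
      have hallJ : ∀ k, 1 ≤ k → k ≤ N → k ∈ J := by
        refine down_mem' 0 N (hiNe ▸ hiJ) (fun a ha h2 _ => hdown a ha h2 ?_)
        rw [hs, if_pos hiNe]; omega
      have heqs : ∀ a, 1 < a → a ≤ N → ν a = ν (a - 1) := by
        intro a h1 h2
        have has : a ≠ s := by rw [hs, if_pos hiNe]; omega
        rcases hblock a (hallJ a (by omega) h2) has with ⟨_, hle⟩ | ⟨he, _⟩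
        · have := hv.2.2.1 (a - 1) (by omega) (by omega)
          rw [show a - 1 + 1 = a by omega] at this
          omega
        · omega
      have hc := chain_eq ν 1 N (by omega) heqs
      have hν1 : ν 1 = x 1 - 1 := by
        rw [hν, addHat_eval le_rfl (by omega), if_neg (by omega : ¬ (1:ℕ) = i),
          if_pos hiNe]
        ring
      omega
    · -- i < N, s = i + 1
      rw [hs, if_neg (by omega : ¬ i = N)] at hsadd hsJ
      have hxi1 : ¬ InV N L (addHat N (i+1) x) := H2 (i+1) hsJ (by omega) hsadd
      have hb := (addHat_mem_iff hN hx (by omega) (by omega : i + 1 ≤ N)).not.mp hxi1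
      have hxle : x i ≤ x (i + 1) := by
        rcases not_and_or.mp hb with h' | h'
        · push_neg at h'
          have := h'.2
          rw [show i + 1 - 1 = i by omega] at this
          omega
        · push_neg at h'; omega
      -- {1..i} ⊆ J
      have hlow : ∀ k, 1 ≤ k → k ≤ i → k ∈ J := by
        refine down_mem' 0 i hiJ (fun a ha h2 hb' => hdown a ha h2 ?_) 
        rw [hs, if_neg (by omega : ¬ i = N)]; omega
      -- ν 1 = L
      have hν1L : ν 1 = (L : ℤ) := by
        have hν1le : ν 1 ≤ (L : ℤ) := hv.2.2.2
        rcases Nat.eq_or_lt_of_le hi1 with hi1e | hi1lt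
        · -- i = 1 : use H1 via blocked char
          have hb1 := (addHat_mem_iff hN hv hi1 hiN).not.mp H1
          rcases not_and_or.mp hb1 with h' | h'
          · push_neg at h'; omega
          · push_neg at h'
            have := h'.2; omega
        · -- i ≥ 2 : 1 ∈ J, 1 ≠ s
          have h1J := hlow 1 le_rfl (by omega)
          rcases hblock 1 h1J (by rw [hs, if_neg (by omega : ¬ i = N)]; omega)
            with ⟨h2, _⟩ | ⟨_, hL1⟩
          · omega
          · omega
      -- N ∈ J
      have hNJ : N ∈ J := by
        have htop := hmu.2.2.2
        rw [shiftF_eval le_rfl (by omega), if_pos (hlow 1 le_rfl hi1)] at htop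
        by_contra hmem
        rw [if_neg hmem] at htop
        omega
      -- ν (i+1) = 0
      have hνi1 : ν (i + 1) = 0 := by
        rcases Nat.eq_or_lt_of_le (show i + 1 ≤ N by omega) with he | hlt
        · rw [he]; exact hνN
        · have hhigh : ∀ k, i + 2 ≤ k → k ≤ N → k ∈ J := by
            refine down_mem' (i+1) N hNJ (fun a ha h2 hb' => hdown a ha (by omega) ?_)
            rw [hs, if_neg (by omega : ¬ i = N)]; omega
          have heqs : ∀ a, i + 1 < a → a ≤ N → ν a = ν (a - 1) := by
            intro a h1 h2
            have has : a ≠ s := by rw [hs, if_neg (by omega : ¬ i = N)]; omega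
            rcases hblock a (hhigh a (by omega) h2) has with ⟨_, hle⟩ | ⟨he', _⟩
            · have := hv.2.2.1 (a - 1) (by omega) (by omega)
              rw [show a - 1 + 1 = a by omega] at this
              omega
            · omega
          have hc := chain_eq ν (i+1) N (by omega) heqs
          omega
      -- ν i = L
      have hνiL : ν i = (L : ℤ) := by
        have heqs : ∀ a, 1 < a → a ≤ i → ν a = ν (a - 1) := by
          intro a h1 h2
          have has : a ≠ s := by rw [hs, if_neg (by omega : ¬ i = N)]; omega
          rcases hblock a (hlow a (by omega) h2) has with ⟨_, hle⟩ | ⟨he', _⟩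
          · have := hv.2.2.1 (a - 1) (by omega) (by omega)
            rw [show a - 1 + 1 = a by omega] at this
            omega
          · omega
        have hc := chain_eq ν 1 i hi1 heqs
        omega
      -- translate ν i, ν (i+1) to x
      have hvi : ν i = x i + 1 := by
        rw [hν, addHat_eval hi1 hiN, if_pos rfl, if_neg (by omega : ¬ i = N)]
        ring
      have hvi1 : ν (i + 1) = x (i + 1) := by
        rw [hν, addHat_eval (by omega) (by omega : i + 1 ≤ N),
          if_neg (by omega : ¬ i + 1 = i), if_neg (by omega : ¬ i = N)]
        ring
      omega
  -- now conclude using exists_addable at ν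
  have hne : J.Nonempty := ⟨i, hiJ⟩
  obtain ⟨a, haJ, hadd⟩ := exists_addable hN hL hv hJ hne hmu
  by_cases has : a = s
  · exact haddable ⟨has ▸ haJ, has ▸ hadd⟩
  · exact hA a haJ has hadd

end SOS

namespace SOS

variable {N L : ℕ}

/-! ### Path lemmas -/

lemma pathOK_start {x : SOSVtx} {is : List ℕ} (h : pathOK N L x is) : InV N L x := by
  cases is with
  | nil => exact h
  | cons i is => exact h.1

lemma pEnd_append (x : SOSVtx) : ∀ is js : List ℕ,
    pEnd N x (is ++ js) = pEnd N (pEnd N x is) js := by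
  suffices h : ∀ (is : List ℕ) (x : SOSVtx) (js : List ℕ),
      pEnd N x (is ++ js) = pEnd N (pEnd N x is) js by
    intro is js; exact h is x js
  intro is
  induction is with
  | nil => intro x js; rfl
  | cons i is ih => intro x js; exact ih (addHat N i x) js

lemma pathOK_append {x : SOSVtx} {is js : List ℕ} :
    pathOK N L x (is ++ js) ↔ pathOK N L x is ∧ pathOK N L (pEnd N x is) js := by
  induction is generalizing x with
  | nil =>
    simp only [List.nil_append, pEnd]
    exact ⟨fun h => ⟨pathOK_start h, h⟩, fun h => h.2⟩
  | cons i is ih =>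
    simp only [List.cons_append, pathOK, pEnd, List.append_eq]
    rw [ih]
    tauto

lemma pathOK_mem_bounds {x : SOSVtx} {is : List ℕ} (h : pathOK N L x is) :
    ∀ i ∈ is, 1 ≤ i ∧ i ≤ N := by
  induction is generalizing x with
  | nil => intro i hi; cases hi
  | cons j is ih =>
    intro i hi
    rcases List.mem_cons.mp hi with h' | h'
    · exact h' ▸ ⟨h.2.1, h.2.2.1⟩
    · exact ih h.2.2.2 i h'

lemma pathOK_end {x : SOSVtx} {is : List ℕ} (h : pathOK N L x is) :
    InV N L (pEnd N x is) := by
  induction is generalizing x with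
  | nil => exact h
  | cons i is ih => exact ih h.2.2.2

lemma pEnd_eq_shiftF {x : SOSVtx} {is : List ℕ} (h : pathOK N L x is)
    (hnd : is.Nodup) : pEnd N x is = shiftF N x is.toFinset := by
  induction is generalizing x with
  | nil =>
    simp only [List.toFinset_nil, pEnd]
    exact (shiftF_empty h).symm
  | cons i is ih =>
    have hni : i ∉ is.toFinset := by
      rw [List.mem_toFinset]
      exact (List.nodup_cons.mp hnd).1
    have : pEnd N x (i :: is) = shiftF N (addHat N i x) is.toFinset :=
      ih h.2.2.2 (List.nodup_cons.mp hnd).2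
    rw [this, shiftF_addHat hni, List.toFinset_cons]

lemma exists_path (hN : 2 ≤ N) (hL : 2 ≤ L) : ∀ (n : ℕ) (J : Finset ℕ) (x : SOSVtx),
    J ⊆ Finset.Icc 1 N → J.card = n → InV N L x → InV N L (shiftF N x J) →
    ∃ is : List ℕ, pathOK N L x is ∧ is.Nodup ∧ is.toFinset = J ∧
      pEnd N x is = shiftF N x J := by
  intro n
  induction n with
  | zero =>
    intro J x hJ hcard hx hmu
    have hJe : J = ∅ := Finset.card_eq_zero.mp hcard
    subst hJe
    exact ⟨[], hx, List.nodup_nil, List.toFinset_nil, (shiftF_empty hx).symm⟩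
  | succ n ih =>
    intro J x hJ hcard hx hmu
    have hne : J.Nonempty := Finset.card_pos.mp (by omega)
    obtain ⟨a, haJ, hadd⟩ := exists_addable hN hL hx hJ hne hmu
    have hsh : shiftF N (addHat N a x) (J.erase a) = shiftF N x J := by
      rw [shiftF_addHat (Finset.notMem_erase a J), Finset.insert_erase haJ]
    obtain ⟨is, h1, h2, h3, h4⟩ := ih (J.erase a) (addHat N a x)
      (fun b hb => hJ (Finset.mem_of_mem_erase hb))
      (by rw [Finset.card_erase_of_mem haJ, hcard]; rfl)
      hadd (by rw [hsh]; exact hmu)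
    have hab := Finset.mem_Icc.mp (hJ haJ)
    refine ⟨a :: is, ⟨hx, hab.1, hab.2, h1⟩, ?_, ?_, ?_⟩
    · rw [List.nodup_cons]
      refine ⟨fun hmem => ?_, h2⟩
      have : a ∈ J.erase a := h3 ▸ List.mem_toFinset.mpr hmem
      exact Finset.notMem_erase a J this
    · rw [List.toFinset_cons, h3, Finset.insert_erase haJ]
    · show pEnd N (addHat N a x) is = shiftF N x J
      rw [h4, hsh]

lemma pEnd_count {x : SOSVtx} {is : List ℕ} (h : pathOK N L x is) :
    ∀ k, pEnd N x is k =
      if 1 ≤ k ∧ k ≤ N then x k + (is.count k : ℤ) - (is.count N : ℤ) else 0 := by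
  induction is generalizing x with
  | nil =>
    intro k
    by_cases hr : 1 ≤ k ∧ k ≤ N
    · simp [pEnd, hr]
    · simp only [pEnd, List.count_nil, if_neg hr]
      exact h.1 k (by omega)
  | cons i is ih =>
    intro k
    have hiN : 1 ≤ i ∧ i ≤ N := ⟨h.2.1, h.2.2.1⟩
    show pEnd N (addHat N i x) is k = _
    rw [ih h.2.2.2 k]
    by_cases hr : 1 ≤ k ∧ k ≤ N
    · rw [if_pos hr, if_pos hr, addHat_eval hr.1 hr.2,
        List.count_cons, List.count_cons]
      push_cast
      simp only [beq_iff_eq]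
      have e1 : (if i = k then (1:ℤ) else 0) = (if k = i then 1 else 0) := by
        by_cases h' : i = k
        · rw [if_pos h', if_pos h'.symm]
        · rw [if_neg h', if_neg (fun hh => h' hh.symm)]
      rw [e1]
      ring
    · rw [if_neg hr, if_neg hr]

end SOS

namespace SOS

variable {N L : ℕ}

lemma path_nodup_toFinset (hN1 : 1 ≤ N) {x : SOSVtx} {is : List ℕ} {I : Finset ℕ}
    (h : pathOK N L x is) (hI : I ⊆ Finset.Icc 1 N) (hcard : I.card = is.length)
    (hend : pEnd N x is = shiftF N x I) :
    is.Nodup ∧ is.toFinset = I := by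
  have hb := pathOK_mem_bounds h
  have key : ∀ k, 1 ≤ k → k ≤ N →
      (is.count k : ℤ) - (is.count N : ℤ)
        = (if k ∈ I then 1 else 0) - (if N ∈ I then 1 else 0) := by
    intro k h1 h2
    have e1 := pEnd_count h k
    rw [hend, shiftF_eval h1 h2] at e1
    rw [if_pos (show (1 ≤ k ∧ k ≤ N) from ⟨h1, h2⟩)] at e1
    split_ifs at e1 ⊢ <;> omega
  have hsum : ∀ l : List ℕ, (∀ j ∈ l, 1 ≤ j ∧ j ≤ N) →
      ∑ k ∈ Finset.Icc 1 N, (l.count k : ℤ) = l.length := by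
    intro l hl
    induction l with
    | nil => simp
    | cons j l ih =>
      have hj := hl j List.mem_cons_self
      have hcc : ∀ k, ((j :: l).count k : ℤ) = (l.count k : ℤ) + (if k = j then 1 else 0) := by
        intro k
        rw [List.count_cons]
        push_cast
        simp only [beq_iff_eq]
        by_cases h' : j = k
        · rw [if_pos h', if_pos h'.symm]
        · rw [if_neg h', if_neg (fun hh => h' hh.symm)]
      rw [List.length_cons, Finset.sum_congr rfl (fun k _ => hcc k), Finset.sum_add_distrib,
        ih (fun a ha => hl a (List.mem_cons_of_mem j ha)),
        Finset.sum_ite_eq' (Finset.Icc 1 N) j (fun _ => (1:ℤ)),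
        if_pos (Finset.mem_Icc.mpr hj)]
      push_cast
      ring
  have hsumI : ∑ k ∈ Finset.Icc 1 N, (if k ∈ I then (1:ℤ) else 0) = I.card := by
    rw [Finset.sum_ite_mem, Finset.inter_eq_right.mpr hI]
    simp
  have hkey2 := Finset.sum_congr rfl
    (fun k hk => key k (Finset.mem_Icc.mp hk).1 (Finset.mem_Icc.mp hk).2)
  rw [Finset.sum_sub_distrib, Finset.sum_sub_distrib, hsum is hb, hsumI] at hkey2
  simp only [Finset.sum_const, Nat.card_Icc, nsmul_eq_mul] at hkey2
  have hNc : (N + 1 - 1 : ℕ) = N := by omega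
  rw [hNc] at hkey2
  have hcN : (is.count N : ℤ) = (if N ∈ I then 1 else 0) := by
    have h0 : (N : ℤ) * ((is.count N : ℤ) - (if N ∈ I then 1 else 0)) = 0 := by
      have hcI : (I.card : ℤ) = (is.length : ℤ) := by exact_mod_cast hcard
      ring_nf
      ring_nf at hkey2
      linarith
    rcases mul_eq_zero.mp h0 with h' | h'
    · exfalso
      have : (N : ℤ) ≠ 0 := by exact_mod_cast (by omega : N ≠ 0)
      exact this h'
    · linarith
  have hcnt : ∀ k, (is.count k : ℤ) = (if k ∈ I then 1 else 0) := by
    intro k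
    by_cases hr : 1 ≤ k ∧ k ≤ N
    · have := key k hr.1 hr.2
      split_ifs at this ⊢ <;> split_ifs at hcN <;> omega
    · have h1 : is.count k = 0 := by
        rw [List.count_eq_zero]
        intro hmem
        exact hr (hb k hmem)
      have h2 : k ∉ I := fun hk => hr (by
        have := Finset.mem_Icc.mp (hI hk); omega)
      rw [h1, if_neg h2]
      rfl
  constructor
  · rw [List.nodup_iff_count_le_one]
    intro a
    have := hcnt a
    split_ifs at this <;> omega
  · ext a
    rw [List.mem_toFinset]
    have := hcnt a
    constructor
    · intro hmem
      have hpos : 0 < is.count a := List.count_pos_iff.mpr hmem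
      by_contra hni
      rw [if_neg hni] at this
      omega
    · intro hmem
      rw [if_pos hmem] at this
      exact List.count_pos_iff.mp (by omega)

/-! ### Inversion statistics -/

/-- Crossing number of a list against a finset. -/
def crossF (is : List ℕ) (J : Finset ℕ) : ℕ :=
  (is.map fun i => (J.filter fun b => i < b).card).sum

lemma crossF_nil (J : Finset ℕ) : crossF [] J = 0 := rfl

lemma crossF_cons (i : ℕ) (is : List ℕ) (J : Finset ℕ) :
    crossF (i :: is) J = (J.filter fun b => i < b).card + crossF is J := rfl

lemma crossF_append (is js : List ℕ) (J : Finset ℕ) :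
    crossF (is ++ js) J = crossF is J + crossF js J := by
  simp [crossF, List.map_append, List.sum_append]

lemma crossF_empty (is : List ℕ) : crossF is ∅ = 0 := by
  induction is with
  | nil => rfl
  | cons i is ih => rw [crossF_cons, ih, Finset.filter_empty]; rfl

lemma crossF_union {K J : Finset ℕ} (h : Disjoint K J) (is : List ℕ) :
    crossF is (K ∪ J) = crossF is K + crossF is J := by
  induction is with
  | nil => rfl
  | cons i is ih =>
    rw [crossF_cons, crossF_cons, crossF_cons, ih, Finset.filter_union,
      Finset.card_union_of_disjoint (Finset.disjoint_filter_filter h)]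
    omega

/-- Crossing number of a list against a list. -/
def crossL (is js : List ℕ) : ℕ :=
  (is.map fun i => (js.filter fun b => i < b).length).sum

lemma Lstat_cons (i : ℕ) (is : List ℕ) :
    Lstat (i :: is) = (is.filter fun j => i < j).length + Lstat is := rfl

lemma Lstat_append : ∀ is js : List ℕ,
    Lstat (is ++ js) = Lstat is + Lstat js + crossL is js := by
  intro is
  induction is with
  | nil => intro js; simp [Lstat, crossL]
  | cons i is ih =>
    intro js
    rw [List.cons_append, Lstat_cons, Lstat_cons, List.filter_append,
      List.length_append, ih js]
    simp only [crossL, List.map_cons, List.sum_cons]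
    omega

lemma crossL_eq_crossF {js : List ℕ} (hnd : js.Nodup) (is : List ℕ) :
    crossL is js = crossF is js.toFinset := by
  unfold crossL crossF
  congr 1
  apply List.map_congr_left
  intro i _
  have e : (js.filter fun b => i < b).toFinset = js.toFinset.filter fun b => i < b := by
    ext a
    simp [List.mem_toFinset, List.mem_filter, Finset.mem_filter]
  rw [← e, List.toFinset_card_of_nodup (hnd.filter _)]

/-! ### Sign lemmas -/

lemma negeps_sq {ε : ℂ} (hε : ε = 1 ∨ ε = -1) : (-ε) ^ 2 = 1 := by
  rcases hε with h | h <;> subst h <;> norm_num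

lemma negeps_pow_parity {ε : ℂ} (hε : ε = 1 ∨ ε = -1) {a b : ℕ} (h : a % 2 = b % 2) :
    (-ε) ^ a = (-ε) ^ b := by
  have key : ∀ c : ℕ, (-ε) ^ c = (-ε) ^ (c % 2) := by
    intro c
    conv_lhs => rw [show c = 2 * (c / 2) + c % 2 by omega]
    rw [pow_add, pow_mul, negeps_sq hε, one_pow, one_mul]
  rw [key a, key b, h]

lemma negeps_pow_sq {ε : ℂ} (hε : ε = 1 ∨ ε = -1) (a : ℕ) :
    (-ε) ^ a * (-ε) ^ a = 1 := by
  rw [← pow_add]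
  have : (-ε) ^ (a + a) = (-ε) ^ 0 := negeps_pow_parity hε (by omega)
  rw [this, pow_zero]

end SOS

namespace SOS

variable {N L : ℕ} {ε : ℂ}

/-! ### Relations in Ω -/

lemma ω_append (x : SOSVtx) (is js : List ℕ) :
    ω N L ε (x, is ++ js) = ω N L ε (x, is) * ω N L ε (pEnd N x is, js) := by
  have h := RingQuot.mkAlgHom_rel ℂ
    (OmegaRel.mul (N := N) (L := L) (ε := ε) ((x, is) : OGen) ((pEnd N x is, js) : OGen))
  rw [map_mul] at h
  have hc : pEnd N ((x, is) : OGen).1 ((x, is) : OGen).2 = ((pEnd N x is, js) : OGen).1 := rfl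
  rw [if_pos hc] at h
  exact h.symm

lemma ω_cons (x : SOSVtx) (i : ℕ) (is : List ℕ) :
    ω N L ε (x, i :: is) = ω N L ε (x, [i]) * ω N L ε (addHat N i x, is) :=
  ω_append x [i] is

lemma ω_swap {x : SOSVtx} {i j : ℕ} (hij : i ≠ j)
    (h1 : pathOK N L x [i, j]) (h2 : pathOK N L x [j, i]) :
    ω N L ε (x, [i, j]) = (-ε) • ω N L ε (x, [j, i]) := by
  have h := RingQuot.mkAlgHom_rel ℂ (OmegaRel.swap (N := N) (L := L) (ε := ε) x i j hij h1 h2)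
  unfold ω
  rw [h, map_smul]

lemma ω_diag {x : SOSVtx} {i : ℕ} (h : pathOK N L x [i, i]) :
    ω N L ε (x, [i, i]) = 0 := by
  have h' := RingQuot.mkAlgHom_rel ℂ (OmegaRel.diag (N := N) (L := L) (ε := ε) x i h)
  unfold ω
  rw [h', map_zero]

lemma smul_transfer (hε : ε = 1 ∨ ε = -1) {A B : ℕ} {u v : Omega N L ε}
    (h : (-ε) ^ A • u = (-ε) ^ B • v) : u = (-ε) ^ (A + B) • v := by
  calc u = ((-ε) ^ A * (-ε) ^ A) • u := by rw [negeps_pow_sq hε, one_smul]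
  _ = (-ε) ^ A • ((-ε) ^ A • u) := mul_smul _ _ _
  _ = (-ε) ^ A • ((-ε) ^ B • v) := by rw [h]
  _ = ((-ε) ^ A * (-ε) ^ B) • v := (mul_smul _ _ _).symm
  _ = (-ε) ^ (A + B) • v := by rw [pow_add]

/-! ### Coherence : independence of the path -/

lemma coherence (hN : 2 ≤ N) (hL : 2 ≤ L) (hε : ε = 1 ∨ ε = -1) :
    ∀ (m : ℕ) (x : SOSVtx) (is js : List ℕ),
      pathOK N L x is → pathOK N L x js → is.Nodup → js.Nodup →
      is.toFinset = js.toFinset → is.length = m →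
      (-ε) ^ Lstat is • ω N L ε (x, is) = (-ε) ^ Lstat js • ω N L ε (x, js) := by
  intro m
  induction m using Nat.strong_induction_on with
  | _ m ih =>
    intro x is js his hjs hisnd hjsnd hfs hlen
    -- helper : same head
    have samehead : ∀ (i : ℕ) (y : SOSVtx) (u v : List ℕ), u.length + 1 = m →
        pathOK N L y (i :: u) → pathOK N L y (i :: v) →
        (i :: u).Nodup → (i :: v).Nodup → u.toFinset = v.toFinset →
        (-ε) ^ Lstat (i :: u) • ω N L ε (y, i :: u)
          = (-ε) ^ Lstat (i :: v) • ω N L ε (y, i :: v) := by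
      intro i y u v hlen' hu hv hund hvnd hfs'
      have hvlen : v.length = u.length := by
        rw [← List.toFinset_card_of_nodup (List.nodup_cons.mp hund).2,
          ← List.toFinset_card_of_nodup (List.nodup_cons.mp hvnd).2, hfs']
      have hIH := ih u.length (by omega) (addHat N i y) u v hu.2.2.2 hv.2.2.2
        (List.nodup_cons.mp hund).2 (List.nodup_cons.mp hvnd).2 hfs' rfl
      have hcnt : (u.filter fun b => i < b).length = (v.filter fun b => i < b).length := by
        have e1 : crossL [i] u = (u.filter fun b => i < b).length := by simp [crossL]
        have e2 : crossL [i] v = (v.filter fun b => i < b).length := by simp [crossL]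
        rw [← e1, ← e2, crossL_eq_crossF (List.nodup_cons.mp hund).2,
          crossL_eq_crossF (List.nodup_cons.mp hvnd).2, hfs']
      by_cases huv : u = v
      · subst huv; rfl
      rw [Lstat_cons, Lstat_cons, hcnt]
      rw [ω_cons y i u, ω_cons y i v]
      rw [pow_add, pow_add, mul_smul, mul_smul]
      congr 1
      rw [← mul_smul_comm, ← mul_smul_comm, hIH]
    -- main case split
    rcases is with _ | ⟨i, is₁⟩
    · have : js = [] := by
        rw [← List.toFinset_eq_empty_iff, ← hfs]
        rfl
      subst this
      rfl
    rcases js with _ | ⟨j, js₁⟩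
    · exfalso
      have : i ∈ (List.nil : List ℕ).toFinset := by
        rw [← hfs]
        simp
      simp at this
    have hi1 : 1 ≤ i := his.2.1
    have hiN : i ≤ N := his.2.2.1
    have hj1 : 1 ≤ j := hjs.2.1
    have hjN : j ≤ N := hjs.2.2.1
    have hinotin : i ∉ is₁ := (List.nodup_cons.mp hisnd).1
    have hjnotin : j ∉ js₁ := (List.nodup_cons.mp hjsnd).1
    by_cases hij : i = j
    · subst hij
      have hfs' : is₁.toFinset = js₁.toFinset := by
        have e1 : is₁.toFinset = (i :: is₁).toFinset.erase i := by
          rw [List.toFinset_cons,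
            Finset.erase_insert (fun hmem => hinotin (List.mem_toFinset.mp hmem))]
        have e2 : js₁.toFinset = (i :: js₁).toFinset.erase i := by
          rw [List.toFinset_cons,
            Finset.erase_insert (fun hmem => hjnotin (List.mem_toFinset.mp hmem))]
        rw [e1, e2, hfs]
      exact samehead i x is₁ js₁ (by simpa using hlen) his hjs hisnd hjsnd hfs'
    -- distinct heads
    · have hx : InV N L x := pathOK_start his
      have hνi : InV N L (addHat N i x) := pathOK_start his.2.2.2
      have hνj : InV N L (addHat N j x) := pathOK_start hjs.2.2.2
      have hw : InV N L (addHat N j (addHat N i x)) :=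
        diamond hN hx hj1 hjN hij hνi hνj
      have hjmem : j ∈ is₁.toFinset := by
        have : j ∈ (i :: is₁).toFinset := by
          rw [hfs, List.toFinset_cons]
          exact Finset.mem_insert_self j _
        rw [List.toFinset_cons] at this
        rcases Finset.mem_insert.mp this with h' | h'
        · exact absurd h'.symm hij
        · exact h'
      set K : Finset ℕ := is₁.toFinset.erase j with hK
      have hKsub : K ⊆ Finset.Icc 1 N := by
        intro a ha
        have ha' : a ∈ is₁ := List.mem_toFinset.mp (Finset.mem_of_mem_erase ha)
        exact Finset.mem_Icc.mpr (pathOK_mem_bounds his.2.2.2 a ha')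
      have hins : insert j K = is₁.toFinset := Finset.insert_erase hjmem
      have hshift : shiftF N (addHat N j (addHat N i x)) K = pEnd N x (i :: is₁) := by
        rw [shiftF_addHat (Finset.notMem_erase j _), hins]
        exact (pEnd_eq_shiftF his.2.2.2 (List.nodup_cons.mp hisnd).2).symm
      have hmuV : InV N L (shiftF N (addHat N j (addHat N i x)) K) := by
        rw [hshift]
        exact pathOK_end his
      obtain ⟨ks, hks, hksnd, hksfs, hksend⟩ :=
        exists_path hN hL K.card K (addHat N j (addHat N i x)) hKsub rfl hw hmuV
      have hiK : i ∉ K := fun hmem =>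
        hinotin (List.mem_toFinset.mp (Finset.mem_of_mem_erase hmem))
      have hiks : i ∉ ks := fun hmem => hiK (hksfs ▸ List.mem_toFinset.mpr hmem)
      have hjks : j ∉ ks := fun hmem =>
        Finset.notMem_erase j _ (hksfs ▸ List.mem_toFinset.mpr hmem)
      -- the two auxiliary paths
      have hp1 : pathOK N L x (i :: j :: ks) := ⟨hx, hi1, hiN, hνi, hj1, hjN, hks⟩
      have hks' : pathOK N L (addHat N i (addHat N j x)) ks := by
        rw [← addHat_comm]
        exact hks
      have hp2 : pathOK N L x (j :: i :: ks) := ⟨hx, hj1, hjN, hνj, hi1, hiN, hks'⟩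
      have hlen1 : is₁.length + 1 = m := by simpa using hlen
      have hkslen : ks.length = K.card := by
        rw [← List.toFinset_card_of_nodup hksnd, hksfs]
      have hKcard : K.card + 1 = is₁.length := by
        rw [hK, Finset.card_erase_of_mem hjmem,
          List.toFinset_card_of_nodup (List.nodup_cons.mp hisnd).2]
        have : 1 ≤ is₁.length := by
          rcases is₁ with _ | ⟨c, cs⟩
          · simp at hjmem
          · simp
        omega
      -- E1 : is vs p1
      have hE1 := samehead i x is₁ (j :: ks) hlen1 his hp1
        hisnd
        (by
          rw [List.nodup_cons]
          refine ⟨?_, ?_⟩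
          · intro hmem
            rcases List.mem_cons.mp hmem with h' | h'
            · exact hij h'
            · exact hiks h'
          · rw [List.nodup_cons]
            exact ⟨hjks, hksnd⟩)
        (by rw [List.toFinset_cons, hksfs, hins])
      -- E2 : js vs p2
      have hjs1fs : js₁.toFinset = insert i K := by
        have e2 : js₁.toFinset = (j :: js₁).toFinset.erase j := by
          rw [List.toFinset_cons,
            Finset.erase_insert (fun hmem => hjnotin (List.mem_toFinset.mp hmem))]
        rw [e2, ← hfs, List.toFinset_cons,
          Finset.erase_insert_of_ne hij, hK]
      have hE2 := samehead j x js₁ (i :: ks)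
        (by
          have : js₁.length = is₁.length := by
            rw [← List.toFinset_card_of_nodup (List.nodup_cons.mp hjsnd).2, hjs1fs,
              Finset.card_insert_of_notMem hiK]
            omega
          omega)
        hjs hp2 hjsnd
        (by
          rw [List.nodup_cons]
          refine ⟨?_, ?_⟩
          · intro hmem
            rcases List.mem_cons.mp hmem with h' | h'
            · exact hij h'.symm
            · exact hjks h'
          · rw [List.nodup_cons]
            exact ⟨hiks, hksnd⟩)
        (by rw [List.toFinset_cons, hksfs, hjs1fs])
      -- E3 : p1 vs p2 via the swap relation
      have hE3 : (-ε) ^ Lstat (i :: j :: ks) • ω N L ε (x, i :: j :: ks)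
          = (-ε) ^ Lstat (j :: i :: ks) • ω N L ε (x, j :: i :: ks) := by
        have hsw : ω N L ε (x, [i, j]) = (-ε) • ω N L ε (x, [j, i]) :=
          ω_swap hij ⟨hx, hi1, hiN, hνi, hj1, hjN, hw⟩
            ⟨hx, hj1, hjN, hνj, hi1, hiN, by rw [← addHat_comm]; exact hw⟩
        have hd1 : ω N L ε (x, i :: j :: ks)
            = ω N L ε (x, [i, j]) * ω N L ε (addHat N j (addHat N i x), ks) :=
          ω_append x [i, j] ks
        have hd2 : ω N L ε (x, j :: i :: ks)
            = ω N L ε (x, [j, i]) * ω N L ε (addHat N i (addHat N j x), ks) :=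
          ω_append x [j, i] ks
        have hL1 : Lstat (i :: j :: ks) = Lstat [i, j] + Lstat ks + crossL [i, j] ks :=
          Lstat_append [i, j] ks
        have hL2 : Lstat (j :: i :: ks) = Lstat [j, i] + Lstat ks + crossL [j, i] ks :=
          Lstat_append [j, i] ks
        have hcrosseq : crossL [i, j] ks = crossL [j, i] ks := by
          simp [crossL]
          omega
        have hLs1 : Lstat [i, j] = if i < j then 1 else 0 := by
          simp [Lstat]
          split_ifs <;> simp_all
        have hLs2 : Lstat [j, i] = if j < i then 1 else 0 := by
          simp [Lstat]
          split_ifs <;> simp_all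
        have hpar : (-ε) ^ (Lstat (i :: j :: ks) + 1) = (-ε) ^ Lstat (j :: i :: ks) := by
          apply negeps_pow_parity hε
          rw [hL1, hL2, hLs1, hLs2, hcrosseq]
          rcases Nat.lt_or_ge i j with h' | h'
          · rw [if_pos h', if_neg (by omega)]
            omega
          · rw [if_neg (by omega), if_pos (by omega)]
            omega
        rw [hd1, hd2, hsw, smul_mul_assoc, smul_smul, ← pow_succ,
          (addHat_comm i j x).symm, hpar]
      rw [hE1, hE3, ← hE2]

/-! ### Paths with repetitions vanish -/

lemma kill (hN : 2 ≤ N) (hL : 2 ≤ L) (hε : ε = 1 ∨ ε = -1) :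
    ∀ (m : ℕ) (x : SOSVtx) (is : List ℕ),
      pathOK N L x is → ¬ is.Nodup → is.length = m → ω N L ε (x, is) = 0 := by
  intro m
  induction m using Nat.strong_induction_on with
  | _ m ih =>
    intro x is his hnd hlen
    rcases is with _ | ⟨i, is₁⟩
    · exact absurd List.nodup_nil hnd
    have hlen' : is₁.length + 1 = m := by simpa using hlen
    by_cases h1 : is₁.Nodup
    · have hiis : i ∈ is₁ := by
        by_contra hni
        exact hnd (List.nodup_cons.mpr ⟨hni, h1⟩)
      have hx : InV N L x := pathOK_start his
      have hi1 : 1 ≤ i := his.2.1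
      have hiN : i ≤ N := his.2.2.1
      have hν : InV N L (addHat N i x) := pathOK_start his.2.2.2
      set J : Finset ℕ := is₁.toFinset with hJ
      have hiJ : i ∈ J := List.mem_toFinset.mpr hiis
      have hJsub : J ⊆ Finset.Icc 1 N := fun a ha =>
        Finset.mem_Icc.mpr (pathOK_mem_bounds his.2.2.2 a (List.mem_toFinset.mp ha))
      have hmu : InV N L (shiftF N (addHat N i x) J) := by
        rw [← pEnd_eq_shiftF his.2.2.2 h1]
        exact pathOK_end his.2.2.2
      have hJlen : J.card = is₁.length := List.toFinset_card_of_nodup h1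
      -- generic reduction : replace the tail by (a :: ks)
      have hredo : ∀ a : ℕ, a ∈ J → InV N L (addHat N a (addHat N i x)) →
          ∃ ks : List ℕ, pathOK N L (addHat N a (addHat N i x)) ks ∧ ks.Nodup ∧
            ks.toFinset = J.erase a ∧
            ω N L ε (addHat N i x, is₁)
              = (-ε) ^ (Lstat is₁ + Lstat (a :: ks)) • ω N L ε (addHat N i x, a :: ks) := by
        intro a haJ hadd
        have hsh : shiftF N (addHat N a (addHat N i x)) (J.erase a)
            = shiftF N (addHat N i x) J := by
          rw [shiftF_addHat (Finset.notMem_erase a J), Finset.insert_erase haJ]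
        obtain ⟨ks, hks, hksnd, hksfs, _⟩ := exists_path hN hL (J.erase a).card
          (J.erase a) (addHat N a (addHat N i x))
          (fun b hb => hJsub (Finset.mem_of_mem_erase hb)) rfl hadd
          (by rw [hsh]; exact hmu)
        have hab := Finset.mem_Icc.mp (hJsub haJ)
        have haks : a ∉ ks := fun hmem =>
          Finset.notMem_erase a J (hksfs ▸ List.mem_toFinset.mpr hmem)
        have hpath : pathOK N L (addHat N i x) (a :: ks) := ⟨hν, hab.1, hab.2, hks⟩
        have hcoh := coherence hN hL hε is₁.length (addHat N i x) is₁ (a :: ks)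
          his.2.2.2 hpath h1 (List.nodup_cons.mpr ⟨haks, hksnd⟩)
          (by rw [List.toFinset_cons, hksfs, Finset.insert_erase haJ])
          rfl
        exact ⟨ks, hks, hksnd, hksfs, smul_transfer hε hcoh⟩
      rcases no_stuck hN hL hx hi1 hiN hν hJsub hiJ hmu with hcase | ⟨a, haJ, hai, haν, hax⟩
      · -- can start the tail with i : diag relation kills
        obtain ⟨ks, hks, hksnd, hksfs, heq⟩ := hredo i hiJ hcase
        rw [ω_cons, heq, mul_smul_comm]
        have hzero : ω N L ε (x, [i]) * ω N L ε (addHat N i x, i :: ks) = 0 := by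
          have hd : ω N L ε (x, i :: i :: ks)
              = ω N L ε (x, [i, i]) * ω N L ε (addHat N i (addHat N i x), ks) :=
            ω_append x [i, i] ks
          have hd2 : ω N L ε (x, i :: i :: ks)
              = ω N L ε (x, [i]) * ω N L ε (addHat N i x, i :: ks) :=
            ω_cons x i (i :: ks)
          rw [← hd2, hd, ω_diag ⟨hx, hi1, hiN, hν, hi1, hiN, hcase⟩, zero_mul]
        rw [hzero, smul_zero]
      · -- swap a to the front, then induction
        obtain ⟨ks, hks, hksnd, hksfs, heq⟩ := hredo a haJ haν
        have hab := Finset.mem_Icc.mp (hJsub haJ)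
        have hia : i ≠ a := fun h => hai h.symm
        rw [ω_cons, heq, mul_smul_comm]
        have hzero : ω N L ε (x, [i]) * ω N L ε (addHat N i x, a :: ks) = 0 := by
          have hd2 : ω N L ε (x, i :: a :: ks)
              = ω N L ε (x, [i]) * ω N L ε (addHat N i x, a :: ks) :=
            ω_cons x i (a :: ks)
          have hd : ω N L ε (x, i :: a :: ks)
              = ω N L ε (x, [i, a]) * ω N L ε (addHat N a (addHat N i x), ks) :=
            ω_append x [i, a] ks
          have hcomm : addHat N i (addHat N a x) = addHat N a (addHat N i x) :=
            addHat_comm a i x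
          have hsw : ω N L ε (x, [i, a]) = (-ε) • ω N L ε (x, [a, i]) :=
            ω_swap hia ⟨hx, hi1, hiN, hν, hab.1, hab.2, haν⟩
              ⟨hx, hab.1, hab.2, hax, hi1, hiN, by rw [hcomm]; exact haν⟩
          have hd3 : ω N L ε (x, a :: i :: ks)
              = ω N L ε (x, [a, i]) * ω N L ε (addHat N i (addHat N a x), ks) :=
            ω_append x [a, i] ks
          have hiks : i ∈ ks := by
            have : i ∈ J.erase a := Finset.mem_erase.mpr ⟨hia, hiJ⟩
            exact List.mem_toFinset.mp (hksfs ▸ this)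
          have hkslen : ks.length + 1 = is₁.length := by
            rw [← List.toFinset_card_of_nodup hksnd, hksfs,
              Finset.card_erase_of_mem haJ, hJlen]
            have : 1 ≤ is₁.length := by
              rcases is₁ with _ | ⟨c, cs⟩
              · simp at hiis
              · simp
            omega
          have htail0 : ω N L ε (addHat N a x, i :: ks) = 0 := by
            apply ih is₁.length (by omega) (addHat N a x) (i :: ks)
              ⟨hax, hi1, hiN, by rw [hcomm]; exact hks⟩
              (fun hnd' => (List.nodup_cons.mp hnd').1 hiks)
              (by simpa using hkslen)
          have hd4 : ω N L ε (x, a :: i :: ks)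
              = ω N L ε (x, [a]) * ω N L ε (addHat N a x, i :: ks) :=
            ω_cons x a (i :: ks)
          rw [← hd2, hd, hsw, smul_mul_assoc, ← hcomm, ← hd3, hd4, htail0,
            mul_zero, smul_zero]
        rw [hzero, smul_zero]
    · -- tail already has a repetition
      rw [ω_cons, ih (m - 1) (by omega) (addHat N i x) is₁ his.2.2.2 h1
        (by omega), mul_zero]

end SOS

namespace SOS

variable {N L : ℕ} {ε : ℂ}

/-! ### The separating representation -/

lemma VF_mem_InV {x : SOSVtx} (hx : x ∈ VF N L) : InV N L x :=
  (Finset.mem_filter.mp hx).2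

lemma mem_VF {x : SOSVtx} (hN : 2 ≤ N) (hx : InV N L x) : x ∈ VF N L := by
  rw [VF, Finset.mem_filter]
  refine ⟨?_, hx⟩
  rw [Finset.mem_image]
  have hbound : ∀ j : Fin N, (x (j.1 + 1)).toNat < L + 1 := by
    intro j
    have h1 : 1 ≤ j.1 + 1 := by omega
    have h2 : j.1 + 1 ≤ N := by have := j.2; omega
    have hnn := hx.nonneg h1 h2
    have hle : x (j.1 + 1) ≤ x 1 := hx.anti 1 (j.1 + 1) le_rfl h1 h2
    have := hx.2.2.2
    omega
  refine ⟨fun j => ⟨(x (j.1 + 1)).toNat, hbound j⟩, Finset.mem_univ _, ?_⟩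
  funext k
  by_cases h : 1 ≤ k ∧ k ≤ N
  · rw [dif_pos h]
    show ((x (k - 1 + 1)).toNat : ℤ) = x k
    rw [show k - 1 + 1 = k by omega]
    exact Int.toNat_of_nonneg (hx.nonneg h.1 h.2)
  · rw [dif_neg h]
    exact (hx.1 k (by omega)).symm

/-- Index type for the representation space. -/
abbrev SInd (N L : ℕ) : Type := {q : SOSVtx × Finset ℕ // InV N L q.1}

/-- The representation space. -/
abbrev MM (N L : ℕ) : Type := SInd N L →₀ ℂ

/-- The operator associated with a raw path generator. -/
def Tmap (N L : ℕ) (ε : ℂ) (p : OGen) : Module.End ℂ (MM N L) :=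
  Finsupp.lift (MM N L) ℂ (SInd N L) fun y =>
    if h : pathOK N L p.1 p.2 ∧ p.2.Nodup ∧ pEnd N p.1 p.2 = y.1.1 ∧
        Disjoint p.2.toFinset y.1.2 then
      ((-ε) ^ (Lstat p.2 + crossF p.2 y.1.2)) •
        Finsupp.single ⟨(p.1, p.2.toFinset ∪ y.1.2), pathOK_start h.1⟩ (1 : ℂ)
    else 0

lemma Tmap_single (p : OGen) (y : SInd N L) (c : ℂ) :
    Tmap N L ε p (Finsupp.single y c)
      = if h : pathOK N L p.1 p.2 ∧ p.2.Nodup ∧ pEnd N p.1 p.2 = y.1.1 ∧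
            Disjoint p.2.toFinset y.1.2 then
          (c * (-ε) ^ (Lstat p.2 + crossF p.2 y.1.2)) •
            Finsupp.single ⟨(p.1, p.2.toFinset ∪ y.1.2), pathOK_start h.1⟩ (1 : ℂ)
        else 0 := by
  unfold Tmap
  rw [Finsupp.lift_apply, Finsupp.sum_single_index (by simp)]
  by_cases h : pathOK N L p.1 p.2 ∧ p.2.Nodup ∧ pEnd N p.1 p.2 = y.1.1 ∧
      Disjoint p.2.toFinset y.1.2
  · rw [dif_pos h, dif_pos h, smul_smul]
  · rw [dif_neg h, dif_neg h, smul_zero]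

end SOS

namespace SOS

variable {N L : ℕ} {ε : ℂ}

lemma rel_lift (hN : 2 ≤ N) (hL : 2 ≤ L) (hε : ε = 1 ∨ ε = -1) :
    ∀ ⦃a b : FreeAlgebra ℂ OGen⦄, OmegaRel N L ε a b →
      FreeAlgebra.lift ℂ (Tmap N L ε) a = FreeAlgebra.lift ℂ (Tmap N L ε) b := by
  intro a b h
  cases h with
  | invalid p hbad =>
    rw [FreeAlgebra.lift_ι_apply, map_zero]
    apply Finsupp.lhom_ext
    intro y c
    rw [Tmap_single, dif_neg (fun hc => hbad hc.1)]
    rfl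
  | unit =>
    rw [map_sum, map_one]
    apply Finsupp.lhom_ext
    intro y c
    rw [LinearMap.sum_apply]
    simp only [FreeAlgebra.lift_ι_apply]
    have hterm : ∀ x ∈ VF N L,
        Tmap N L ε ((x, []) : OGen) (Finsupp.single y c)
          = if x = y.1.1 then Finsupp.single y c else 0 := by
      intro x hx
      rw [Tmap_single]
      by_cases hxy : x = y.1.1
      · rw [if_pos hxy,
          dif_pos (show _ from ⟨VF_mem_InV hx, List.nodup_nil, hxy, by simp⟩)]
        have hLs : Lstat ([] : List ℕ) = 0 := rfl
        rw [hLs, crossF_nil, pow_zero, mul_one]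
        subst hxy
        have hidx : (⟨(y.1.1, List.toFinset [] ∪ y.1.2), VF_mem_InV hx⟩ : SInd N L) = y := by
          apply Subtype.ext
          show (y.1.1, List.toFinset [] ∪ y.1.2) = y.1
          rw [List.toFinset_nil, Finset.empty_union]
        rw [hidx, Finsupp.smul_single, smul_eq_mul, mul_one]
      · rw [if_neg hxy, dif_neg (fun hc => hxy hc.2.2.1)]
    rw [Finset.sum_congr rfl hterm,
      Finset.sum_ite_eq' (VF N L) y.1.1 (fun _ => Finsupp.single y c),
      if_pos (mem_VF hN y.2), Module.End.one_apply]
  | mul p q =>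
    rw [map_mul, FreeAlgebra.lift_ι_apply, FreeAlgebra.lift_ι_apply]
    by_cases hpq : pEnd N p.1 p.2 = q.1
    · rw [if_pos hpq, FreeAlgebra.lift_ι_apply]
      apply Finsupp.lhom_ext
      intro y c
      rw [Module.End.mul_apply, Tmap_single, Tmap_single]
      by_cases hq : pathOK N L q.1 q.2 ∧ q.2.Nodup ∧ pEnd N q.1 q.2 = y.1.1 ∧
          Disjoint q.2.toFinset y.1.2
      · rw [dif_pos hq, map_smul, Tmap_single]
        by_cases hp : pathOK N L p.1 p.2 ∧ p.2.Nodup ∧ pEnd N p.1 p.2 = q.1 ∧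
            Disjoint p.2.toFinset (q.2.toFinset ∪ y.1.2)
        · have hdisj2 := Finset.disjoint_union_right.mp hp.2.2.2
          have hcc : pathOK N L p.1 (p.2 ++ q.2) ∧ (p.2 ++ q.2).Nodup ∧
              pEnd N p.1 (p.2 ++ q.2) = y.1.1 ∧
              Disjoint (p.2 ++ q.2).toFinset y.1.2 := by
            refine ⟨pathOK_append.mpr ⟨hp.1, by rw [hpq]; exact hq.1⟩, ?_, ?_, ?_⟩
            · rw [List.nodup_append']
              exact ⟨hp.2.1, hq.2.1, List.disjoint_toFinset_iff_disjoint.mp hdisj2.1⟩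
            · rw [pEnd_append, hpq]
              exact hq.2.2.1
            · rw [List.toFinset_append]
              exact Finset.disjoint_union_left.mpr ⟨hdisj2.2, hq.2.2.2⟩
          rw [dif_pos hp, dif_pos hcc, smul_smul, one_mul]
          have hexp : (Lstat q.2 + crossF q.2 y.1.2)
              + (Lstat p.2 + crossF p.2 (q.2.toFinset ∪ y.1.2))
              = Lstat (p.2 ++ q.2) + crossF (p.2 ++ q.2) y.1.2 := by
            rw [Lstat_append, crossF_append, crossF_union hq.2.2.2,
              crossL_eq_crossF hq.2.1]
            omega
          have hidx : (⟨(p.1, p.2.toFinset ∪ (q.2.toFinset ∪ y.1.2)),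
                pathOK_start hp.1⟩ : SInd N L)
              = ⟨(p.1, (p.2 ++ q.2).toFinset ∪ y.1.2), pathOK_start hcc.1⟩ := by
            apply Subtype.ext
            show (p.1, p.2.toFinset ∪ (q.2.toFinset ∪ y.1.2))
              = (p.1, (p.2 ++ q.2).toFinset ∪ y.1.2)
            rw [List.toFinset_append, Finset.union_assoc]
          rw [hidx]
          congr 1
          rw [mul_assoc, ← pow_add, hexp]
        · rw [dif_neg hp]
          have hnc : ¬(pathOK N L p.1 (p.2 ++ q.2) ∧ (p.2 ++ q.2).Nodup ∧
              pEnd N p.1 (p.2 ++ q.2) = y.1.1 ∧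
              Disjoint (p.2 ++ q.2).toFinset y.1.2) := by
            intro hcc
            have hnd := List.nodup_append'.mp hcc.2.1
            have hdj' : Disjoint (p.2.toFinset ∪ q.2.toFinset) y.1.2 := by
              rw [← List.toFinset_append]; exact hcc.2.2.2
            have hdj := Finset.disjoint_union_left.mp hdj'
            exact hp ⟨(pathOK_append.mp hcc.1).1, hnd.1, hpq,
              Finset.disjoint_union_right.mpr
                ⟨List.disjoint_toFinset_iff_disjoint.mpr hnd.2.2, hdj.1⟩⟩
          rw [dif_neg hnc, smul_zero]
      · rw [dif_neg hq, map_zero]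
        have hnc : ¬(pathOK N L p.1 (p.2 ++ q.2) ∧ (p.2 ++ q.2).Nodup ∧
            pEnd N p.1 (p.2 ++ q.2) = y.1.1 ∧
            Disjoint (p.2 ++ q.2).toFinset y.1.2) := by
          intro hcc
          have hnd := List.nodup_append.mp hcc.2.1
          have hdj' : Disjoint (p.2.toFinset ∪ q.2.toFinset) y.1.2 := by
            rw [← List.toFinset_append]; exact hcc.2.2.2
          have hdj := Finset.disjoint_union_left.mp hdj'
          refine hq ⟨?_, hnd.2.1, ?_, hdj.2⟩
          · have := (pathOK_append.mp hcc.1).2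
            rwa [hpq] at this
          · have := hcc.2.2.1
            rwa [pEnd_append, hpq] at this
        rw [dif_neg hnc]
    · rw [if_neg hpq, map_zero]
      apply Finsupp.lhom_ext
      intro y c
      rw [Module.End.mul_apply, Tmap_single]
      by_cases hq : pathOK N L q.1 q.2 ∧ q.2.Nodup ∧ pEnd N q.1 q.2 = y.1.1 ∧
          Disjoint q.2.toFinset y.1.2
      · rw [dif_pos hq, map_smul, Tmap_single, dif_neg (fun hp => hpq hp.2.2.1),
          smul_zero]
        rfl
      · rw [dif_neg hq, map_zero]
        rfl
  | swap x i j hij h1 h2 =>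
    rw [FreeAlgebra.lift_ι_apply, map_smul, FreeAlgebra.lift_ι_apply]
    apply Finsupp.lhom_ext
    intro y c
    rw [Tmap_single, LinearMap.smul_apply, Tmap_single]
    have hpe : pEnd N x [i, j] = pEnd N x [j, i] := by
      show addHat N j (addHat N i x) = addHat N i (addHat N j x)
      exact addHat_comm i j x
    have hfs : ([i, j] : List ℕ).toFinset = ([j, i] : List ℕ).toFinset := by
      ext a
      simp only [List.toFinset_cons, List.toFinset_nil, Finset.mem_insert]
      tauto
    have hnd1 : ([i, j] : List ℕ).Nodup := by simp [hij]
    have hji : j ≠ i := fun h => hij h.symm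
    have hnd2 : ([j, i] : List ℕ).Nodup := by simp [hji]
    by_cases hcnd : pEnd N x [i, j] = y.1.1 ∧ Disjoint (([i, j] : List ℕ).toFinset) y.1.2
    · rw [dif_pos ⟨h1, hnd1, hcnd.1, hcnd.2⟩,
        dif_pos ⟨h2, hnd2, by rw [← hpe]; exact hcnd.1, by rw [← hfs]; exact hcnd.2⟩]
      have hidx : (⟨(x, ([i, j] : List ℕ).toFinset ∪ y.1.2),
            pathOK_start (N := N) (L := L) h1⟩ : SInd N L)
          = ⟨(x, ([j, i] : List ℕ).toFinset ∪ y.1.2), pathOK_start h2⟩ := by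
        apply Subtype.ext
        show (x, ([i, j] : List ℕ).toFinset ∪ y.1.2)
          = (x, ([j, i] : List ℕ).toFinset ∪ y.1.2)
        rw [hfs]
      rw [hidx, smul_smul]
      congr 1
      have hcf : crossF [i, j] y.1.2 = crossF [j, i] y.1.2 := by
        rw [crossF_cons, crossF_cons, crossF_cons, crossF_cons]
        omega
      have hLs1 : Lstat [i, j] = if i < j then 1 else 0 := by
        show (List.filter (fun b => decide (i < b)) [j]).length + Lstat [j] = _
        have : Lstat [j] = 0 := rfl
        rw [this]
        by_cases h' : i < j <;> simp [h']
      have hLs2 : Lstat [j, i] = if j < i then 1 else 0 := by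
        show (List.filter (fun b => decide (j < b)) [i]).length + Lstat [i] = _
        have : Lstat [i] = 0 := rfl
        rw [this]
        by_cases h' : j < i <;> simp [h']
      have hpar : (-ε) ^ (Lstat [i, j] + crossF [i, j] y.1.2)
          = (-ε) * (-ε) ^ (Lstat [j, i] + crossF [j, i] y.1.2) := by
        rw [← pow_succ']
        apply negeps_pow_parity hε
        rw [hcf, hLs1, hLs2]
        rcases Nat.lt_or_ge i j with h' | h'
        · rw [if_pos h', if_neg (by omega)]
          omega
        · rw [if_neg (by omega), if_pos (by omega : j < i)]
          omega
      rw [hpar]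
      ring
    · rw [dif_neg (fun hA => hcnd ⟨hA.2.2.1, hA.2.2.2⟩),
        dif_neg (fun hA => hcnd ⟨by rw [hpe]; exact hA.2.2.1, by rw [hfs]; exact hA.2.2.2⟩),
        smul_zero]
  | diag x i h =>
    rw [FreeAlgebra.lift_ι_apply, map_zero]
    apply Finsupp.lhom_ext
    intro y c
    rw [Tmap_single, dif_neg]
    · rfl
    · intro hc
      have := hc.2.1
      simp at this

/-- The representation `Ω → End(M)`. -/
def repHom (N L : ℕ) (ε : ℂ) (hN : 2 ≤ N) (hL : 2 ≤ L) (hε : ε = 1 ∨ ε = -1) :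
    Omega N L ε →ₐ[ℂ] Module.End ℂ (MM N L) :=
  RingQuot.liftAlgHom ℂ ⟨FreeAlgebra.lift ℂ (Tmap N L ε), rel_lift hN hL hε⟩

lemma repHom_ω (hN : 2 ≤ N) (hL : 2 ≤ L) (hε : ε = 1 ∨ ε = -1) (p : OGen) :
    repHom N L ε hN hL hε (ω N L ε p) = Tmap N L ε p := by
  unfold repHom ω
  rw [RingQuot.liftAlgHom_mkAlgHom_apply, FreeAlgebra.lift_ι_apply]

end SOS

open SOS in
/-- For every `m ≥ 0` and `(λ, μ) ∈ BΩ^m`: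
(a) there is a path of length `m` from `λ` to `μ`;
(b) `ω_m(λ,μ) := (−ε)^{𝓛(p)} ω(p)` does not depend on the choice of the path
`p ∈ 𝒢^m_{λμ}`;
(c) any family `{ω_m(λ,μ)}_{(λ,μ) ∈ BΩ^m}` of such elements is a `ℂ`-basis of `Ω^m`.
In particular `Ω^m = 0` for `m > N`. -/
theorem SOS_Omega_basis (N L : ℕ) (hN : 2 ≤ N) (hL : 2 ≤ L)
    (ε : ℂ) (hε : ε = 1 ∨ ε = -1) (m : ℕ) :
    (∀ lam mu : SOSVtx, BOm N L m lam mu →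
      ∃ is : List ℕ, pathOK N L lam is ∧ is.length = m ∧ pEnd N lam is = mu) ∧
    (∀ lam mu : SOSVtx, BOm N L m lam mu →
      ∀ is js : List ℕ,
        pathOK N L lam is → is.length = m → pEnd N lam is = mu →
        pathOK N L lam js → js.length = m → pEnd N lam js = mu →
        (-ε) ^ Lstat is • ω N L ε (lam, is) = (-ε) ^ Lstat js • ω N L ε (lam, js)) ∧
    (∀ f : {lm : SOSVtx × SOSVtx // BOm N L m lm.1 lm.2} → Omega N L ε,
      (∀ (lm : {lm : SOSVtx × SOSVtx // BOm N L m lm.1 lm.2}) (is : List ℕ),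
        pathOK N L lm.1.1 is → is.length = m → pEnd N lm.1.1 is = lm.1.2 →
        f lm = (-ε) ^ Lstat is • ω N L ε (lm.1.1, is)) →
      LinearIndependent ℂ f ∧ Submodule.span ℂ (Set.range f) = OmegaM N L ε m) ∧
    (N < m → OmegaM N L ε m = ⊥) := by
  obtain ⟨hN1, hL1⟩ : 1 ≤ N ∧ 1 ≤ L := by omega
  -- strong form of part (a)
  have partaS : ∀ lam mu : SOSVtx, BOm N L m lam mu →
      ∃ is : List ℕ, pathOK N L lam is ∧ is.Nodup ∧ is.length = m ∧
        pEnd N lam is = mu := by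
    intro lam mu h
    obtain ⟨hlam, hmu, I, hIsub, hIcard, hmueq⟩ := h
    have hshift : mu = shiftF N lam I := hmueq
    obtain ⟨is, h1, h2, h3, h4⟩ := exists_path hN hL I.card I lam hIsub rfl hlam
      (by rw [← hshift]; exact hmu)
    refine ⟨is, h1, h2, ?_, by rw [h4, ← hshift]⟩
    rw [← List.toFinset_card_of_nodup h2, h3, hIcard]
  -- part (b)
  have partb : ∀ lam mu : SOSVtx, BOm N L m lam mu →
      ∀ is js : List ℕ,
        pathOK N L lam is → is.length = m → pEnd N lam is = mu →
        pathOK N L lam js → js.length = m → pEnd N lam js = mu →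
        (-ε) ^ Lstat is • ω N L ε (lam, is) = (-ε) ^ Lstat js • ω N L ε (lam, js) := by
    intro lam mu h is js his hislen hisend hjs hjslen hjsend
    obtain ⟨hlam, hmu, I, hIsub, hIcard, hmueq⟩ := h
    have hshift : mu = shiftF N lam I := hmueq
    have h1 := path_nodup_toFinset hN1 his hIsub (by omega)
      (by rw [hisend, hshift])
    have h2 := path_nodup_toFinset hN1 hjs hIsub (by omega)
      (by rw [hjsend, hshift])
    exact coherence hN hL hε m lam is js his hjs h1.1 h2.1
      (h1.2.trans h2.2.symm) hislen
  refine ⟨fun lam mu h => by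
      obtain ⟨is, ha, _, hc, hd⟩ := partaS lam mu h
      exact ⟨is, ha, hc, hd⟩,
    partb, ?_, ?_⟩
  · -- part (c)
    intro f hf
    choose pa hpa1 hpa2 hpa3 hpa4 using
      fun lm : {lm : SOSVtx × SOSVtx // BOm N L m lm.1 lm.2} =>
        partaS lm.1.1 lm.1.2 lm.2
    constructor
    · -- linear independence
      rw [linearIndependent_iff']
      intro s g hsum lm hlm
      have hmuV : InV N L lm.1.2 := lm.2.2.1
      have h0 : (∑ j ∈ s, g j • (repHom N L ε hN hL hε (f j))
          (Finsupp.single (⟨(lm.1.2, ∅), hmuV⟩ : SInd N L) 1)) = 0 := by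
        have hc := congrArg (fun z => (repHom N L ε hN hL hε z)
          (Finsupp.single (⟨(lm.1.2, ∅), hmuV⟩ : SInd N L) 1)) hsum
        simpa [map_sum, map_smul, LinearMap.sum_apply, LinearMap.smul_apply] using hc
      have hval : ∀ j : {lm : SOSVtx × SOSVtx // BOm N L m lm.1 lm.2},
          (repHom N L ε hN hL hε (f j))
            (Finsupp.single (⟨(lm.1.2, ∅), hmuV⟩ : SInd N L) 1)
            = if pEnd N j.1.1 (pa j) = lm.1.2 then
                Finsupp.single
                  (⟨(j.1.1, (pa j).toFinset ∪ ∅), pathOK_start (hpa1 j)⟩ : SInd N L) 1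
              else 0 := by
        intro j
        rw [hf j (pa j) (hpa1 j) (hpa3 j) (hpa4 j), map_smul, repHom_ω,
          LinearMap.smul_apply, Tmap_single]
        by_cases hc : pEnd N j.1.1 (pa j) = lm.1.2
        · rw [dif_pos (show _ from ⟨hpa1 j, hpa2 j, hc, Finset.disjoint_empty_right _⟩),
            if_pos hc, smul_smul]
          have hsc : (-ε) ^ Lstat (pa j)
              * (1 * (-ε) ^ (Lstat (pa j) + crossF (pa j) (∅ : Finset ℕ))) = 1 := by
            rw [one_mul, crossF_empty, add_zero]
            exact negeps_pow_sq hε _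
          rw [hsc, one_smul]
        · rw [dif_neg (fun hA => hc hA.2.2.1), if_neg hc, smul_zero]
      rw [Finset.sum_congr rfl (fun j _ => by rw [hval j])] at h0
      have h2 := congrArg (fun v : MM N L =>
        v (⟨(lm.1.1, (pa lm).toFinset ∪ ∅), pathOK_start (hpa1 lm)⟩ : SInd N L)) h0
      simp only [Finset.sum_apply', Finsupp.smul_apply, Finsupp.coe_zero,
        Pi.zero_apply, smul_eq_mul] at h2
      have hside : ∀ j ∈ s, j ≠ lm →
          g j * ((if pEnd N j.1.1 (pa j) = lm.1.2 then
              Finsupp.single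
                (⟨(j.1.1, (pa j).toFinset ∪ ∅), pathOK_start (hpa1 j)⟩ : SInd N L) 1
            else 0)
            (⟨(lm.1.1, (pa lm).toFinset ∪ ∅), pathOK_start (hpa1 lm)⟩ : SInd N L)) = 0 := by
        intro j hj hne
        by_cases hcnd : pEnd N j.1.1 (pa j) = lm.1.2
        · rw [if_pos hcnd, Finsupp.single_apply, if_neg, mul_zero]
          intro hidx
          apply hne
          have hfst : j.1.1 = lm.1.1 := by
            have := congrArg (fun z : SInd N L => z.1.1) hidx
            exact this
          have hsnd : j.1.2 = lm.1.2 := by rw [← hpa4 j, hcnd]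
          exact Subtype.ext (Prod.ext hfst hsnd)
        · rw [if_neg hcnd]
          simp
      rw [Finset.sum_eq_single_of_mem lm hlm hside] at h2
      rw [if_pos (hpa4 lm), Finsupp.single_eq_same] at h2
      simpa using h2
    · -- the span is Ω^m
      apply le_antisymm
      · rw [Submodule.span_le]
        rintro z ⟨j, rfl⟩
        rw [hf j (pa j) (hpa1 j) (hpa3 j) (hpa4 j)]
        exact Submodule.smul_mem _ _ (Submodule.subset_span
          ⟨(j.1.1, pa j), hpa1 j, hpa3 j, rfl⟩)
      · rw [OmegaM, Submodule.span_le]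
        rintro z ⟨p, hp1, hp2, rfl⟩
        by_cases hnd : p.2.Nodup
        · have hBOm : BOm N L m p.1 (pEnd N p.1 p.2) := by
            refine ⟨pathOK_start hp1, pathOK_end hp1, p.2.toFinset,
              fun a ha => Finset.mem_Icc.mpr
                (pathOK_mem_bounds hp1 a (List.mem_toFinset.mp ha)), ?_, ?_⟩
            · rw [List.toFinset_card_of_nodup hnd, hp2]
            · exact pEnd_eq_shiftF hp1 hnd
          have hflm := hf ⟨(p.1, pEnd N p.1 p.2), hBOm⟩ p.2 hp1 hp2 rfl
          have hωp : ω N L ε p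
              = (-ε) ^ Lstat p.2 • f ⟨(p.1, pEnd N p.1 p.2), hBOm⟩ := by
            rw [hflm, smul_smul, negeps_pow_sq hε, one_smul]
          rw [hωp]
          exact Submodule.smul_mem _ _ (Submodule.subset_span (Set.mem_range_self _))
        · have h0 : ω N L ε p = 0 := kill hN hL hε m p.1 p.2 hp1 hnd hp2
          rw [h0]
          exact Submodule.zero_mem _
  · -- part (d)
    intro hm
    rw [OmegaM]
    rw [Submodule.span_eq_bot]
    rintro z ⟨p, hp1, hp2, rfl⟩
    have hnd : ¬ p.2.Nodup := by
      intro hnd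
      have h1 : p.2.toFinset ⊆ Finset.Icc 1 N := fun a ha =>
        Finset.mem_Icc.mpr (pathOK_mem_bounds hp1 a (List.mem_toFinset.mp ha))
      have h2 := Finset.card_le_card h1
      rw [List.toFinset_card_of_nodup hnd, hp2, Nat.card_Icc] at h2
      omega
    exact kill hN hL hε m p.1 p.2 hp1 hnd hp2
end
end
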